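/- arXiv:1204.1283 — 10 statements merged into one kernel-verified Lean document; each statement's English description precedes it below -/
import Mathlib

section
/- (Lemma 1, Fourier expansion) For every edge set E ⊆ (V choose 2), [Γ^A]_E = f^{−|E|} · Σ_{P a flow on E} Σ_{Q ∈ A^E} ⟨P,Q⟩_E. -/
/-!
Expand the indicator of `A` in characters: `f · 1_A(x) = ∑_ψ ∑_{a ∈ A} ψ(x) ψ(a)`, which uses
`A = -A`. Multiplying these expansions over the edges, evaluated at `δX`, and summing over
`X : V → F`, each tuple `P` of characters contributes `∑_X ⟨P, δX⟩`; since `X ↦ ⟨P, δX⟩` is a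
character of `F^V`, this is `f^v` when `P` is a flow and `0` otherwise.
-/

open scoped Classical

noncomputable section

/-- Number of connected components of the graph on `V` with edge set `E`. -/
def cComp (V : Type) [Fintype V] (E : Finset (Sym2 V)) : ℕ :=
  Nat.card (SimpleGraph.fromEdgeSet (E : Set (Sym2 V))).ConnectedComponent

/-- `E` is isthmus-free: it contains no edge whose removal increases the number
of connected components. -/
def IsthmusFree (V : Type) [Fintype V] (E : Finset (Sym2 V)) : Prop :=
  ∀ t ∈ E, ¬ cComp V (E.erase t) > cComp V E

/-- Möbius function of the poset `P_V` of isthmus-free edge sets on `V`,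
ordered by inclusion: `μ(K,K) = 1` and `∑_{L ∈ P_V, K ⊆ L ⊆ H} μ(K,L) = 0` for `K ⊊ H`. -/
def muPV (V : Type) [Fintype V] (K H : Finset (Sym2 V)) : ℤ :=
  if K = H then 1
  else - ∑ L ∈ ((H.powerset.filter (fun L => K ⊆ L ∧ L ≠ H ∧ IsthmusFree V L)).attach),
      muPV V K L.1
termination_by H.card
decreasing_by
  have hL := L.2
  simp only [Finset.mem_filter, Finset.mem_powerset] at hL
  exact Finset.card_lt_card (lt_of_le_of_ne hL.1 hL.2.2.1)

/-- `[Γ^A]_E`: the probability that a uniformly random coloring `X : V → F` has all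
differences along edges of `E` inside `A`. -/
def Gamma (V : Type) [Fintype V] (F : Type) [Fintype F] [AddCommGroup F]
    (A : Finset F) (E : Finset (Sym2 V)) : ℝ :=
  (Nat.card {X : V → F //
      ∀ e ∈ E, ∀ u w : V, e = s(u, w) → X u - X w ∈ A} : ℝ) /
    (Fintype.card F : ℝ) ^ (Fintype.card V)

end

open Finset Fintype

lemma AddChar.sum_prod_apply_eq_ite {ι G F R : Type*} [Fintype ι] [AddCommGroup G] [Fintype G]
    [AddCommGroup F] [CommSemiring R] [IsDomain R] (P : ι → AddChar F R) (δ : ι → G →+ F) :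
    ∑ x : G, ∏ t, P t (δ t x) = if ∀ x, ∏ t, P t (δ t x) = 1 then (card G : R) else 0 := by
  set Ψ : AddChar G R := ∏ t, (P t).compAddMonoidHom (δ t)
  have hΨ (x : G) : Ψ x = ∏ t, P t (δ t x) := by simp [Ψ, AddChar.prod_apply]
  simp_rw [← hΨ, AddChar.sum_eq_ite, AddChar.eq_zero_iff]

lemma AddChar.sum_sum_apply_mul_apply_eq_ite {F : Type*} [AddCommGroup F] [Fintype F]
    (A : Finset F) (x : F) :
    ∑ ψ : AddChar F ℂ, ∑ a ∈ A, ψ x * ψ a = if -x ∈ A then (card F : ℂ) else 0 := by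
  simp_rw [← AddChar.map_add_eq_mul]
  rw [sum_comm]
  simp_rw [AddChar.sum_apply_eq_ite, add_eq_zero_iff_eq_neg']
  exact Finset.sum_ite_eq' A (-x) _

lemma sum_prod_indicator_eq_card_mul_sum_flows {ι G F : Type*} [Fintype ι] [AddCommGroup G]
    [Fintype G] [AddCommGroup F] [Fintype F] (A : Finset F) (hA : ∀ a ∈ A, -a ∈ A)
    (δ : ι → G →+ F) :
    ∑ x : G, ∏ t, (if δ t x ∈ A then (card F : ℂ) else 0) =
      card G * ∑ P ∈ univ.filter (fun P : ι → AddChar F ℂ => ∀ x, ∏ t, P t (δ t x) = 1),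
        ∑ Q ∈ univ.filter (fun Q : ι → F => ∀ t, Q t ∈ A), ∏ t, P t (Q t) := by
  have hpi : piFinset (fun _ : ι => A) = univ.filter (fun Q : ι → F => ∀ t, Q t ∈ A) := by
    ext Q; simp
  have hind (y : F) :
      (if y ∈ A then (card F : ℂ) else 0) = ∑ ψ : AddChar F ℂ, ∑ a ∈ A, ψ y * ψ a := by
    rw [AddChar.sum_sum_apply_mul_apply_eq_ite]
    congr 1
    exact propext ⟨fun h => hA y h, fun h => neg_neg y ▸ hA _ h⟩
  calc ∑ x : G, ∏ t, (if δ t x ∈ A then (card F : ℂ) else 0)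
      = ∑ x : G, ∑ P : ι → AddChar F ℂ, ∑ Q ∈ piFinset (fun _ => A),
          (∏ t, P t (δ t x)) * ∏ t, P t (Q t) := by
        simp_rw [hind, prod_univ_sum, piFinset_univ, prod_mul_distrib]
    _ = ∑ P : ι → AddChar F ℂ, (∑ x : G, ∏ t, P t (δ t x)) *
          ∑ Q ∈ piFinset (fun _ => A), ∏ t, P t (Q t) := by
        rw [sum_comm]
        simp_rw [mul_sum, sum_mul]
        exact sum_congr rfl fun _ _ => sum_comm
    _ = _ := by
        simp_rw [AddChar.sum_prod_apply_eq_ite, ite_mul, zero_mul]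
        rw [← sum_filter, mul_sum, hpi]

lemma forall_sym2_eq_sub_mem_iff {V F : Type*} [AddCommGroup F] {A : Finset F}
    (hA : ∀ a ∈ A, -a ∈ A) (X : V → F) (a b : V) :
    (∀ u w : V, s(a, b) = s(u, w) → X u - X w ∈ A) ↔ X a - X b ∈ A := by
  refine ⟨fun h => h a b rfl, fun h u w huw => ?_⟩
  rcases Sym2.eq_iff.mp huw with ⟨rfl, rfl⟩ | ⟨rfl, rfl⟩
  · exact h
  · simpa using hA _ h

lemma Gamma_mul_card_pow_eq_card_filter (V : Type) [Fintype V] (F : Type) [Fintype F]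
    [AddCommGroup F] (A : Finset F) (hA : ∀ a ∈ A, -a ∈ A) (E : Finset (Sym2 V)) (o : Sym2 V → V × V)
    (ho : ∀ e : Sym2 V, s((o e).1, (o e).2) = e) :
    Gamma V F A E * card F ^ card V = #{X : V → F | ∀ t : E, X (o t).1 - X (o t).2 ∈ A} := by
  have hcard : (card F : ℝ) ^ card V ≠ 0 := pow_ne_zero _ (Nat.cast_ne_zero.mpr card_ne_zero)
  rw [Gamma, div_mul_cancel₀ _ hcard, Nat.card_eq_fintype_card, Fintype.card_subtype]
  congr 2
  ext X
  simp only [mem_filter, mem_univ, true_and]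
  exact ⟨fun h t => h t t.2 _ _ (ho t).symm, fun h e he u w hew =>
    (forall_sym2_eq_sub_mem_iff hA X _ _).mpr (h ⟨e, he⟩) u w ((ho e).trans hew)⟩

theorem gamma_eq_fourier_sum_over_flows_general
    (V : Type) [Fintype V] (F : Type) [Fintype F] [AddCommGroup F]
    (A : Finset F) (hA : ∀ a ∈ A, -a ∈ A)
    (E : Finset (Sym2 V))
    (o : Sym2 V → V × V) (ho : ∀ e : Sym2 V, Sym2.mk (o e).1 (o e).2 = e) :
    (Gamma V F A E : ℂ) =
      (∑ P ∈ Finset.univ.filter (fun P : E → AddChar F ℂ =>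
          ∀ X : V → F, ∏ t : E, P t (X (o t.1).1 - X (o t.1).2) = 1),
        ∑ Q ∈ Finset.univ.filter (fun Q : E → F => ∀ t : E, Q t ∈ A),
          ∏ t : E, P t (Q t)) / (Fintype.card F : ℂ) ^ E.card := by
  have hf : (card F : ℂ) ≠ 0 := Nat.cast_ne_zero.mpr card_ne_zero
  have hcount : (Gamma V F A E : ℂ) * card F ^ card V =
      #{X : V → F | ∀ t : E, X (o t).1 - X (o t).2 ∈ A} := by
    exact_mod_cast Gamma_mul_card_pow_eq_card_filter V F A hA E o ho
  have hfourier := sum_prod_indicator_eq_card_mul_sum_flows A hA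
    (fun t : E => Pi.evalAddMonoidHom (fun _ => F) (o t).1 - Pi.evalAddMonoidHom _ (o t).2)
  simp only [AddMonoidHom.sub_apply, Pi.evalAddMonoidHom_apply, Fintype.prod_ite_zero,
    prod_const, card_univ, Fintype.card_coe, ← sum_filter, sum_const, nsmul_eq_mul,
    Fintype.card_fun, Nat.cast_pow] at hfourier
  rw [eq_div_iff (pow_ne_zero _ hf)]
  apply mul_left_cancel₀ (pow_ne_zero (card V) hf)
  rw [← mul_assoc, mul_comm _ (Gamma V F A E : ℂ), hcount, hfourier]
  -- the two sides differ only in their `Decidable` instances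
  congr!

/-- Lemma 1, Fourier expansion:
`[Γ^A]_E = f^{-|E|} · Σ_{P a flow on E} Σ_{Q ∈ A^E} ⟨P,Q⟩_E`,
where `P : E → F̂` is a flow iff `⟨P, δ_E X⟩_E = 1` for every `X : V → F`. -/
theorem gamma_eq_fourier_sum_over_flows
    (V : Type) [Fintype V] (F : Type) [Fintype F] [AddCommGroup F]
    (A : Finset F) (hA : ∀ a ∈ A, -a ∈ A)
    (E : Finset (Sym2 V)) (hE : ∀ e ∈ E, ¬ e.IsDiag)
    (o : Sym2 V → V × V) (ho : ∀ e : Sym2 V, Sym2.mk (o e).1 (o e).2 = e) :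
    (Gamma V F A E : ℂ) =
      (∑ P ∈ Finset.univ.filter (fun P : E → AddChar F ℂ =>
          ∀ X : V → F, ∏ t : E, P t (X (o t.1).1 - X (o t.1).2) = 1),
        ∑ Q ∈ Finset.univ.filter (fun Q : E → F => ∀ t : E, Q t ∈ A),
          ∏ t : E, P t (Q t)) / (Fintype.card F : ℂ) ^ E.card :=
  gamma_eq_fourier_sum_over_flows_general V F A hA E o ho
end

section
/- (Lemma 2) For every edge set E ⊆ (V choose 2), [Γ^A]_E = Σ over isthmus-free subsets H ⊆ E of α^{|E|−|H|} · [Γ^A_+]_H. -/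
open scoped Classical

/-- `[Γ^A_+]_E = f^{-|E|} Σ_P Σ_{Q ∈ A^E} ⟨P,Q⟩_E`, the sum running over flows
`P ∈ F̂^E` (i.e. `⟨P, δ_E X⟩_E = 1` for all `X : V → F`, for the orientation `o`)
that are nowhere trivial. -/
noncomputable def GammaPlus (V : Type) [Fintype V] (F : Type) [Fintype F] [AddCommGroup F]
    (o : Sym2 V → V × V) (A : Finset F) (E : Finset (Sym2 V)) : ℂ :=
  (∑ P ∈ Finset.univ.filter (fun P : E → AddChar F ℂ =>
      (∀ X : V → F, ∏ t : E, P t (X (o t.1).1 - X (o t.1).2) = 1) ∧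
      ∀ t : E, ∃ a : F, P t a ≠ 1),
    ∑ Q ∈ Finset.univ.filter (fun Q : E → F => ∀ t : E, Q t ∈ A),
      ∏ t : E, P t (Q t)) / (Fintype.card F : ℂ) ^ E.card

/-!
Expand the indicator of the symmetric set `A` in characters of `F`:
`1_A(x) = α + f⁻¹ Σ_{ψ ≠ 1} (Σ_{a ∈ A} ψ a) ψ(x)`.
Multiplying out `∏_{e ∈ E} 1_A(δX(e))` over the edges picks a set `H ⊆ E` of edges that carry a
nontrivial character, the others contributing `α` each. Averaging over `X` kills every assignment
of characters that is not a flow, so the `H`-term is `α^{|E|-|H|} [Γ^A_+]_H`. Finally an isthmus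
`t = uw` of `H` carries only trivial flows: test the flow condition on the function that is
constant `c` on the component of `u` in `H ∖ {t}` and `0` elsewhere.
-/

open Finset SimpleGraph

lemma reachable_fromEdgeSet_diff_eq {W : Type} {S : Set (Sym2 W)} {u w : W}
    (hr : (fromEdgeSet (S \ {s(u, w)})).Reachable u w) :
    (fromEdgeSet (S \ {s(u, w)})).Reachable = (fromEdgeSet S).Reachable := by
  refine le_antisymm (Reachable.mono' (fromEdgeSet_mono Set.sdiff_subset)) ?_
  have hwu := hr.symm
  rw [reachable_fromEdgeSet_eq_reflTransGen_toRel] at hr hwu ⊢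
  rw [reachable_fromEdgeSet_eq_reflTransGen_toRel]
  refine Relation.reflTransGen_closed fun a b hab => ?_
  by_cases hab' : s(a, b) = s(u, w)
  · rcases Sym2.eq_iff.mp hab' with ⟨rfl, rfl⟩ | ⟨rfl, rfl⟩
    · exact hr
    · exact hwu
  · exact Relation.ReflTransGen.single ⟨hab, hab'⟩

lemma cComp_erase_eq_of_reachable {V : Type} [Fintype V] {H : Finset (Sym2 V)} {t : Sym2 V}
    {u w : V} (ht : s(u, w) = t)
    (hr : (fromEdgeSet ((H.erase t : Finset (Sym2 V)) : Set (Sym2 V))).Reachable u w) :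
    cComp V (H.erase t) = cComp V H := by
  subst ht
  rw [coe_erase] at hr
  rw [cComp, cComp, coe_erase]
  exact Nat.card_congr (Quot.congrRight fun a b => by rw [reachable_fromEdgeSet_diff_eq hr])

section Characters

variable {F : Type} [Fintype F] [AddCommGroup F]

lemma sum_addChar_sum_mul_apply (A : Finset F) (x : F) :
    ∑ ψ : AddChar F ℂ, (∑ a ∈ A, ψ a) * ψ x = if -x ∈ A then (Fintype.card F : ℂ) else 0 := by
  simp_rw [sum_mul, ← AddChar.map_add_eq_mul]
  rw [sum_comm]
  simp_rw [AddChar.sum_apply_eq_ite, add_eq_zero_iff_eq_neg]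
  exact sum_ite_eq' A (-x) _

noncomputable def nontrivialCharSum (A : Finset F) (x : F) : ℂ :=
  ∑ ψ ∈ univ.erase (1 : AddChar F ℂ), (∑ a ∈ A, ψ a) * ψ x

lemma boole_mem_eq_nontrivialCharSum_div_add {A : Finset F} (hA : ∀ a ∈ A, -a ∈ A) (x : F) :
    (if x ∈ A then 1 else 0 : ℂ) =
      nontrivialCharSum A x / Fintype.card F + A.card / Fintype.card F := by
  have hf : (Fintype.card F : ℂ) ≠ 0 := Nat.cast_ne_zero.mpr Fintype.card_ne_zero
  have hneg : -x ∈ A ↔ x ∈ A := ⟨fun h => neg_neg x ▸ hA _ h, hA x⟩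
  have htriv : (A.card : ℂ) = (∑ a ∈ A, (1 : AddChar F ℂ) a) * (1 : AddChar F ℂ) x := by simp
  rw [← add_div, eq_div_iff hf, nontrivialCharSum, add_comm, htriv,
    add_sum_erase univ (fun ψ : AddChar F ℂ => (∑ a ∈ A, ψ a) * ψ x) (mem_univ 1),
    sum_addChar_sum_mul_apply, boole_mul]
  simp only [hneg]

end Characters

section Flows

variable {V F : Type} [AddCommGroup F]

def IsFlow (o : Sym2 V → V × V) (H : Finset (Sym2 V)) (P : H → AddChar F ℂ) : Prop :=
  ∀ X : V → F, ∏ t : H, P t (X (o t.1).1 - X (o t.1).2) = 1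

lemma IsFlow.apply_eq_one_of_not_reachable {o : Sym2 V → V × V}
    (ho : ∀ e : Sym2 V, Sym2.mk.uncurry (o e) = e) {H : Finset (Sym2 V)} {P : H → AddChar F ℂ}
    (hP : IsFlow o H P) (t : H)
    (hnr : ¬ (fromEdgeSet ((H.erase t : Finset (Sym2 V)) : Set (Sym2 V))).Reachable
      (o t).1 (o t).2) :
    P t = 1 := by
  set G := fromEdgeSet ((H.erase t : Finset (Sym2 V)) : Set (Sym2 V))
  ext c
  let X : V → F := fun x => if G.Reachable (o t).1 x then c else 0
  have hcut : ∀ s : H, s ≠ t → X (o s).1 = X (o s).2 := by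
    intro s hst
    by_cases hdiag : (o s).1 = (o s).2
    · rw [hdiag]
    have hadj : G.Adj (o s).1 (o s).2 := by
      refine (fromEdgeSet_adj _).mpr ⟨?_, hdiag⟩
      rw [show s((o s).1, (o s).2) = s.1 from ho s]
      exact mem_erase.mpr ⟨fun h => hst (Subtype.ext h), s.2⟩
    have hiff : G.Reachable (o t).1 (o s).1 ↔ G.Reachable (o t).1 (o s).2 :=
      ⟨fun h => h.trans hadj.reachable, fun h => h.trans hadj.symm.reachable⟩
    simp only [X, hiff]
  have hX := hP X
  rw [Fintype.prod_eq_single t fun s hst => by rw [hcut s hst, sub_self, AddChar.map_zero_eq_one]]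
    at hX
  simpa [X, hnr] using hX

lemma forall_eq_mk_sub_mem_iff {A : Finset F} (hA : ∀ a ∈ A, -a ∈ A) {o : Sym2 V → V × V}
    (ho : ∀ e : Sym2 V, Sym2.mk.uncurry (o e) = e) (X : V → F) (e : Sym2 V) :
    (∀ u w : V, e = s(u, w) → X u - X w ∈ A) ↔ X (o e).1 - X (o e).2 ∈ A := by
  refine ⟨fun h => h _ _ (ho e).symm, fun h u w huw => ?_⟩
  rcases Sym2.eq_iff.mp (huw.symm.trans (ho e).symm) with ⟨rfl, rfl⟩ | ⟨rfl, rfl⟩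
  · exact h
  · simpa using hA _ h

variable [Fintype V] [Fintype F]

lemma sum_prod_apply_sub_eq_ite (o : Sym2 V → V × V) (H : Finset (Sym2 V))
    (P : H → AddChar F ℂ) :
    ∑ X : V → F, ∏ t : H, P t (X (o t.1).1 - X (o t.1).2) =
      if IsFlow o H P then (Fintype.card F : ℂ) ^ Fintype.card V else 0 := by
  let Ψ : AddChar (V → F) ℂ := ∏ t : H, (P t).compAddMonoidHom
    (Pi.evalAddMonoidHom (fun _ => F) (o t.1).1 - Pi.evalAddMonoidHom (fun _ => F) (o t.1).2)
  have hΨ : ∀ X, Ψ X = ∏ t : H, P t (X (o t.1).1 - X (o t.1).2) := fun X => by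
    simp [Ψ, AddChar.prod_apply]
  have hflow : IsFlow o H P ↔ Ψ = 0 := by
    simp [IsFlow, DFunLike.ext_iff, hΨ]
  simp_rw [← hΨ, AddChar.sum_eq_ite, hflow, Fintype.card_fun]
  push_cast
  rfl

lemma sum_prod_sum_erase_one_mul_apply_sub (o : Sym2 V → V × V) (H : Finset (Sym2 V))
    (c : AddChar F ℂ → ℂ) :
    ∑ X : V → F, ∏ t : H, ∑ ψ ∈ univ.erase 1, c ψ * ψ (X (o t.1).1 - X (o t.1).2) =
      (Fintype.card F : ℂ) ^ Fintype.card V *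
        ∑ P ∈ univ.filter (fun P : H → AddChar F ℂ => IsFlow o H P ∧ ∀ t, P t ≠ 1),
          ∏ t, c (P t) := by
  simp_rw [prod_univ_sum, prod_mul_distrib]
  rw [sum_comm]
  simp_rw [← mul_sum, sum_prod_apply_sub_eq_ite, mul_ite, mul_zero, ← sum_filter, mul_sum]
  refine sum_congr ?_ fun P _ => mul_comm _ _
  ext P
  simp [Fintype.mem_piFinset, and_comm]

lemma gammaPlus_eq_sum_prod_nontrivialCharSum (o : Sym2 V → V × V) (A : Finset F)
    (H : Finset (Sym2 V)) :
    GammaPlus V F o A H =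
      (∑ X : V → F, ∏ e ∈ H, nontrivialCharSum A (X (o e).1 - X (o e).2)) /
        (Fintype.card F : ℂ) ^ H.card / (Fintype.card F : ℂ) ^ Fintype.card V := by
  have hf : (Fintype.card F : ℂ) ≠ 0 := Nat.cast_ne_zero.mpr Fintype.card_ne_zero
  have hQ : ∀ P : H → AddChar F ℂ,
      ∑ Q ∈ univ.filter (fun Q : H → F => ∀ t, Q t ∈ A), ∏ t, P t (Q t) =
        ∏ t, ∑ a ∈ A, P t a := by
    intro P
    rw [prod_univ_sum]
    exact sum_congr (by ext; simp [Fintype.mem_piFinset]) fun _ _ => rfl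
  simp_rw [nontrivialCharSum, ← prod_coe_sort H, sum_prod_sum_erase_one_mul_apply_sub, GammaPlus,
    hQ, AddChar.ne_one_iff]
  field_simp
  exact sum_congr (filter_congr fun _ _ => Iff.rfl) fun _ _ => rfl

lemma gammaPlus_eq_zero_of_not_isthmusFree {o : Sym2 V → V × V}
    (ho : ∀ e : Sym2 V, Sym2.mk.uncurry (o e) = e) (A : Finset F) {H : Finset (Sym2 V)}
    (hH : ¬ IsthmusFree V H) : GammaPlus V F o A H = 0 := by
  obtain ⟨t, ht, hbridge⟩ : ∃ t ∈ H, cComp V H < cComp V (H.erase t) := by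
    simpa [IsthmusFree] using hH
  have hnr : ¬ (fromEdgeSet ((H.erase t : Finset (Sym2 V)) : Set (Sym2 V))).Reachable
      (o t).1 (o t).2 :=
    fun hr => hbridge.ne' (cComp_erase_eq_of_reachable (ho t) hr)
  rw [GammaPlus, filter_false_of_mem, sum_empty, zero_div]
  rintro P - ⟨hP, hnontriv⟩
  obtain ⟨a, ha⟩ := hnontriv ⟨t, ht⟩
  exact ha (by rw [IsFlow.apply_eq_one_of_not_reachable ho hP ⟨t, ht⟩ hnr, AddChar.one_apply])

lemma gamma_eq_sum_prod_boole {A : Finset F} (hA : ∀ a ∈ A, -a ∈ A) {o : Sym2 V → V × V}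
    (ho : ∀ e : Sym2 V, Sym2.mk.uncurry (o e) = e) (E : Finset (Sym2 V)) :
    (Gamma V F A E : ℂ) =
      (∑ X : V → F, ∏ e ∈ E, if X (o e).1 - X (o e).2 ∈ A then 1 else 0) /
        (Fintype.card F : ℂ) ^ Fintype.card V := by
  rw [Gamma, Nat.card_eq_fintype_card, Fintype.card_subtype]
  push_cast
  rw [natCast_card_filter]
  simp only [forall_eq_mk_sub_mem_iff hA ho, prod_boole]
  congr! 3

end Flows

theorem gamma_eq_sum_isthmusFree_gammaPlus_general
    (V : Type) [Fintype V] (F : Type) [Fintype F] [AddCommGroup F]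
    (A : Finset F) (hA : ∀ a ∈ A, -a ∈ A)
    (E : Finset (Sym2 V))
    (o : Sym2 V → V × V) (ho : ∀ e : Sym2 V, Sym2.mk.uncurry (o e) = e) :
    (Gamma V F A E : ℂ) =
      ∑ H ∈ E.powerset.filter (IsthmusFree V),
        ((A.card : ℂ) / (Fintype.card F : ℂ)) ^ (E.card - H.card) *
          GammaPlus V F o A H := by
  calc (Gamma V F A E : ℂ)
      = (∑ X : V → F, ∏ e ∈ E, (nontrivialCharSum A (X (o e).1 - X (o e).2) / Fintype.card F +
          A.card / Fintype.card F)) / (Fintype.card F : ℂ) ^ Fintype.card V := by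
        simp_rw [gamma_eq_sum_prod_boole hA ho, boole_mem_eq_nontrivialCharSum_div_add hA]
    _ = ∑ H ∈ E.powerset, ((A.card : ℂ) / Fintype.card F) ^ (E.card - H.card) *
          ((∑ X : V → F, ∏ e ∈ H, nontrivialCharSum A (X (o e).1 - X (o e).2)) /
            (Fintype.card F : ℂ) ^ H.card / (Fintype.card F : ℂ) ^ Fintype.card V) := by
        simp_rw [prod_add, prod_div_distrib, prod_const]
        rw [sum_comm, sum_div]
        refine sum_congr rfl fun H hH => ?_
        rw [card_sdiff_of_subset (mem_powerset.mp hH), ← sum_mul, sum_div]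
        ring
    _ = ∑ H ∈ E.powerset, ((A.card : ℂ) / Fintype.card F) ^ (E.card - H.card) *
          GammaPlus V F o A H := by
        simp_rw [gammaPlus_eq_sum_prod_nontrivialCharSum]
    _ = _ := (sum_filter_of_ne fun H _ hne => by
        by_contra hH
        exact hne (by rw [gammaPlus_eq_zero_of_not_isthmusFree ho A hH, mul_zero])).symm

/-- Lemma 2: `[Γ^A]_E = Σ_{H ⊆ E isthmus-free} α^{|E|-|H|} [Γ^A_+]_H`. -/
theorem gamma_eq_sum_isthmusFree_gammaPlus
    (V : Type) [Fintype V] (F : Type) [Fintype F] [AddCommGroup F]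
    (A : Finset F) (hA : ∀ a ∈ A, -a ∈ A)
    (E : Finset (Sym2 V)) (hE : ∀ e ∈ E, ¬ e.IsDiag)
    (o : Sym2 V → V × V) (ho : ∀ e : Sym2 V, Sym2.mk.uncurry (o e) = e) :
    (Gamma V F A E : ℂ) =
      ∑ H ∈ E.powerset.filter (IsthmusFree V),
        ((A.card : ℂ) / (Fintype.card F : ℂ)) ^ (E.card - H.card) *
          GammaPlus V F o A H :=
  gamma_eq_sum_isthmusFree_gammaPlus_general V F A hA E o ho
end

section
/- (Main Theorem, reciprocity) For every isthmus-free edge set E ⊆ (V choose 2): Σ_{H ∈ P_V, H ⊆ E} μ(H,E) · α^{|E|−|H|} · [Γ^A]_H = (−1)^{|E|} · Σ_{H ∈ P_V, H ⊆ E} μ(H,E) · ᾱ^{|E|−|H|} · [Γ^{Ā}]_H. -/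
/-!
Let `ψ_B(E) = Σ_{H ∈ P_V, H ⊆ E} μ(H,E) β^{|E|-|H|} [Γ^B]_H` with `β = |B|/f`. Deleting an isthmus
multiplies `[Γ^B]` by `β`: shifting every colour on one side of the bridge is a bijection of
colourings that moves the difference across the bridge through all of `F`. Hence the Möbius
inversion formula `[Γ^B]_J = Σ_{K ∈ P_V, K ⊆ J} β^{|J|-|K|} ψ_B(K)` holds for every edge set `J`,
not only for isthmus-free ones.

Writing `1_A = 1 - 1_Ā` on every edge gives `[Γ^A]_E = Σ_{H ⊆ E} (-1)^{|H|} [Γ^Ā]_H`. Expanding each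
`[Γ^Ā]_H` by the inversion formula and summing over `K ⊆ H ⊆ E` with the binomial theorem yields
`[Γ^A]_E = Σ_{K ∈ P_V, K ⊆ E} α^{|E|-|K|} (-1)^{|K|} ψ_Ā(K)`. The inversion formula for `[Γ^A]_E` is
the same triangular system with unit diagonal in the unknowns `ψ_A(K)`, so `ψ_A(E) = (-1)^{|E|} ψ_Ā(E)`
for every isthmus-free `E`.
-/

open scoped Classical

open SimpleGraph

theorem Function.Surjective.natCard_lt_iff_not_injective {α β : Type*} [Finite α] {f : α → β}
    (hf : Function.Surjective f) : Nat.card β < Nat.card α ↔ ¬ Function.Injective f := by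
  refine ⟨fun hlt hinj => hlt.ne (Nat.card_eq_of_bijective f ⟨hinj, hf⟩).symm, fun hinj => ?_⟩
  by_contra hle
  exact hinj (hf.bijective_of_nat_card_le (not_lt.1 hle)).1

theorem Finset.sum_filter_powerset_superset_neg_one_pow_mul {α R : Type*} [DecidableEq α]
    [CommRing R] {K E : Finset α} (hKE : K ⊆ E) (x : R) :
    ∑ H ∈ E.powerset.filter (K ⊆ ·), (-1) ^ H.card * x ^ (H.card - K.card)
      = (-1) ^ K.card * (1 - x) ^ (E.card - K.card) := by
  have hdisj : ∀ S ∈ (E \ K).powerset, Disjoint K S := fun S hS =>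
    Finset.disjoint_of_subset_right (Finset.mem_powerset.1 hS) Finset.disjoint_sdiff
  rw [← Finset.Icc_eq_filter_powerset, Finset.Icc_eq_image_powerset hKE,
    Finset.sum_image fun S hS T hT hST => by
      rw [← Finset.union_sdiff_cancel_left (hdisj S hS), hST,
        Finset.union_sdiff_cancel_left (hdisj T hT)],
    ← Finset.card_sdiff_of_subset hKE, ← neg_add_eq_sub, ← Finset.sum_pow_mul_eq_add_pow,
    Finset.mul_sum]
  refine Finset.sum_congr rfl fun S hS => ?_
  rw [Finset.card_union_of_disjoint (hdisj S hS), Nat.add_sub_cancel_left, one_pow, mul_one,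
    pow_add, neg_pow x, mul_assoc]

theorem Finset.eq_of_sum_filter_powerset_pow_mul_eq {α R : Type*} [Ring R] {p : Finset α → Prop}
    [DecidablePred p] {x : R} {φ ψ : Finset α → R}
    (h : ∀ E, p E → ∑ K ∈ E.powerset.filter p, x ^ (E.card - K.card) * φ K
      = ∑ K ∈ E.powerset.filter p, x ^ (E.card - K.card) * ψ K) :
    ∀ E, p E → φ E = ψ E := by
  intro E
  induction E using Finset.strongInduction with
  | H E ih =>
    intro hE
    have hmem : E ∈ E.powerset.filter p := Finset.mem_filter.2 ⟨Finset.mem_powerset_self E, hE⟩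
    have hlower : ∀ K ∈ (E.powerset.filter p).erase E,
        x ^ (E.card - K.card) * φ K = x ^ (E.card - K.card) * ψ K := fun K hK => by
      obtain ⟨hKE, hK⟩ := Finset.mem_erase.1 hK
      obtain ⟨hKE', hpK⟩ := Finset.mem_filter.1 hK
      rw [ih K (Finset.ssubset_iff_subset_ne.2 ⟨Finset.mem_powerset.1 hKE', hKE⟩) hpK]
    have := h E hE
    rwa [← Finset.add_sum_erase _ _ hmem, ← Finset.add_sum_erase _ _ hmem,
      Finset.sum_congr rfl hlower, add_left_inj, Nat.sub_self, pow_zero, one_mul, one_mul] at this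

section Graph

variable {V : Type} [Fintype V]

theorem cComp_lt_cComp_erase_iff {J : Finset (Sym2 V)} {e : Sym2 V} (he : e ∈ J) :
    cComp V J < cComp V (J.erase e) ↔ (fromEdgeSet (J : Set (Sym2 V))).IsBridge e := by
  set G := fromEdgeSet (J : Set (Sym2 V))
  have hdel : fromEdgeSet ((J.erase e : Finset (Sym2 V)) : Set (Sym2 V)) = G.deleteEdges {e} := by
    rw [deleteEdges_fromEdgeSet, Finset.coe_erase]
  have hle : G.deleteEdges {e} ≤ G := deleteEdges_le _
  rw [cComp, cComp, hdel, (ConnectedComponent.surjective_map_ofLE hle).natCard_lt_iff_not_injective]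
  induction e with
  | h u w =>
    rw [isBridge_iff, not_iff_not]
    refine ⟨fun hinj => ?_, fun huw => ?_⟩
    · by_cases h : u = w
      · exact h ▸ Reachable.refl u
      · refine ConnectedComponent.exact (hinj ?_)
        exact ConnectedComponent.connectedComponentMk_eq_of_adj (by simpa [G] using ⟨he, h⟩)
    · have hreach : ∀ a b, G.Reachable a b → (G.deleteEdges {s(u, w)}).Reachable a b := by
        intro a b hab
        rw [reachable_iff_reflTransGen] at hab ⊢
        refine hab.lift' id fun x y hxy => (reachable_iff_reflTransGen _ _).1 ?_
        by_cases hxy' : s(x, y) = s(u, w)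
        · rcases Sym2.eq_iff.1 hxy' with ⟨rfl, rfl⟩ | ⟨rfl, rfl⟩
          exacts [huw, huw.symm]
        · exact Adj.reachable (by simpa [hxy'] using hxy)
      intro c d hcd
      induction c using ConnectedComponent.ind
      induction d using ConnectedComponent.ind
      exact ConnectedComponent.sound (hreach _ _ (ConnectedComponent.exact hcd))

theorem isthmusFree_iff {J : Finset (Sym2 V)} :
    IsthmusFree V J ↔ ∀ e ∈ J, ¬ (fromEdgeSet (J : Set (Sym2 V))).IsBridge e :=
  forall₂_congr fun _ he => not_congr (cComp_lt_cComp_erase_iff he)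

theorem powerset_filter_isthmusFree_erase {J : Finset (Sym2 V)} {e : Sym2 V}
    (hbr : (fromEdgeSet (J : Set (Sym2 V))).IsBridge e) :
    (J.erase e).powerset.filter (IsthmusFree V) = J.powerset.filter (IsthmusFree V) := by
  ext K
  simp only [Finset.mem_filter, Finset.mem_powerset, Finset.subset_erase, and_assoc,
    and_congr_right_iff]
  intro hKJ
  refine ⟨fun h => h.2, fun hK => ⟨fun heK => ?_, hK⟩⟩
  exact isthmusFree_iff.1 hK e heK (hbr.anti (fromEdgeSet_mono (by exact_mod_cast hKJ)))

end Graph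

section Colorings

variable {V : Type} {F : Type} [AddCommGroup F]

noncomputable def edgeIndicator (B : Finset F) (X : V → F) (e : Sym2 V) : ℝ :=
  if ∀ u w : V, e = s(u, w) → X u - X w ∈ B then 1 else 0

theorem edgeIndicator_mk {B : Finset F} (hB : ∀ a ∈ B, -a ∈ B) (X : V → F) (u w : V) :
    edgeIndicator B X s(u, w) = if X u - X w ∈ B then 1 else 0 := by
  refine if_congr ⟨fun h => h u w rfl, fun h a b hab => ?_⟩ rfl rfl
  rcases Sym2.eq_iff.1 hab with ⟨rfl, rfl⟩ | ⟨rfl, rfl⟩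
  · exact h
  · simpa using hB _ h

theorem edgeIndicator_add_of_eq {B : Finset F} {X Y : V → F} {e : Sym2 V}
    (hY : ∀ u w : V, e = s(u, w) → Y u = Y w) :
    edgeIndicator B (X + Y) e = edgeIndicator B X e := by
  refine if_congr (forall₂_congr fun u w => forall_congr' fun he => ?_) rfl rfl
  rw [Pi.add_apply, Pi.add_apply, hY u w he, add_sub_add_right_eq_sub]

variable [Fintype F]

theorem neg_mem_compl_of_forall_neg_mem {A : Finset F} (hA : ∀ a ∈ A, -a ∈ A) :
    ∀ a ∈ Aᶜ, -a ∈ Aᶜ :=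
  fun a ha => by simpa using mt (hA (-a)) (by simpa using ha)

theorem edgeIndicator_eq_one_sub_compl {A : Finset F} (hA : ∀ a ∈ A, -a ∈ A) (X : V → F)
    (e : Sym2 V) : edgeIndicator A X e = 1 - edgeIndicator Aᶜ X e := by
  induction e with
  | h u w =>
    rw [edgeIndicator_mk hA, edgeIndicator_mk (neg_mem_compl_of_forall_neg_mem hA)]
    by_cases h : X u - X w ∈ A <;> simp [h]

variable [Fintype V]

theorem Gamma_eq_sum_prod_edgeIndicator (B : Finset F) (J : Finset (Sym2 V)) :
    Gamma V F B J
      = (∑ X : V → F, ∏ e ∈ J, edgeIndicator B X e) / (Fintype.card F : ℝ) ^ Fintype.card V := by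
  rw [Gamma, Nat.card_eq_fintype_card, Fintype.card_subtype, Finset.natCast_card_filter]
  congr 1
  refine Finset.sum_congr rfl fun X _ => ?_
  unfold edgeIndicator
  convert (Finset.prod_boole (p := fun e => ∀ u w : V, e = s(u, w) → X u - X w ∈ B)).symm

theorem Gamma_eq_sum_neg_one_pow_mul_Gamma_compl {A : Finset F} (hA : ∀ a ∈ A, -a ∈ A)
    (J : Finset (Sym2 V)) :
    Gamma V F A J = ∑ H ∈ J.powerset, (-1 : ℝ) ^ H.card * Gamma V F Aᶜ H := by
  simp only [Gamma_eq_sum_prod_edgeIndicator, edgeIndicator_eq_one_sub_compl hA, Finset.prod_sub,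
    Finset.prod_const_one, mul_one]
  rw [Finset.sum_comm, Finset.sum_div]
  simp only [Finset.mul_sum, mul_div_assoc']

end Colorings

section Bridge

variable {V : Type} [Fintype V] {F : Type} [Fintype F] [AddCommGroup F]

theorem sum_ite_add_mem_eq_card (B : Finset F) (d : F) :
    ∑ c : F, (if d + c ∈ B then (1 : ℝ) else 0) = B.card := by
  rw [Fintype.sum_equiv (Equiv.addLeft d) (fun c => if d + c ∈ B then (1 : ℝ) else 0)
    (fun c => if c ∈ B then (1 : ℝ) else 0) fun _ => rfl,
    Finset.sum_boole,
    Finset.filter_univ_mem]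

theorem card_mul_sum_prod_edgeIndicator_of_isBridge {B : Finset F} (hB : ∀ a ∈ B, -a ∈ B)
    {J : Finset (Sym2 V)} {u w : V} (ht : s(u, w) ∈ J)
    (hbr : (fromEdgeSet (J : Set (Sym2 V))).IsBridge s(u, w)) :
    (Fintype.card F : ℝ) * ∑ X : V → F, ∏ e ∈ J, edgeIndicator B X e
      = B.card * ∑ X : V → F, ∏ e ∈ J.erase s(u, w), edgeIndicator B X e := by
  set G' := fromEdgeSet ((J.erase s(u, w) : Finset (Sym2 V)) : Set (Sym2 V))
  set g : (V → F) → ℝ := fun X => ∏ e ∈ J.erase s(u, w), edgeIndicator B X e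
  have huw : ¬ G'.Reachable u w := by
    rwa [isBridge_iff, deleteEdges_fromEdgeSet, ← Finset.coe_erase] at hbr
  -- Shifting every colour on the component of `u` in `G'` by `c` preserves the constraints
  -- of `J.erase s(u, w)` and adds `c` to the difference across the bridge.
  let shift : F → V → F := fun c x => if G'.Reachable u x then c else 0
  have hg : ∀ c X, g (X + shift c) = g X := by
    intro c X
    refine Finset.prod_congr rfl fun e he => edgeIndicator_add_of_eq fun a b hab => ?_
    have hab' : G'.Reachable a b := by
      by_cases h : a = b
      · exact h ▸ Reachable.refl a
      · exact Adj.reachable (by rw [fromEdgeSet_adj, ← hab]; exact ⟨he, h⟩)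
    exact if_congr ⟨fun h => h.trans hab', fun h => h.trans hab'.symm⟩ rfl rfl
  have hshift : ∀ c, ∑ X : V → F, ∏ e ∈ J, edgeIndicator B X e
      = ∑ X : V → F, (if X u - X w + c ∈ B then 1 else 0) * g X := by
    intro c
    rw [← Equiv.sum_comp (Equiv.addRight (shift c))]
    refine Fintype.sum_congr _ _ fun X => ?_
    simp only [Equiv.coe_addRight]
    rw [← Finset.mul_prod_erase _ _ ht]
    change _ * g (X + shift c) = _
    rw [hg, edgeIndicator_mk hB]
    simp [shift, huw, add_sub_right_comm]
  calc (Fintype.card F : ℝ) * ∑ X : V → F, ∏ e ∈ J, edgeIndicator B X e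
      = ∑ c : F, ∑ X : V → F, (if X u - X w + c ∈ B then 1 else 0) * g X := by
        rw [← Finset.card_univ, ← nsmul_eq_mul, ← Finset.sum_const]
        exact Finset.sum_congr rfl fun c _ => hshift c
    _ = ∑ X : V → F, (∑ c : F, if X u - X w + c ∈ B then 1 else 0) * g X := by
        rw [Finset.sum_comm]
        simp only [Finset.sum_mul]
    _ = B.card * ∑ X : V → F, g X := by
        simp only [sum_ite_add_mem_eq_card, Finset.mul_sum]

theorem Gamma_eq_mul_Gamma_erase_of_isBridge {B : Finset F} (hB : ∀ a ∈ B, -a ∈ B)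
    {J : Finset (Sym2 V)} {e : Sym2 V} (he : e ∈ J)
    (hbr : (fromEdgeSet (J : Set (Sym2 V))).IsBridge e) :
    Gamma V F B J = (B.card / Fintype.card F : ℝ) * Gamma V F B (J.erase e) := by
  induction e with
  | h u w =>
    have hF : (Fintype.card F : ℝ) ≠ 0 := Nat.cast_ne_zero.2 Fintype.card_ne_zero
    rw [Gamma_eq_sum_prod_edgeIndicator, Gamma_eq_sum_prod_edgeIndicator, div_mul_div_comm,
      ← card_mul_sum_prod_edgeIndicator_of_isBridge hB he hbr, mul_div_mul_left _ _ hF]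

end Bridge

section Mobius

variable {V : Type} [Fintype V]

noncomputable def mobiusTransform (β : ℝ) (g : Finset (Sym2 V) → ℝ) (E : Finset (Sym2 V)) : ℝ :=
  ∑ H ∈ E.powerset.filter (IsthmusFree V), (muPV V H E : ℝ) * β ^ (E.card - H.card) * g H

theorem sum_muPV_eq_ite {K E : Finset (Sym2 V)} (hE : IsthmusFree V E) (hKE : K ⊆ E) :
    ∑ H ∈ E.powerset.filter (fun H => K ⊆ H ∧ IsthmusFree V H), muPV V K H
      = if K = E then 1 else 0 := by
  split_ifs with h
  · subst h
    have hsingle : K.powerset.filter (fun H => K ⊆ H ∧ IsthmusFree V H) = {K} := by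
      ext H
      simp only [Finset.mem_filter, Finset.mem_powerset, Finset.mem_singleton]
      exact ⟨fun hH => hH.1.antisymm hH.2.1, by rintro rfl; exact ⟨subset_rfl, subset_rfl, hE⟩⟩
    rw [hsingle, Finset.sum_singleton, muPV, if_pos rfl]
  · have hinsert : E.powerset.filter (fun H => K ⊆ H ∧ IsthmusFree V H)
        = insert E (E.powerset.filter (fun L => K ⊆ L ∧ L ≠ E ∧ IsthmusFree V L)) := by
      ext H
      simp only [Finset.mem_insert, Finset.mem_filter, Finset.mem_powerset]
      by_cases hHE : H = E
      · simp [hHE, hKE, hE]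
      · simp [hHE]
    rw [hinsert, Finset.sum_insert (by simp), muPV, if_neg h, Finset.sum_attach, neg_add_cancel]

theorem sum_pow_mul_mobiusTransform {E : Finset (Sym2 V)} (hE : IsthmusFree V E) (β : ℝ)
    (g : Finset (Sym2 V) → ℝ) :
    ∑ K ∈ E.powerset.filter (IsthmusFree V), β ^ (E.card - K.card) * mobiusTransform β g K
      = g E := by
  calc ∑ K ∈ E.powerset.filter (IsthmusFree V), β ^ (E.card - K.card) * mobiusTransform β g K
      = ∑ K ∈ E.powerset.filter (IsthmusFree V), ∑ L ∈ K.powerset.filter (IsthmusFree V),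
          (muPV V L K : ℝ) * β ^ (E.card - L.card) * g L := by
        refine Finset.sum_congr rfl fun K hK => ?_
        rw [mobiusTransform, Finset.mul_sum]
        refine Finset.sum_congr rfl fun L hL => ?_
        have hKE := Finset.card_le_card (Finset.mem_powerset.1 (Finset.mem_filter.1 hK).1)
        have hLK := Finset.card_le_card (Finset.mem_powerset.1 (Finset.mem_filter.1 hL).1)
        rw [← Nat.sub_add_sub_cancel hKE hLK, pow_add]
        ring
    _ = ∑ L ∈ E.powerset.filter (IsthmusFree V),
          ((∑ K ∈ E.powerset.filter (fun K => L ⊆ K ∧ IsthmusFree V K), muPV V L K : ℤ) : ℝ)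
            * β ^ (E.card - L.card) * g L := by
        rw [Finset.sum_comm' (t' := E.powerset.filter (IsthmusFree V))
          (s' := fun L => E.powerset.filter (fun K => L ⊆ K ∧ IsthmusFree V K))]
        · push_cast
          simp only [Finset.sum_mul]
        · intro K L
          simp only [Finset.mem_filter, Finset.mem_powerset]
          exact ⟨fun ⟨⟨hKE, hK⟩, hLK, hL⟩ => ⟨⟨hKE, hLK, hK⟩, hLK.trans hKE, hL⟩,
            fun ⟨⟨hKE, hLK, hK⟩, _, hL⟩ => ⟨⟨hKE, hK⟩, hLK, hL⟩⟩
    _ = g E := by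
        rw [Finset.sum_eq_single_of_mem E (by simp [hE]) fun L hL hLE => by
          rw [sum_muPV_eq_ite hE (Finset.mem_powerset.1 (Finset.mem_filter.1 hL).1), if_neg hLE]
          simp]
        rw [sum_muPV_eq_ite hE subset_rfl]
        simp

theorem eq_sum_pow_mul_mobiusTransform {β : ℝ} {g : Finset (Sym2 V) → ℝ}
    (hg : ∀ (J : Finset (Sym2 V)) e, e ∈ J → (fromEdgeSet (J : Set (Sym2 V))).IsBridge e →
      g J = β * g (J.erase e))
    (J : Finset (Sym2 V)) :
    g J = ∑ K ∈ J.powerset.filter (IsthmusFree V),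
      β ^ (J.card - K.card) * mobiusTransform β g K := by
  induction J using Finset.strongInduction with
  | H J ih =>
    by_cases hJ : IsthmusFree V J
    · exact (sum_pow_mul_mobiusTransform hJ β g).symm
    obtain ⟨e, he, hbr⟩ : ∃ e ∈ J, (fromEdgeSet (J : Set (Sym2 V))).IsBridge e := by
      simpa [isthmusFree_iff] using hJ
    rw [hg J e he hbr, ih _ (Finset.erase_ssubset he), ← powerset_filter_isthmusFree_erase hbr,
      Finset.mul_sum]
    refine Finset.sum_congr rfl fun K hK => ?_
    have hKJ := Finset.card_le_card (Finset.mem_powerset.1 (Finset.mem_filter.1 hK).1)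
    have hJ := Finset.card_pos.2 ⟨e, he⟩
    rw [Finset.card_erase_of_mem he] at hKJ ⊢
    rw [← mul_assoc, ← pow_succ']
    congr 2
    omega

theorem sum_neg_one_pow_mul_eq_sum_mobiusTransform {β : ℝ} {g : Finset (Sym2 V) → ℝ}
    (hg : ∀ (J : Finset (Sym2 V)) e, e ∈ J → (fromEdgeSet (J : Set (Sym2 V))).IsBridge e →
      g J = β * g (J.erase e))
    (E : Finset (Sym2 V)) :
    ∑ H ∈ E.powerset, (-1) ^ H.card * g H
      = ∑ K ∈ E.powerset.filter (IsthmusFree V),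
          (-1) ^ K.card * (1 - β) ^ (E.card - K.card) * mobiusTransform β g K := by
  calc ∑ H ∈ E.powerset, (-1) ^ H.card * g H
      = ∑ H ∈ E.powerset, ∑ K ∈ H.powerset.filter (IsthmusFree V),
          (-1) ^ H.card * β ^ (H.card - K.card) * mobiusTransform β g K := by
        refine Finset.sum_congr rfl fun H _ => ?_
        rw [eq_sum_pow_mul_mobiusTransform hg H, Finset.mul_sum]
        simp only [mul_assoc]
    _ = ∑ K ∈ E.powerset.filter (IsthmusFree V),
          (∑ H ∈ E.powerset.filter (K ⊆ ·), (-1) ^ H.card * β ^ (H.card - K.card))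
            * mobiusTransform β g K := by
        rw [Finset.sum_comm' (t' := E.powerset.filter (IsthmusFree V))
          (s' := fun K => E.powerset.filter (K ⊆ ·))]
        · simp only [Finset.sum_mul]
        · intro H K
          simp only [Finset.mem_filter, Finset.mem_powerset]
          exact ⟨fun ⟨hHE, hKH, hK⟩ => ⟨⟨hHE, hKH⟩, hKH.trans hHE, hK⟩,
            fun ⟨⟨hHE, hKH⟩, _, hK⟩ => ⟨hHE, hKH, hK⟩⟩
    _ = _ := Finset.sum_congr rfl fun K hK => by
        rw [Finset.sum_filter_powerset_superset_neg_one_pow_mul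
          (Finset.mem_powerset.1 (Finset.mem_filter.1 hK).1)]

end Mobius

theorem reciprocity_general
    (V : Type) [Fintype V] (F : Type) [Fintype F] [AddCommGroup F]
    (A : Finset F) (hA : ∀ a ∈ A, -a ∈ A)
    (E : Finset (Sym2 V)) (hfree : IsthmusFree V E) :
    ∑ H ∈ E.powerset.filter (IsthmusFree V),
        (muPV V H E : ℝ) * ((A.card : ℝ) / (Fintype.card F : ℝ)) ^ (E.card - H.card) *
          Gamma V F A H
      = (-1 : ℝ) ^ E.card *
        ∑ H ∈ E.powerset.filter (IsthmusFree V),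
          (muPV V H E : ℝ) *
            (1 - (A.card : ℝ) / (Fintype.card F : ℝ)) ^ (E.card - H.card) *
              Gamma V F Aᶜ H := by
  have hF : (Fintype.card F : ℝ) ≠ 0 := Nat.cast_ne_zero.2 Fintype.card_ne_zero
  have hα : 1 - (A.card : ℝ) / Fintype.card F = (Aᶜ.card : ℝ) / Fintype.card F := by
    rw [eq_div_iff hF, sub_mul, div_mul_cancel₀ _ hF, ← Finset.card_add_card_compl A]
    push_cast
    ring
  rw [hα]
  change mobiusTransform _ (Gamma V F A) E = (-1) ^ E.card * mobiusTransform _ (Gamma V F Aᶜ) E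
  refine Finset.eq_of_sum_filter_powerset_pow_mul_eq (p := IsthmusFree V)
    (x := (A.card : ℝ) / Fintype.card F)
    (φ := mobiusTransform (A.card / Fintype.card F) (Gamma V F A))
    (ψ := fun K => (-1) ^ K.card * mobiusTransform (Aᶜ.card / Fintype.card F) (Gamma V F Aᶜ) K)
    (fun J hJ => ?_) E hfree
  rw [sum_pow_mul_mobiusTransform hJ, Gamma_eq_sum_neg_one_pow_mul_Gamma_compl hA,
    sum_neg_one_pow_mul_eq_sum_mobiusTransform (g := Gamma V F Aᶜ) (fun _ _ he hbr =>
      Gamma_eq_mul_Gamma_erase_of_isBridge (neg_mem_compl_of_forall_neg_mem hA) he hbr),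
    ← hα, sub_sub_cancel]
  exact Finset.sum_congr rfl fun K _ => by ring

/-- Main Theorem, reciprocity: for every isthmus-free `E`,
`Σ_{H ∈ P_V, H ⊆ E} μ(H,E) α^{|E|-|H|} [Γ^A]_H
  = (-1)^{|E|} Σ_{H ∈ P_V, H ⊆ E} μ(H,E) ᾱ^{|E|-|H|} [Γ^{Ā}]_H`. -/
theorem reciprocity
    (V : Type) [Fintype V] (F : Type) [Fintype F] [AddCommGroup F]
    (A : Finset F) (hA : ∀ a ∈ A, -a ∈ A)
    (E : Finset (Sym2 V)) (hE : ∀ e ∈ E, ¬ e.IsDiag) (hfree : IsthmusFree V E) :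
    ∑ H ∈ E.powerset.filter (IsthmusFree V),
        (muPV V H E : ℝ) * ((A.card : ℝ) / (Fintype.card F : ℝ)) ^ (E.card - H.card) *
          Gamma V F A H
      = (-1 : ℝ) ^ E.card *
        ∑ H ∈ E.powerset.filter (IsthmusFree V),
          (muPV V H E : ℝ) *
            (1 - (A.card : ℝ) / (Fintype.card F : ℝ)) ^ (E.card - H.card) *
              Gamma V F Aᶜ H :=
  reciprocity_general V F A hA E hfree
end

section
/- (Corollary 1) For every isthmus-free edge set E ⊆ (V choose 2): [Γ^A]_E = Σ_{H ∈ P_V, H ⊆ E} α^{|E|−|H|} · (−1)^{|H|} · Σ_{K ∈ P_V, K ⊆ H} μ(K,H) · ᾱ^{|H|−|K|} · [Γ^{Ā}]_K. -/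
open scoped Classical

/-! ### Auxiliary material -/

noncomputable section Aux

set_option linter.unusedSectionVars false

open SimpleGraph Finset

namespace GammaAux

/-! #### Graph-theoretic lemmas about isthmuses -/

variable {V : Type} [Fintype V]

lemma reach_transfer {S : Finset (Sym2 V)} {a b : V}
    (hr : (fromEdgeSet ((S.erase s(a,b)) : Set (Sym2 V))).Reachable a b)
    {u v : V} (h : (fromEdgeSet (S : Set (Sym2 V))).Reachable u v) :
    (fromEdgeSet ((S.erase s(a,b)) : Set (Sym2 V))).Reachable u v := by
  obtain ⟨p⟩ := h
  induction p with
  | nil => exact Reachable.refl _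
  | cons hadj _ ih =>
    rename_i x y z p
    refine Reachable.trans ?_ ih
    rw [fromEdgeSet_adj] at hadj
    by_cases hxy : s(x,y) = s(a,b)
    · rw [Sym2.eq_iff] at hxy
      rcases hxy with ⟨rfl, rfl⟩ | ⟨rfl, rfl⟩
      · exact hr
      · exact hr.symm
    · exact Adj.reachable (by rw [fromEdgeSet_adj]; exact ⟨by simp [Finset.mem_erase, hxy, hadj.1], hadj.2⟩)

lemma card_cc_eq_of_reach_iff {G G' : SimpleGraph V}
    (h : ∀ u v, G.Reachable u v ↔ G'.Reachable u v) :
    Nat.card G.ConnectedComponent = Nat.card G'.ConnectedComponent :=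
  Nat.card_congr (Quot.congrRight h)

lemma isthmus_not_reach {S : Finset (Sym2 V)} {a b : V}
    (ht : cComp V (S.erase s(a,b)) > cComp V S) :
    ¬ (fromEdgeSet ((S.erase s(a,b)) : Set (Sym2 V))).Reachable a b := by
  intro hr
  have hle : (fromEdgeSet ((S.erase s(a,b)) : Set (Sym2 V))) ≤ fromEdgeSet (S : Set (Sym2 V)) :=
    fromEdgeSet_mono (by exact_mod_cast Finset.erase_subset _ _)
  have : cComp V S = cComp V (S.erase s(a,b)) :=
    card_cc_eq_of_reach_iff fun u v =>
      ⟨fun hh => reach_transfer hr hh, fun hh => hh.mono hle⟩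
  omega

lemma not_reach_isthmus {S : Finset (Sym2 V)} {a b : V} (hab : a ≠ b) (ht : s(a,b) ∈ S)
    (hnr : ¬ (fromEdgeSet ((S.erase s(a,b)) : Set (Sym2 V))).Reachable a b) :
    cComp V (S.erase s(a,b)) > cComp V S := by
  classical
  set G' := fromEdgeSet ((S.erase s(a,b)) : Set (Sym2 V))
  set G := fromEdgeSet (S : Set (Sym2 V))
  have hle : G' ≤ G := fromEdgeSet_mono (by exact_mod_cast Finset.erase_subset _ _)
  let φ : G'.ConnectedComponent → G.ConnectedComponent :=
    ConnectedComponent.map (Hom.ofLE hle)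
  have hsurj : Function.Surjective φ := by
    intro C
    refine C.ind fun v => ?_
    exact ⟨G'.connectedComponentMk v, rfl⟩
  have hninj : ¬ Function.Injective φ := by
    intro hinj
    have h1 : φ (G'.connectedComponentMk a) = φ (G'.connectedComponentMk b) := by
      show G.connectedComponentMk a = G.connectedComponentMk b
      exact ConnectedComponent.eq.mpr (Adj.reachable (by rw [fromEdgeSet_adj]; exact ⟨by exact_mod_cast ht, hab⟩))
    have := hinj h1
    exact hnr (ConnectedComponent.eq.mp this)
  letI : Fintype G'.ConnectedComponent := Fintype.ofFinite _
  letI : Fintype G.ConnectedComponent := Fintype.ofFinite _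
  have := Fintype.card_lt_of_surjective_not_injective φ hsurj hninj
  unfold cComp
  rw [Nat.card_eq_fintype_card, Nat.card_eq_fintype_card]
  exact this

lemma isthmusFree_notMem {K S : Finset (Sym2 V)} (hK : IsthmusFree V K) (hKS : K ⊆ S)
    {t : Sym2 V} (hdiag : ¬ t.IsDiag) (hts : t ∈ S)
    (ht : cComp V (S.erase t) > cComp V S) : t ∉ K := by
  intro htK
  induction t using Sym2.inductionOn with
  | hf a b =>
  have hab : a ≠ b := by simpa using hdiag
  have hreach : (fromEdgeSet ((K.erase s(a,b)) : Set (Sym2 V))).Reachable a b := by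
    by_contra hnr
    exact hK _ htK (not_reach_isthmus hab htK hnr)
  have : (fromEdgeSet ((S.erase s(a,b)) : Set (Sym2 V))).Reachable a b :=
    hreach.mono (fromEdgeSet_mono (by exact_mod_cast Finset.erase_subset_erase _ hKS))
  exact isthmus_not_reach ht this

/-! #### Counting lemmas for `Gamma` -/

variable {F : Type} [Fintype F] [AddCommGroup F]

def Pc (B : Finset F) (S : Finset (Sym2 V)) (X : V → F) : Prop :=
  ∀ e ∈ S, ∀ u w : V, e = s(u, w) → X u - X w ∈ B

lemma gamma_eq (B : Finset F) (S : Finset (Sym2 V)) :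
    Gamma V F B S = (Nat.card {X : V → F // Pc B S X} : ℝ) /
      (Fintype.card F : ℝ) ^ (Fintype.card V) := rfl

def shiftC (S : Finset (Sym2 V)) (a : V) (c : F) (X : V → F) : V → F :=
  fun v => if (fromEdgeSet (S : Set (Sym2 V))).Reachable a v then X v + c else X v

lemma shiftC_diff {S' : Finset (Sym2 V)} {a : V} {c : F} {X : V → F} {u w : V}
    (h : s(u,w) ∈ S') : shiftC S' a c X u - shiftC S' a c X w = X u - X w := by
  by_cases huw : u = w
  · subst huw; simp
  · have hadj : (fromEdgeSet (S' : Set (Sym2 V))).Adj u w := by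
      rw [fromEdgeSet_adj]; exact ⟨by exact_mod_cast h, huw⟩
    have hiff : (fromEdgeSet (S' : Set (Sym2 V))).Reachable a u ↔
        (fromEdgeSet (S' : Set (Sym2 V))).Reachable a w :=
      ⟨fun hr => hr.trans hadj.reachable, fun hr => hr.trans hadj.symm.reachable⟩
    unfold shiftC
    by_cases hc : (fromEdgeSet (S' : Set (Sym2 V))).Reachable a u
    · rw [if_pos hc, if_pos (hiff.mp hc)]; abel
    · rw [if_neg hc, if_neg (fun hw => hc (hiff.mpr hw))]

lemma shiftC_a {S' : Finset (Sym2 V)} {a : V} {c : F} {X : V → F} :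
    shiftC S' a c X a = X a + c := by
  unfold shiftC; rw [if_pos (Reachable.refl _)]

lemma bridge_count {B : Finset F} {S : Finset (Sym2 V)} {a b : V}
    (hB : ∀ x ∈ B, -x ∈ B) (hab : a ≠ b) (ht : s(a,b) ∈ S)
    (hnr : ¬ (fromEdgeSet ((S.erase s(a,b)) : Set (Sym2 V))).Reachable a b) :
    Nat.card {X : V → F // Pc B S X} * Fintype.card F
      = B.card * Nat.card {X : V → F // Pc B (S.erase s(a,b)) X} := by
  classical
  set S' := S.erase s(a,b) with hS'
  have key : ∀ (c : F) (X : V → F), Pc B S' X → Pc B S' (shiftC S' a c X) := by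
    intro c X hX e he u w hew
    subst hew
    rw [shiftC_diff he]
    exact hX _ he u w rfl
  have hca : ∀ (c : F) (X : V → F), shiftC S' a c X a = X a + c := fun _ _ => shiftC_a
  have hcb : ∀ (c : F) (X : V → F), shiftC S' a c X b = X b := by
    intro c X; unfold shiftC; rw [if_neg hnr]
  have hcomp : ∀ (c c' : F) (X : V → F), shiftC S' a c' (shiftC S' a c X) = shiftC S' a (c + c') X := by
    intro c c' X; funext v; unfold shiftC
    by_cases h : (fromEdgeSet (S' : Set (Sym2 V))).Reachable a v
    · rw [if_pos h, if_pos h, if_pos h]; abel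
    · rw [if_neg h, if_neg h, if_neg h]
  have hzero : ∀ (X : V → F), shiftC S' a 0 X = X := by
    intro X; funext v; unfold shiftC
    by_cases h : (fromEdgeSet (S' : Set (Sym2 V))).Reachable a v <;> simp [h]
  have e : {X : V → F // Pc B S X} × F ≃ {X : V → F // Pc B S' X} × {d // d ∈ B} := by
    refine ⟨fun p => ⟨⟨shiftC S' a p.2 p.1.1, key p.2 p.1.1 (fun e he => p.1.2 e (Finset.mem_of_mem_erase he))⟩,
        ⟨p.1.1 a - p.1.1 b, p.1.2 _ ht a b rfl⟩⟩,
      fun q => ⟨⟨shiftC S' a (q.2.1 - (q.1.1 a - q.1.1 b)) q.1.1, ?_⟩,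
        (q.1.1 a - q.1.1 b) - q.2.1⟩, ?_, ?_⟩
    · intro e he u w hew
      subst hew
      by_cases het : s(u,w) = s(a,b)
      · have hd : shiftC S' a (q.2.1 - (q.1.1 a - q.1.1 b)) q.1.1 a
            - shiftC S' a (q.2.1 - (q.1.1 a - q.1.1 b)) q.1.1 b = q.2.1 := by
          rw [hca, hcb]; abel
        rw [Sym2.eq_iff] at het
        rcases het with ⟨h1, h2⟩ | ⟨h1, h2⟩
        · subst h1; subst h2; rw [hd]; exact q.2.2
        · subst h1; subst h2
          have hmem := hB _ q.2.2
          rw [← hd, neg_sub] at hmem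
          exact hmem
      · have he' : s(u,w) ∈ S' := Finset.mem_erase.mpr ⟨het, he⟩
        rw [shiftC_diff he']
        exact q.1.2 _ he' u w rfl
    · rintro ⟨⟨X, hX⟩, c⟩
      have h1 : shiftC S' a c X a - shiftC S' a c X b = (X a - X b) + c := by
        rw [hca, hcb]; abel
      refine Prod.ext (Subtype.ext ?_) ?_
      · show shiftC S' a (X a - X b - (shiftC S' a c X a - shiftC S' a c X b)) (shiftC S' a c X) = X
        rw [h1, show X a - X b - (X a - X b + c) = -c by abel, hcomp,
          show c + -c = (0:F) by abel, hzero]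
      · show shiftC S' a c X a - shiftC S' a c X b - (X a - X b) = c
        rw [h1]; abel
    · rintro ⟨⟨Y, hY⟩, ⟨d, hd⟩⟩
      set c0 := d - (Y a - Y b) with hc0
      have h1 : shiftC S' a c0 Y a - shiftC S' a c0 Y b = d := by
        rw [hca, hcb, hc0]; abel
      refine Prod.ext (Subtype.ext ?_) (Subtype.ext ?_)
      · show shiftC S' a (Y a - Y b - d) (shiftC S' a c0 Y) = Y
        rw [hcomp, show c0 + (Y a - Y b - d) = (0:F) by rw [hc0]; abel, hzero]
      · show shiftC S' a c0 Y a - shiftC S' a c0 Y b = d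
        exact h1
  have := Nat.card_congr e
  rw [Nat.card_prod, Nat.card_prod] at this
  simp only [Nat.card_eq_fintype_card] at this
  rw [Nat.card_eq_fintype_card, Nat.card_eq_fintype_card, this, Fintype.card_coe]
  ring

lemma gamma_bridge {B : Finset F} {S : Finset (Sym2 V)} {a b : V}
    (hB : ∀ x ∈ B, -x ∈ B) (hab : a ≠ b) (ht : s(a,b) ∈ S)
    (hnr : ¬ (fromEdgeSet ((S.erase s(a,b)) : Set (Sym2 V))).Reachable a b) :
    Gamma V F B S = ((B.card : ℝ) / (Fintype.card F : ℝ)) * Gamma V F B (S.erase s(a,b)) := by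
  have hf : (Fintype.card F : ℝ) ≠ 0 := Nat.cast_ne_zero.mpr Fintype.card_pos.ne'
  have hc := bridge_count hB hab ht hnr
  have hcast : (Nat.card {X : V → F // Pc B S X} : ℝ) * Fintype.card F
      = B.card * Nat.card {X : V → F // Pc B (S.erase s(a,b)) X} := by exact_mod_cast hc
  have h2 : (Nat.card {X : V → F // Pc B S X} : ℝ)
      = (B.card * Nat.card {X : V → F // Pc B (S.erase s(a,b)) X}) / Fintype.card F := by
    rw [eq_div_iff hf]; exact hcast
  rw [gamma_eq, gamma_eq, h2]
  ring

def indB (B : Finset F) (X : V → F) (e : Sym2 V) : ℝ :=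
  if (∀ u w : V, e = s(u, w) → X u - X w ∈ B) then 1 else 0

lemma card_as_sum (B : Finset F) (S : Finset (Sym2 V)) :
    (Nat.card {X : V → F // Pc B S X} : ℝ)
      = ∑ X : V → F, ∏ e ∈ S, indB B X e := by
  rw [Nat.card_eq_fintype_card, Fintype.card_subtype]
  rw [Finset.card_filter]
  push_cast
  refine Finset.sum_congr rfl fun X _ => ?_
  unfold indB
  rw [Finset.prod_boole]
  unfold Pc
  by_cases h : ∀ e ∈ S, ∀ u w : V, e = s(u, w) → X u - X w ∈ B
  · rw [if_pos h, if_pos h]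
  · rw [if_neg h, if_neg h]

lemma indB_compl (A : Finset F) (hA : ∀ a ∈ A, -a ∈ A) (X : V → F) (e : Sym2 V) :
    indB A X e = 1 - indB Aᶜ X e := by
  have key : ∀ (B : Finset F), (∀ b ∈ B, -b ∈ B) → ∀ x y : V,
      ((∀ u w : V, s(x,y) = s(u, w) → X u - X w ∈ B) ↔ X x - X y ∈ B) := by
    intro B hB x y
    constructor
    · exact fun h => h x y rfl
    · intro h u w huw
      rw [Sym2.eq_iff] at huw
      rcases huw with ⟨rfl, rfl⟩ | ⟨rfl, rfl⟩
      · exact h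
      · have := hB _ h; rwa [neg_sub] at this
  have hAc : ∀ b ∈ Aᶜ, -b ∈ Aᶜ := by
    intro b hb
    simp only [Finset.mem_compl] at hb ⊢
    intro hc
    exact hb (by simpa using hA _ hc)
  induction e using Sym2.inductionOn with
  | hf x y =>
    unfold indB
    rw [if_congr (key A hA x y) rfl rfl, if_congr (key Aᶜ hAc x y) rfl rfl]
    by_cases h : X x - X y ∈ A
    · rw [if_pos h, if_neg (by simpa using h)]; ring
    · rw [if_neg h, if_pos (by simpa using h)]; ring

lemma gamma_inclexcl (A : Finset F) (hA : ∀ a ∈ A, -a ∈ A) (E : Finset (Sym2 V)) :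
    Gamma V F A E = ∑ S ∈ E.powerset, (-1:ℝ)^S.card * Gamma V F Aᶜ S := by
  have h1 : Gamma V F A E = (Nat.card {X : V → F // Pc A E X} : ℝ) /
      (Fintype.card F : ℝ) ^ (Fintype.card V) := rfl
  rw [h1, card_as_sum]
  have h2 : ∀ X : V → F, ∏ e ∈ E, indB A X e
      = ∑ S ∈ E.powerset, (-1:ℝ)^S.card * ∏ e ∈ S, indB Aᶜ X e := by
    intro X
    have : ∀ e ∈ E, indB A X e = (- indB Aᶜ X e) + 1 := by
      intro e _; rw [indB_compl A hA]; ring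
    rw [Finset.prod_congr rfl this, Finset.prod_add]
    refine Finset.sum_congr rfl fun S hS => ?_
    rw [Finset.prod_const_one, mul_one]
    rw [Finset.prod_congr rfl (fun i (_ : i ∈ S) => (neg_one_mul (indB Aᶜ X i)).symm),
      Finset.prod_mul_distrib, Finset.prod_const]
  rw [Finset.sum_congr rfl (fun X _ => h2 X), Finset.sum_comm, Finset.sum_div]
  refine Finset.sum_congr rfl fun S hS => ?_
  rw [← Finset.mul_sum, mul_div_assoc]
  congr 1
  rw [show Gamma V F Aᶜ S = (Nat.card {X : V → F // Pc Aᶜ S X} : ℝ) /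
      (Fintype.card F : ℝ) ^ (Fintype.card V) from rfl, card_as_sum]

/-! #### Möbius function lemmas -/

lemma muPV_self (K : Finset (Sym2 V)) : muPV V K K = 1 := by
  rw [muPV]; exact if_pos rfl

lemma mu_sum {H K : Finset (Sym2 V)} (hH : IsthmusFree V H) (hKH : K ⊆ H) :
    ∑ L ∈ H.powerset.filter (fun L => K ⊆ L ∧ IsthmusFree V L), muPV V K L
      = if K = H then 1 else 0 := by
  by_cases hKeq : K = H
  · subst hKeq
    rw [if_pos rfl]
    have : K.powerset.filter (fun L => K ⊆ L ∧ IsthmusFree V L) = {K} := by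
      ext L
      simp only [mem_filter, mem_powerset, mem_singleton]
      constructor
      · rintro ⟨h1, h2, _⟩; exact subset_antisymm h1 h2
      · rintro rfl; exact ⟨subset_rfl, subset_rfl, hH⟩
    rw [this, Finset.sum_singleton, muPV_self]
  · rw [if_neg hKeq]
    have hset : H.powerset.filter (fun L => K ⊆ L ∧ IsthmusFree V L)
        = insert H (H.powerset.filter (fun L => K ⊆ L ∧ L ≠ H ∧ IsthmusFree V L)) := by
      ext L
      simp only [mem_filter, mem_powerset, mem_insert]
      constructor
      · rintro ⟨h1, h2, h3⟩
        by_cases hLH : L = H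
        · exact Or.inl hLH
        · exact Or.inr ⟨h1, h2, hLH, h3⟩
      · rintro (rfl | ⟨h1, h2, _, h3⟩)
        · exact ⟨subset_rfl, hKH, hH⟩
        · exact ⟨h1, h2, h3⟩
    have hHnot : H ∉ H.powerset.filter (fun L => K ⊆ L ∧ L ≠ H ∧ IsthmusFree V L) := by
      simp only [mem_filter]; tauto
    rw [hset, Finset.sum_insert hHnot]
    have hexp : muPV V K H = - ∑ L ∈ ((H.powerset.filter
        (fun L => K ⊆ L ∧ L ≠ H ∧ IsthmusFree V L)).attach), muPV V K L.1 := by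
      rw [muPV]; exact if_neg hKeq
    rw [hexp, ← Finset.sum_attach (H.powerset.filter (fun L => K ⊆ L ∧ L ≠ H ∧ IsthmusFree V L))
      (fun L => muPV V K L)]
    ring

lemma mobius_inv (r : ℝ) (g : Finset (Sym2 V) → ℝ) {H : Finset (Sym2 V)}
    (hH : IsthmusFree V H) :
    ∑ K ∈ H.powerset.filter (IsthmusFree V), r ^ (H.card - K.card) *
      ∑ L ∈ K.powerset.filter (IsthmusFree V),
        (muPV V L K : ℝ) * r ^ (K.card - L.card) * g L
    = g H := by
  have step1 : ∀ K ∈ H.powerset.filter (IsthmusFree V),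
      r ^ (H.card - K.card) * ∑ L ∈ K.powerset.filter (IsthmusFree V),
        (muPV V L K : ℝ) * r ^ (K.card - L.card) * g L
      = ∑ L ∈ K.powerset.filter (IsthmusFree V),
        (muPV V L K : ℝ) * r ^ (H.card - K.card) * (r ^ (K.card - L.card) * g L) := by
    intro K _
    rw [Finset.mul_sum]
    exact Finset.sum_congr rfl fun L _ => by ring
  rw [Finset.sum_congr rfl step1]
  rw [Finset.sum_comm' (t' := H.powerset.filter (IsthmusFree V))
    (s' := fun L => H.powerset.filter (fun K => L ⊆ K ∧ IsthmusFree V K))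
    (by
      intro K L
      simp only [mem_filter, mem_powerset]
      constructor
      · rintro ⟨⟨h1, h2⟩, h3, h4⟩
        exact ⟨⟨h1, h3, h2⟩, h3.trans h1, h4⟩
      · rintro ⟨⟨h1, h2, h3⟩, _, h4⟩
        exact ⟨⟨h1, h3⟩, h2, h4⟩)]
  have step2 : ∀ L ∈ H.powerset.filter (IsthmusFree V),
      (∑ K ∈ H.powerset.filter (fun K => L ⊆ K ∧ IsthmusFree V K),
        (muPV V L K : ℝ) * r ^ (H.card - K.card) * (r ^ (K.card - L.card) * g L))
      = (if L = H then 1 else 0) * (r ^ (H.card - L.card) * g L) := by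
    intro L hL
    simp only [mem_filter, mem_powerset] at hL
    have : ∀ K ∈ H.powerset.filter (fun K => L ⊆ K ∧ IsthmusFree V K),
        (muPV V L K : ℝ) * r ^ (H.card - K.card) * (r ^ (K.card - L.card) * g L)
        = (muPV V L K : ℝ) * (r ^ (H.card - L.card) * g L) := by
      intro K hK
      simp only [mem_filter, mem_powerset] at hK
      have hcard : (H.card - K.card) + (K.card - L.card) = H.card - L.card := by
        have h1 := Finset.card_le_card hK.1
        have h2 := Finset.card_le_card hK.2.1
        omega
      rw [← hcard, pow_add]
      ring
    rw [Finset.sum_congr rfl this, ← Finset.sum_mul]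
    congr 1
    rw [← Int.cast_sum, mu_sum hH hL.1]
    split <;> simp
  rw [Finset.sum_congr rfl step2]
  rw [Finset.sum_eq_single H]
  · rw [if_pos rfl, Nat.sub_self, pow_zero, one_mul, one_mul]
  · intro L _ hLne
    rw [if_neg hLne, zero_mul]
  · intro hnot
    exact absurd (by simp [hH] : H ∈ H.powerset.filter (IsthmusFree V)) hnot

lemma signed_binom (x : ℝ) {E K : Finset (Sym2 V)} (hK : K ⊆ E) :
    ∑ S ∈ E.powerset.filter (fun S => K ⊆ S), (-1:ℝ)^S.card * x^(S.card - K.card)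
      = (-1:ℝ)^K.card * (1 - x)^(E.card - K.card) := by
  have hbij : ∑ S ∈ E.powerset.filter (fun S => K ⊆ S), (-1:ℝ)^S.card * x^(S.card - K.card)
      = ∑ T ∈ (E \ K).powerset, (-1:ℝ)^(K.card + T.card) * x^T.card := by
    refine Finset.sum_nbij' (fun S => S \ K) (fun T => K ∪ T) ?_ ?_ ?_ ?_ ?_
    · intro S hS
      simp only [mem_filter, mem_powerset] at hS ⊢
      exact sdiff_subset_sdiff hS.1 subset_rfl
    · intro T hT
      simp only [mem_powerset] at hT
      simp only [mem_filter, mem_powerset]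
      exact ⟨union_subset hK (hT.trans (sdiff_subset)), subset_union_left⟩
    · intro S hS
      simp only [mem_filter, mem_powerset] at hS
      exact union_sdiff_of_subset hS.2
    · intro T hT
      simp only [mem_powerset] at hT
      show (K ∪ T) \ K = T
      exact union_sdiff_cancel_left (disjoint_of_subset_right hT sdiff_disjoint.symm)
    · intro S hS
      simp only [mem_filter, mem_powerset] at hS
      have h2 : (S \ K).card = S.card -  K.card := Finset.card_sdiff_of_subset hS.2
      show (-1:ℝ)^S.card * x^(S.card - K.card) = (-1:ℝ)^(K.card + (S \ K).card) * x^((S \ K).card)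
      rw [h2, show K.card + (S.card - K.card) = S.card from by
        have := Finset.card_le_card hS.2; omega]
  rw [hbij]
  have : ∀ T ∈ (E \ K).powerset, (-1:ℝ)^(K.card + T.card) * x^T.card
      = (-1:ℝ)^K.card * (-x)^T.card := by
    intro T _
    rw [pow_add, neg_pow x]
    ring
  rw [Finset.sum_congr rfl this, ← Finset.mul_sum]
  congr 1
  have hps : ∑ T ∈ (E \ K).powerset, (-x)^T.card
      = ((-x) + 1)^((E \ K).card) := by
    rw [show ((-x) + 1)^((E \ K).card) = ∏ _i ∈ E \ K, ((-x) + 1) from (Finset.prod_const _).symm,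
      Finset.prod_add]
    refine Finset.sum_congr rfl fun T _ => ?_
    rw [Finset.prod_const, Finset.prod_const_one, mul_one]
  rw [hps, Finset.card_sdiff_of_subset hK]
  ring_nf

/-! #### The decomposition of `Gamma Aᶜ` over isthmus-free subsets -/

lemma gamma_decomp (A : Finset F) (hA : ∀ a ∈ A, -a ∈ A) {E : Finset (Sym2 V)}
    (hE : ∀ e ∈ E, ¬ e.IsDiag) :
    ∀ n (S : Finset (Sym2 V)), S.card = n → S ⊆ E →
    Gamma V F Aᶜ S = ∑ K ∈ S.powerset.filter (IsthmusFree V),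
      (1 - (A.card : ℝ) / (Fintype.card F : ℝ)) ^ (S.card - K.card) *
      ∑ L ∈ K.powerset.filter (IsthmusFree V),
        (muPV V L K : ℝ) * (1 - (A.card : ℝ) / (Fintype.card F : ℝ)) ^ (K.card - L.card) *
          Gamma V F Aᶜ L := by
  have hAc : ∀ b ∈ Aᶜ, -b ∈ Aᶜ := by
    intro b hb
    simp only [Finset.mem_compl] at hb ⊢
    intro hc
    exact hb (by simpa using hA _ hc)
  have hf : (Fintype.card F : ℝ) ≠ 0 := Nat.cast_ne_zero.mpr Fintype.card_pos.ne'
  have hcompl : ((Aᶜ.card : ℕ) : ℝ) / (Fintype.card F : ℝ)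
      = 1 - (A.card : ℝ) / (Fintype.card F : ℝ) := by
    rw [Finset.card_compl]
    rw [Nat.cast_sub (Finset.card_le_univ A)]
    field_simp
  intro n
  induction n with
  | zero =>
    intro S hcard hSE
    have hS : S = ∅ := Finset.card_eq_zero.mp hcard
    subst hS
    have hIF : IsthmusFree V (∅ : Finset (Sym2 V)) := fun t ht => absurd ht (Finset.notMem_empty t)
    exact (mobius_inv _ (Gamma V F Aᶜ) hIF).symm
  | succ n ih =>
    intro S hcard hSE
    by_cases hIF : IsthmusFree V S
    · exact (mobius_inv _ (Gamma V F Aᶜ) hIF).symm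
    · simp only [IsthmusFree, not_forall, not_not] at hIF
      obtain ⟨t, ht, hgt⟩ := hIF
      have hdiag : ¬ t.IsDiag := hE t (hSE ht)
      induction t using Sym2.inductionOn with
      | hf a b =>
      have hab : a ≠ b := by simpa using hdiag
      have hnr := isthmus_not_reach hgt
      have hstep := gamma_bridge (B := Aᶜ) hAc hab ht hnr
      have hcard' : (S.erase s(a,b)).card = n := by
        rw [Finset.card_erase_of_mem ht, hcard]; rfl
      have hIH := ih (S.erase s(a,b)) hcard' ((Finset.erase_subset _ _).trans hSE)
      have hidx : S.powerset.filter (IsthmusFree V)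
          = (S.erase s(a,b)).powerset.filter (IsthmusFree V) := by
        ext K
        simp only [mem_filter, mem_powerset]
        constructor
        · rintro ⟨h1, h2⟩
          exact ⟨Finset.subset_erase.mpr ⟨h1, isthmusFree_notMem h2 h1 hdiag ht hgt⟩, h2⟩
        · rintro ⟨h1, h2⟩
          exact ⟨h1.trans (Finset.erase_subset _ _), h2⟩
      rw [hstep, hcompl, hIH, hidx, Finset.mul_sum]
      refine Finset.sum_congr rfl fun K hK => ?_
      simp only [mem_filter, mem_powerset] at hK
      have hKcard : K.card ≤ n := by
        have := Finset.card_le_card hK.1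
        omega
      rw [hcard, hcard', show n + 1 - K.card = (n - K.card) + 1 from by omega, pow_succ]
      ring

end GammaAux

end Aux

/-- Corollary 1: for every isthmus-free `E`,
`[Γ^A]_E = Σ_{H ∈ P_V, H ⊆ E} α^{|E|-|H|} (-1)^{|H|}
             Σ_{K ∈ P_V, K ⊆ H} μ(K,H) ᾱ^{|H|-|K|} [Γ^{Ā}]_K`. -/
theorem gamma_eq_M_gamma_compl
    (V : Type) [Fintype V] (F : Type) [Fintype F] [AddCommGroup F]
    (A : Finset F) (hA : ∀ a ∈ A, -a ∈ A)
    (E : Finset (Sym2 V)) (hE : ∀ e ∈ E, ¬ e.IsDiag) (hfree : IsthmusFree V E) :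
    Gamma V F A E
      = ∑ H ∈ E.powerset.filter (IsthmusFree V),
          ((A.card : ℝ) / (Fintype.card F : ℝ)) ^ (E.card - H.card) * (-1 : ℝ) ^ H.card *
            ∑ K ∈ H.powerset.filter (IsthmusFree V),
              (muPV V K H : ℝ) *
                (1 - (A.card : ℝ) / (Fintype.card F : ℝ)) ^ (H.card - K.card) *
                  Gamma V F Aᶜ K := by
  classical
  open Finset GammaAux in
  set r : ℝ := 1 - (A.card : ℝ) / (Fintype.card F : ℝ) with hr
  set M : Finset (Sym2 V) → ℝ := fun K =>
    ∑ L ∈ K.powerset.filter (IsthmusFree V),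
      (muPV V L K : ℝ) * r ^ (K.card - L.card) * Gamma V F Aᶜ L with hM
  have step1 := gamma_inclexcl A hA E
  have step2 : ∀ S ∈ E.powerset, (-1:ℝ)^S.card * Gamma V F Aᶜ S
      = ∑ K ∈ S.powerset.filter (IsthmusFree V),
          (-1:ℝ)^S.card * r ^ (S.card - K.card) * M K := by
    intro S hS
    simp only [mem_powerset] at hS
    rw [gamma_decomp A hA hE S.card S rfl hS, Finset.mul_sum]
    exact Finset.sum_congr rfl fun K _ => by rw [hM]; ring
  rw [step1, Finset.sum_congr rfl step2]
  rw [Finset.sum_comm' (t' := E.powerset.filter (IsthmusFree V))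
    (s' := fun K => E.powerset.filter (fun S => K ⊆ S))
    (by
      intro S K
      simp only [mem_filter, mem_powerset]
      constructor
      · rintro ⟨h1, h2, h3⟩
        exact ⟨⟨h1, h2⟩, h2.trans h1, h3⟩
      · rintro ⟨⟨h1, h2⟩, _, h3⟩
        exact ⟨h1, h2, h3⟩)]
  refine Finset.sum_congr rfl fun K hK => ?_
  simp only [mem_filter, mem_powerset] at hK
  have hinner : ∑ S ∈ E.powerset.filter (fun S => K ⊆ S),
      (-1:ℝ)^S.card * r ^ (S.card - K.card) * M K
      = ((-1:ℝ)^K.card * (1 - r)^(E.card - K.card)) * M K := by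
    rw [← signed_binom r hK.1, Finset.sum_mul]
  rw [hinner]
  simp only [hM]
  rw [show (1:ℝ) - r = (A.card : ℝ) / (Fintype.card F : ℝ) from by rw [hr]; ring]
  ring
end

section
/- (Corollary 2) Fix a nonempty isthmus-free edge set E ⊆ (V choose 2) and let g = g(E) be its girth (the length of its shortest cycle). There exists a constant C > 0, depending only on (V,E), such that for every finite additive abelian group F and every symmetric subset A ⊆ F: | [Γ^A]_E − Σ_{H ∈ P_V, H ⊆ E} (−1)^{|H|} · α^{|E|−|H|} · ᾱ^{|H|} · μ(∅,H) | ≤ C · ᾱ^{g−1}. -/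
open scoped Classical

open Finset SimpleGraph
open scoped BigOperators

/-!
Write `χ = 1_A`, `α = 𝔼 χ` and `η = 1 - χ`, so that `𝔼 η = ᾱ`. Expanding
`∏_{e ∈ E} χ = ∏_{e ∈ E} ((χ - α) + α)` over `H ⊆ E`, the term of `H` vanishes as soon as `H` has
a bridge: translating the colouring by `c` on one side of the bridge shows that the bridge factor
averages to `𝔼 (χ - α) = 0`. Expanding `χ - α = ᾱ - η` once more over `K ⊆ H`, a forest `K`
contributes exactly `ᾱ ^ |K|` (peel off one bridge at a time), and these contributions add up to
`(-1) ^ |H| ᾱ ^ |H| μ(∅, H)`, because `μ(∅, H) = (-1) ^ |H| ∑_{K ⊆ H forest} (-1) ^ |K|` on `P_V`.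
Any other `K` contains a cycle, of length at least `g`, hence a path with at least `g - 1` edges,
and as `0 ≤ η ≤ 1` its contribution is at most `ᾱ ^ (g - 1)`. There are at most `4 ^ |E|` pairs
`(H, K)`.
-/

namespace SimpleGraph

variable {V : Type*} {G : SimpleGraph V}

lemma Reachable.deleteEdges_of_not_isBridge {u v x y : V} (hb : ¬ G.IsBridge s(u, v))
    (h : G.Reachable x y) : (G.deleteEdges {s(u, v)}).Reachable x y := by
  rw [isBridge_iff, not_not] at hb
  rw [reachable_iff_reflTransGen] at h
  induction h with
  | refl => rfl
  | @tail a b _ hab ih =>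
    refine ih.trans ?_
    by_cases he : s(a, b) = s(u, v)
    · rcases Sym2.eq_iff.mp he with ⟨rfl, rfl⟩ | ⟨rfl, rfl⟩
      exacts [hb, hb.symm]
    · exact Adj.reachable (by simp [hab, he])

theorem card_connectedComponent_lt_card_deleteEdges_iff [Finite V] {u v : V} (h : G.Adj u v) :
    Nat.card G.ConnectedComponent < Nat.card (G.deleteEdges {s(u, v)}).ConnectedComponent ↔
      G.IsBridge s(u, v) := by
  set Φ := ConnectedComponent.map (Hom.ofLE (G.deleteEdges_le {s(u, v)}))
  have hsurj : Function.Surjective Φ := ConnectedComponent.surjective_map_ofLE _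
  have hinj : Function.Injective Φ ↔ ¬ G.IsBridge s(u, v) := by
    refine ⟨fun hΦ hb => hb ?_, fun hb => ?_⟩
    · refine ConnectedComponent.exact (hΦ ?_)
      simpa [Φ] using h.reachable
    · refine ConnectedComponent.ind₂ fun x y hxy => ?_
      simp only [Φ, ConnectedComponent.map_mk, ConnectedComponent.eq] at hxy ⊢
      exact hxy.deleteEdges_of_not_isBridge hb
  rw [← not_iff_not, not_lt, ← hinj]
  exact ⟨fun hle => (hsurj.bijective_of_nat_card_le hle).injective,
    fun hΦ => Nat.card_le_card_of_injective Φ hΦ⟩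

end SimpleGraph

lemma Sym2.mk_out {α : Type*} (e : Sym2 α) : s(e.out.1, e.out.2) = e := e.out_eq

section EdgeGraph

variable {V : Type*}

def edgeGraph (K : Finset (Sym2 V)) : SimpleGraph V := fromEdgeSet K

variable {K L : Finset (Sym2 V)} {t : Sym2 V} {u v : V}

lemma edgeGraph_adj : (edgeGraph K).Adj u v ↔ s(u, v) ∈ K ∧ u ≠ v := by
  simp [edgeGraph]

lemma mem_edgeSet_edgeGraph : t ∈ (edgeGraph K).edgeSet ↔ t ∈ K ∧ ¬ t.IsDiag := by
  simp [edgeGraph]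

lemma edgeGraph_mono (h : K ⊆ L) : edgeGraph K ≤ edgeGraph L :=
  fromEdgeSet_mono (by exact_mod_cast h)

lemma edgeGraph_erase (K : Finset (Sym2 V)) (t : Sym2 V) :
    edgeGraph (K.erase t) = (edgeGraph K).deleteEdges {t} := by
  simp [edgeGraph]

lemma edgeGraph_insert (K : Finset (Sym2 V)) (u v : V) :
    edgeGraph (insert s(u, v) K) = edgeGraph K ⊔ edge u v := by
  rw [edgeGraph, edgeGraph, edge, coe_insert, Set.insert_eq, fromEdgeSet_union, sup_comm]

lemma reachable_edgeGraph_of_mem (h : s(u, v) ∈ K) : (edgeGraph K).Reachable u v := by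
  obtain rfl | huv := eq_or_ne u v
  · rfl
  · exact (edgeGraph_adj.mpr ⟨h, huv⟩).reachable

lemma isBridge_of_isAcyclic (hK : (edgeGraph K).IsAcyclic) (ht : t ∈ K) (hdiag : ¬ t.IsDiag) :
    (edgeGraph K).IsBridge t :=
  isAcyclic_iff_forall_isBridge.mp hK (mem_edgeSet_edgeGraph.mpr ⟨ht, hdiag⟩)

lemma not_reachable_edgeGraph_edges {G : SimpleGraph V} {y z x w : V} (q : G.Walk y z)
    (hx : x ∉ q.support) (hxw : x ≠ w) : ¬ (edgeGraph q.edges.toFinset).Reachable x w := by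
  rintro ⟨p⟩
  cases p with
  | nil => exact hxw rfl
  | cons hadj _ =>
    exact hx (q.fst_mem_support_of_mem_edges (List.mem_toFinset.mp (edgeGraph_adj.mp hadj).1))

end EdgeGraph

lemma isthmusFree_iff_s8 {V : Type} [Fintype V] {K : Finset (Sym2 V)} (hK : ∀ e ∈ K, ¬ e.IsDiag) :
    IsthmusFree V K ↔ ∀ t ∈ K, ¬ (edgeGraph K).IsBridge t := by
  refine forall₂_congr fun t ht => ?_
  induction t using Sym2.ind with
  | _ u v =>
  have hadj : (edgeGraph K).Adj u v := edgeGraph_adj.mpr ⟨ht, by simpa using hK _ ht⟩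
  rw [cComp, cComp, gt_iff_lt, ← card_connectedComponent_lt_card_deleteEdges_iff hadj,
    ← edgeGraph_erase]
  rfl

lemma exists_isBridge_of_not_isthmusFree {V : Type} [Fintype V] {K : Finset (Sym2 V)}
    (hK : ∀ e ∈ K, ¬ e.IsDiag) (h : ¬ IsthmusFree V K) : ∃ t ∈ K, (edgeGraph K).IsBridge t := by
  simpa [isthmusFree_iff_s8 hK] using h

section ForestSignSum

variable {V : Type*} {H K : Finset (Sym2 V)} {t : Sym2 V}

noncomputable def forestSignSum (H : Finset (Sym2 V)) : ℤ :=
  ∑ K ∈ H.powerset with (edgeGraph K).IsAcyclic, (-1) ^ K.card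

lemma forestSignSum_empty : forestSignSum (∅ : Finset (Sym2 V)) = 1 := by
  rw [forestSignSum, powerset_empty, filter_singleton, if_pos (by simp [edgeGraph])]
  simp

lemma isAcyclic_edgeGraph_insert_iff (hb : (edgeGraph H).IsBridge t) (hK : K ⊆ H.erase t) :
    (edgeGraph (insert t K)).IsAcyclic ↔ (edgeGraph K).IsAcyclic := by
  induction t using Sym2.ind with
  | _ u v =>
  rw [edgeGraph_insert]
  refine isAcyclic_add_edge_iff_of_not_reachable u v fun hr => ?_
  rw [isBridge_iff, ← edgeGraph_erase] at hb
  exact hb (hr.mono (edgeGraph_mono hK))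

lemma forestSignSum_eq_zero_of_isBridge (ht : t ∈ H) (hb : (edgeGraph H).IsBridge t) :
    forestSignSum H = 0 := by
  rw [forestSignSum, sum_filter, ← insert_erase ht, sum_powerset_insert (notMem_erase t H),
    ← sum_add_distrib]
  refine sum_eq_zero fun K hK => ?_
  have hKt : K ⊆ H.erase t := mem_powerset.mp hK
  rw [isAcyclic_edgeGraph_insert_iff hb hKt,
    card_insert_of_notMem fun h => notMem_erase t H (hKt h), pow_succ]
  split_ifs <;> ring

end ForestSignSum

lemma sum_Icc_neg_one_pow_card {α : Type*} [DecidableEq α] {K H : Finset α}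
    (h : K ⊆ H) : ∑ L ∈ Icc K H, (-1 : ℤ) ^ L.card = if K = H then (-1) ^ K.card else 0 := by
  have hinj : Set.InjOn (K ∪ ·) ((H \ K).powerset : Set (Finset α)) := by
    intro M hM M' hM' hMM'
    simp only [coe_powerset, Set.mem_preimage, Set.mem_powerset_iff, coe_subset] at hM hM' hMM'
    rw [← union_sdiff_cancel_left (disjoint_of_subset_right hM disjoint_sdiff),
      ← union_sdiff_cancel_left (disjoint_of_subset_right hM' disjoint_sdiff), hMM']
  rw [Icc_eq_image_powerset h, sum_image hinj]
  calc ∑ M ∈ (H \ K).powerset, (-1 : ℤ) ^ (K ∪ M).card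
      = (-1) ^ K.card * ∑ M ∈ (H \ K).powerset, (-1 : ℤ) ^ M.card := by
        rw [mul_sum]
        refine sum_congr rfl fun M hM => ?_
        rw [card_union_of_disjoint (disjoint_of_subset_right (mem_powerset.mp hM) disjoint_sdiff),
          pow_add]
    _ = if K = H then (-1) ^ K.card else 0 := by
        have hKH : H \ K = ∅ ↔ K = H := by
          rw [sdiff_eq_empty_iff_subset]
          exact ⟨subset_antisymm h, fun h' => h' ▸ subset_refl _⟩
        rw [sum_powerset_neg_one_pow_card]
        simp only [hKH, mul_ite, mul_one, mul_zero]

lemma sum_powerset_neg_one_pow_mul_forestSignSum {V : Type*} (H : Finset (Sym2 V)) :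
    ∑ L ∈ H.powerset, (-1) ^ L.card * forestSignSum L =
      if (edgeGraph H).IsAcyclic then 1 else 0 := by
  simp_rw [forestSignSum, mul_sum]
  rw [sum_comm' (t' := H.powerset.filter fun K => (edgeGraph K).IsAcyclic)
    (s' := fun K => Icc K H) (f := fun L K => (-1 : ℤ) ^ L.card * (-1) ^ K.card)]
  · calc ∑ K ∈ H.powerset with (edgeGraph K).IsAcyclic, ∑ L ∈ Icc K H, (-1) ^ L.card * (-1) ^ K.card
        = ∑ K ∈ H.powerset with (edgeGraph K).IsAcyclic, if K = H then 1 else 0 := by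
          refine sum_congr rfl fun K hK => ?_
          rw [← sum_mul, sum_Icc_neg_one_pow_card (mem_powerset.mp (mem_filter.mp hK).1)]
          split_ifs <;> simp [← pow_add, ← two_mul, pow_mul]
      _ = if (edgeGraph H).IsAcyclic then 1 else 0 := by
          rw [sum_ite_eq']
          simp
  · intro L K
    simp only [mem_powerset, mem_filter, mem_Icc]
    exact ⟨fun ⟨hLH, hKL, hK⟩ => ⟨⟨hKL, hLH⟩, hKL.trans hLH, hK⟩,
      fun ⟨⟨hKL, hLH⟩, _, hK⟩ => ⟨hLH, hKL, hK⟩⟩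

section Mobius

variable {V : Type} [Fintype V] {H : Finset (Sym2 V)}

lemma forestSignSum_eq_zero_of_not_isthmusFree (hH : ∀ e ∈ H, ¬ e.IsDiag)
    (h : ¬ IsthmusFree V H) : forestSignSum H = 0 :=
  let ⟨_, ht, hb⟩ := exists_isBridge_of_not_isthmusFree hH h
  forestSignSum_eq_zero_of_isBridge ht hb

lemma not_isAcyclic_of_isthmusFree (hne : H.Nonempty) (hH : ∀ e ∈ H, ¬ e.IsDiag)
    (hfree : IsthmusFree V H) : ¬ (edgeGraph H).IsAcyclic := fun hac =>
  let ⟨t, ht⟩ := hne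
  (isthmusFree_iff_s8 hH).mp hfree t ht (isBridge_of_isAcyclic hac ht (hH t ht))

theorem muPV_empty_eq_neg_one_pow_mul_forestSignSum (hH : ∀ e ∈ H, ¬ e.IsDiag)
    (hfree : IsthmusFree V H) : muPV V ∅ H = (-1) ^ H.card * forestSignSum H := by
  induction H using Finset.strongInduction with
  | H H ih =>
  rcases H.eq_empty_or_nonempty with rfl | hne
  · simp [muPV, forestSignSum_empty]
  -- `forestSignSum` vanishes off `P_V`, so the recursion for `μ` may run over all `L ⊊ H`
  have hproper : ∑ L ∈ H.powerset with ∅ ⊆ L ∧ L ≠ H ∧ IsthmusFree V L, muPV V ∅ L =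
      ∑ L ∈ H.powerset.erase H, (-1) ^ L.card * forestSignSum L := by
    rw [← filter_ne', sum_filter, sum_filter]
    refine sum_congr rfl fun L hL => ?_
    have hLH := mem_powerset.mp hL
    have hL' : ∀ e ∈ L, ¬ e.IsDiag := fun e he => hH e (hLH he)
    by_cases hLH' : L = H
    · simp [hLH']
    by_cases hLfree : IsthmusFree V L
    · simp [hLH', hLfree, ih L (Finset.ssubset_iff_subset_ne.mpr ⟨hLH, hLH'⟩) hL' hLfree]
    · simp [hLfree, forestSignSum_eq_zero_of_not_isthmusFree hL' hLfree]
  have htotal := sum_powerset_neg_one_pow_mul_forestSignSum H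
  rw [if_neg (not_isAcyclic_of_isthmusFree hne hH hfree),
    ← sum_erase_add _ _ (mem_powerset_self H)] at htotal
  rw [muPV, if_neg hne.ne_empty.symm, sum_attach _ (fun L => muPV V ∅ L), hproper]
  linarith

end Mobius

section EdgeMean

variable {V F R : Type*} [AddCommGroup F] {K : Finset (Sym2 V)}

-- `e.out` orients `e`; the symmetry `A = -A` is what makes this choice irrelevant for `Gamma`.
noncomputable def edgeDiff (X : V → F) (e : Sym2 V) : F := X e.out.1 - X e.out.2

lemma edgeDiff_add_ite_reachable (X : V → F) (c : F) (a : V)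
    [DecidablePred ((edgeGraph K).Reachable a)] {e : Sym2 V} (he : e ∈ K) :
    edgeDiff (X + fun x => if (edgeGraph K).Reachable a x then c else 0) e = edgeDiff X e := by
  have hr : (edgeGraph K).Reachable e.out.1 e.out.2 :=
    reachable_edgeGraph_of_mem (by rwa [Sym2.mk_out])
  have hiff : (edgeGraph K).Reachable a e.out.1 ↔ (edgeGraph K).Reachable a e.out.2 :=
    ⟨fun h => h.trans hr, fun h => h.trans hr.symm⟩
  simp only [edgeDiff, Pi.add_apply, hiff]
  abel

variable [Fintype V] [Fintype F] [Field R] [CharZero R]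

noncomputable def edgeMean (φ : F → R) (K : Finset (Sym2 V)) : R :=
  𝔼 X : V → F, ∏ e ∈ K, φ (edgeDiff X e)

variable (φ : F → R)

@[simp]
lemma edgeMean_empty : edgeMean φ (∅ : Finset (Sym2 V)) = 1 := by
  simp [edgeMean]

lemma edgeMean_add_const (a : R) (K : Finset (Sym2 V)) :
    edgeMean (fun x => φ x + a) K = ∑ H ∈ K.powerset, a ^ (K.card - H.card) * edgeMean φ H := by
  simp only [edgeMean, prod_add, prod_const]
  rw [expect_sum_comm]
  refine sum_congr rfl fun H hH => ?_
  rw [card_sdiff_of_subset (mem_powerset.mp hH), mul_expect]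
  simp_rw [mul_comm]

lemma edgeMean_const_mul (c : R) (K : Finset (Sym2 V)) :
    edgeMean (fun x => c * φ x) K = c ^ K.card * edgeMean φ K := by
  simp only [edgeMean, prod_mul_distrib, prod_const, mul_expect]

lemma edgeMean_insert_of_not_reachable {u v : V} (h : ¬ (edgeGraph K).Reachable u v) :
    edgeMean φ (insert s(u, v) K) = (𝔼 c, φ c) * edgeMean φ K := by
  set t := s(u, v)
  rcases ht : t.out with ⟨a, b⟩
  have hab : ¬ (edgeGraph K).Reachable a b := by
    have hmk : s(a, b) = s(u, v) := by
      have h' := t.mk_out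
      rwa [ht] at h'
    rcases Sym2.eq_iff.mp hmk with ⟨rfl, rfl⟩ | ⟨rfl, rfl⟩
    exacts [h, fun h' => h h'.symm]
  have htK : t ∉ K := fun htK => h (reachable_edgeGraph_of_mem htK)
  -- translating `X` by `c` on the component of `a` only moves the difference along `t`
  let g (c : F) (x : V) : F := if (edgeGraph K).Reachable a x then c else 0
  have ht' (c : F) (X : V → F) : edgeDiff (X + g c) t = edgeDiff X t + c := by
    simp only [edgeDiff, ht, Pi.add_apply, g, if_pos (Reachable.refl a), if_neg hab]
    abel
  set P : (V → F) → R := fun X => ∏ e ∈ K, φ (edgeDiff X e)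
  have hP (c : F) (X : V → F) : P (X + g c) = P X :=
    prod_congr rfl fun e he => congrArg φ (edgeDiff_add_ite_reachable X c a he)
  calc edgeMean φ (insert t K)
      = 𝔼 _c : F, edgeMean φ (insert t K) := (Fintype.expect_const _).symm
    _ = 𝔼 c : F, 𝔼 X : V → F, φ (edgeDiff (X + g c) t) * P (X + g c) := by
      refine expect_congr rfl fun c _ => ?_
      simp only [edgeMean, prod_insert htK]
      exact (Fintype.expect_equiv (Equiv.addRight (g c)) _ _ fun X => rfl).symm
    _ = 𝔼 X : V → F, (𝔼 c : F, φ (edgeDiff X t + c)) * P X := by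
      simp only [ht', hP, expect_mul]
      exact expect_comm _ _ _
    _ = (𝔼 c, φ c) * edgeMean φ K := by
      rw [edgeMean, mul_expect]
      refine expect_congr rfl fun X _ => ?_
      rw [← Fintype.expect_equiv (Equiv.addLeft (edgeDiff X t)) _ φ fun c => rfl]
      rfl

lemma edgeMean_eq_mul_erase_of_isBridge {t : Sym2 V} (ht : t ∈ K)
    (hb : (edgeGraph K).IsBridge t) : edgeMean φ K = (𝔼 c, φ c) * edgeMean φ (K.erase t) := by
  induction t using Sym2.ind with
  | _ u v =>
  conv_lhs => rw [← insert_erase ht]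
  rw [isBridge_iff, ← edgeGraph_erase] at hb
  exact edgeMean_insert_of_not_reachable φ hb

lemma edgeMean_of_isAcyclic (hK : ∀ e ∈ K, ¬ e.IsDiag) (hac : (edgeGraph K).IsAcyclic) :
    edgeMean φ K = (𝔼 c, φ c) ^ K.card := by
  induction K using Finset.induction_on with
  | empty => simp
  | @insert t K htK ih =>
    induction t using Sym2.ind with
    | _ u v =>
    have huv : u ≠ v := by simpa using hK _ (mem_insert_self _ _)
    rw [edgeGraph_insert, isAcyclic_sup_fromEdgeSet_iff] at hac
    have hnr : ¬ (edgeGraph K).Reachable u v := fun hr =>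
      (hac.2 hr).elim huv fun hadj => htK (edgeGraph_adj.mp hadj).1
    rw [edgeMean_insert_of_not_reachable φ hnr,
      ih (fun e he => hK e (mem_insert_of_mem he)) hac.1, card_insert_of_notMem htK, pow_succ']

lemma edgeMean_edges_of_isPath {G : SimpleGraph V} {a b : V} (p : G.Walk a b) (hp : p.IsPath) :
    edgeMean φ p.edges.toFinset = (𝔼 c, φ c) ^ p.length := by
  induction p with
  | nil => simp
  | @cons x y _ hadj q ih =>
    rw [Walk.cons_isPath_iff] at hp
    rw [Walk.edges_cons, List.toFinset_cons,
      edgeMean_insert_of_not_reachable φ (not_reachable_edgeGraph_edges q hp.2 hadj.ne),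
      ih hp.1, Walk.length_cons, pow_succ']

lemma edgeMean_mean_sub_eq (η : F → R) {H : Finset (Sym2 V)} (hH : ∀ e ∈ H, ¬ e.IsDiag) :
    edgeMean (fun x => (𝔼 c, η c) - η x) H =
      (𝔼 c, η c) ^ H.card * forestSignSum H +
        ∑ K ∈ H.powerset with ¬ (edgeGraph K).IsAcyclic,
          (-1) ^ K.card * (𝔼 c, η c) ^ (H.card - K.card) * edgeMean η K := by
  set β := 𝔼 c, η c
  have hexpand : edgeMean (fun x => β - η x) H =
      ∑ K ∈ H.powerset, (-1) ^ K.card * β ^ (H.card - K.card) * edgeMean η K := by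
    have hfun : (fun x => β - η x) = fun x => -1 * η x + β := by
      funext x
      ring
    rw [hfun, edgeMean_add_const]
    refine sum_congr rfl fun K _ => ?_
    rw [edgeMean_const_mul]
    ring
  rw [hexpand, ← sum_filter_add_sum_filter_not _ fun K => (edgeGraph K).IsAcyclic]
  congr 1
  rw [forestSignSum, Int.cast_sum, mul_sum]
  refine sum_congr rfl fun K hK => ?_
  obtain ⟨hKH, hac⟩ := mem_filter.mp hK
  have hKH := mem_powerset.mp hKH
  rw [edgeMean_of_isAcyclic η (fun e he => hH e (hKH he)) hac, mul_assoc, ← pow_add,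
    Nat.sub_add_cancel (card_le_card hKH)]
  push_cast
  ring

end EdgeMean

lemma edgeMean_eq_sum_isthmusFree {V : Type} {F R : Type*} [Fintype V] [Fintype F]
    [AddCommGroup F] [Field R] [CharZero R] (φ : F → R) {E : Finset (Sym2 V)}
    (hE : ∀ e ∈ E, ¬ e.IsDiag) :
    edgeMean φ E = ∑ H ∈ E.powerset with IsthmusFree V H,
      (𝔼 c, φ c) ^ (E.card - H.card) * edgeMean (fun x => φ x - 𝔼 c, φ c) H := by
  conv_lhs => rw [show φ = fun x => (φ x - 𝔼 c, φ c) + 𝔼 c, φ c by funext x; ring]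
  rw [edgeMean_add_const]
  refine (sum_filter_of_ne fun H hH hne => ?_).symm
  by_contra hfree
  obtain ⟨t, ht, hb⟩ :=
    exists_isBridge_of_not_isthmusFree (fun e he => hE e (mem_powerset.mp hH he)) hfree
  rw [edgeMean_eq_mul_erase_of_isBridge _ ht hb, expect_sub_distrib, Fintype.expect_const,
    sub_self, zero_mul, mul_zero] at hne
  exact hne rfl

lemma edgeMean_mean_sub_eq_muPV {V : Type} {F R : Type*} [Fintype V] [Fintype F]
    [AddCommGroup F] [Field R] [CharZero R] (η : F → R) {H : Finset (Sym2 V)}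
    (hH : ∀ e ∈ H, ¬ e.IsDiag) (hfree : IsthmusFree V H) :
    edgeMean (fun x => (𝔼 c, η c) - η x) H =
      (-1) ^ H.card * (𝔼 c, η c) ^ H.card * (muPV V ∅ H : R) +
        ∑ K ∈ H.powerset with ¬ (edgeGraph K).IsAcyclic,
          (-1) ^ K.card * (𝔼 c, η c) ^ (H.card - K.card) * edgeMean η K := by
  have hsign : ((-1 : R) ^ H.card) * (-1) ^ H.card = 1 := by
    rw [← mul_pow]
    norm_num
  rw [edgeMean_mean_sub_eq η hH, muPV_empty_eq_neg_one_pow_mul_forestSignSum hH hfree]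
  push_cast
  linear_combination (-((𝔼 c, η c) ^ H.card * (forestSignSum H : R))) * hsign

lemma abs_sum_le_two_pow_card_mul {α R : Type*} [Ring R] [LinearOrder R] [IsStrictOrderedRing R]
    {s : Finset α} {S : Finset (Finset α)} (hS : S ⊆ s.powerset) {f : Finset α → R} {B : R}
    (hB₀ : 0 ≤ B) (hB : ∀ K ∈ S, |f K| ≤ B) : |∑ K ∈ S, f K| ≤ 2 ^ s.card * B := by
  calc |∑ K ∈ S, f K| ≤ ∑ K ∈ S, |f K| := abs_sum_le_sum_abs _ _
    _ ≤ S.card • B := sum_le_card_nsmul _ _ _ hB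
    _ ≤ 2 ^ s.card * B := by
      rw [nsmul_eq_mul]
      gcongr
      exact_mod_cast (card_le_card hS).trans (card_powerset s).le

section Bounds

variable {V F R : Type*} [Fintype V] [Fintype F] [AddCommGroup F]
  [Field R] [LinearOrder R] [IsStrictOrderedRing R]
  {φ : F → R} (hφ₀ : ∀ x, 0 ≤ φ x) (hφ₁ : ∀ x, φ x ≤ 1)
include hφ₀

lemma edgeMean_nonneg (K : Finset (Sym2 V)) : 0 ≤ edgeMean φ K :=
  expect_nonneg fun _ _ => prod_nonneg fun _ _ => hφ₀ _

include hφ₁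

lemma edgeMean_anti {Q K : Finset (Sym2 V)} (h : Q ⊆ K) : edgeMean φ K ≤ edgeMean φ Q := by
  refine expect_le_expect fun X _ => ?_
  rw [← prod_sdiff h]
  exact mul_le_of_le_one_left (prod_nonneg fun _ _ => hφ₀ _)
    (prod_le_one (fun _ _ => hφ₀ _) fun _ _ => hφ₁ _)

lemma edgeMean_le_pow_girth_sub_one {K E : Finset (Sym2 V)} (hKE : K ⊆ E)
    (hK : ¬ (edgeGraph K).IsAcyclic) :
    edgeMean φ K ≤ (𝔼 c, φ c) ^ ((edgeGraph E).girth - 1) := by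
  simp only [IsAcyclic, not_forall, not_not] at hK
  obtain ⟨v, c, hc⟩ := hK
  cases c with
  | nil => exact (Walk.not_isCycle_nil hc).elim
  | @cons _ y _ hadj q =>
  have hgirth : (edgeGraph E).girth ≤ q.length + 1 := by
    simpa using girth_le_length (hc.mapLe (edgeGraph_mono hKE))
  rw [Walk.cons_isCycle_iff] at hc
  have hqK : q.edges.toFinset ⊆ K := fun e he =>
    (mem_edgeSet_edgeGraph.mp (q.edges_subset_edgeSet (List.mem_toFinset.mp he))).1
  have hmean₀ : 0 ≤ 𝔼 c, φ c := expect_nonneg fun _ _ => hφ₀ _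
  have hmean₁ : 𝔼 c, φ c ≤ 1 := expect_le univ_nonempty fun _ _ => hφ₁ _
  calc edgeMean φ K ≤ edgeMean φ q.edges.toFinset := edgeMean_anti hφ₀ hφ₁ hqK
    _ = (𝔼 c, φ c) ^ q.length := edgeMean_edges_of_isPath φ q hc.1
    _ ≤ (𝔼 c, φ c) ^ ((edgeGraph E).girth - 1) := pow_le_pow_of_le_one hmean₀ hmean₁ (by omega)

lemma abs_sum_nonacyclic_le {H E : Finset (Sym2 V)} (hHE : H ⊆ E) :
    |∑ K ∈ H.powerset with ¬ (edgeGraph K).IsAcyclic,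
        (-1) ^ K.card * (𝔼 c, φ c) ^ (H.card - K.card) * edgeMean φ K| ≤
      2 ^ E.card * (𝔼 c, φ c) ^ ((edgeGraph E).girth - 1) := by
  have hmean₀ : 0 ≤ 𝔼 c, φ c := expect_nonneg fun _ _ => hφ₀ _
  have hmean₁ : 𝔼 c, φ c ≤ 1 := expect_le univ_nonempty fun _ _ => hφ₁ _
  refine abs_sum_le_two_pow_card_mul ((filter_subset _ _).trans (powerset_mono.mpr hHE))
    (by positivity) fun K hK => ?_
  obtain ⟨hKH, hK⟩ := mem_filter.mp hK
  rw [abs_mul, abs_mul, abs_pow, abs_neg, abs_one, one_pow, one_mul, abs_pow,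
    abs_of_nonneg hmean₀, abs_of_nonneg (edgeMean_nonneg hφ₀ K)]
  exact (mul_le_of_le_one_left (edgeMean_nonneg hφ₀ K) (pow_le_one₀ hmean₀ hmean₁)).trans
    (edgeMean_le_pow_girth_sub_one hφ₀ hφ₁ ((mem_powerset.mp hKH).trans hHE) hK)

end Bounds

theorem abs_edgeMean_sub_mainTerm_le {V : Type} {F R : Type*} [Fintype V] [Fintype F]
    [AddCommGroup F] [Field R] [LinearOrder R] [IsStrictOrderedRing R] {χ : F → R}
    (hχ₀ : ∀ x, 0 ≤ χ x) (hχ₁ : ∀ x, χ x ≤ 1) {E : Finset (Sym2 V)} (hE : ∀ e ∈ E, ¬ e.IsDiag) :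
    |edgeMean χ E - ∑ H ∈ E.powerset with IsthmusFree V H,
        (-1) ^ H.card * (𝔼 c, χ c) ^ (E.card - H.card) * (1 - 𝔼 c, χ c) ^ H.card *
          (muPV V ∅ H : R)| ≤
      4 ^ E.card * (1 - 𝔼 c, χ c) ^ ((edgeGraph E).girth - 1) := by
  have hsplit := edgeMean_eq_sum_isthmusFree χ hE
  set α := 𝔼 c, χ c
  set η : F → R := fun x => 1 - χ x
  have hη₀ : ∀ x, 0 ≤ η x := fun x => sub_nonneg.mpr (hχ₁ x)
  have hη₁ : ∀ x, η x ≤ 1 := fun x => sub_le_self _ (hχ₀ x)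
  have hmean : 𝔼 c, η c = 1 - α := by simp [η, α, expect_sub_distrib]
  have hcentered : (fun x => χ x - α) = fun x => (𝔼 c, η c) - η x := by
    funext x
    simp only [hmean, η]
    ring
  have hterm : ∀ H ∈ E.powerset.filter (IsthmusFree V),
      α ^ (E.card - H.card) * edgeMean (fun x => (𝔼 c, η c) - η x) H -
          (-1) ^ H.card * α ^ (E.card - H.card) * (1 - α) ^ H.card * (muPV V ∅ H : R) =
        α ^ (E.card - H.card) * ∑ K ∈ H.powerset with ¬ (edgeGraph K).IsAcyclic,
          (-1) ^ K.card * (𝔼 c, η c) ^ (H.card - K.card) * edgeMean η K := by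
    intro H hH
    obtain ⟨hHE, hfree⟩ := mem_filter.mp hH
    rw [edgeMean_mean_sub_eq_muPV η (fun e he => hE e (mem_powerset.mp hHE he)) hfree, hmean]
    ring
  have hα₀ : 0 ≤ α := expect_nonneg fun _ _ => hχ₀ _
  have hα₁ : α ≤ 1 := expect_le univ_nonempty fun _ _ => hχ₁ _
  rw [hsplit, hcentered, ← sum_sub_distrib, sum_congr rfl hterm]
  calc _ ≤ 2 ^ E.card * (2 ^ E.card * (1 - α) ^ ((edgeGraph E).girth - 1)) := by
        refine abs_sum_le_two_pow_card_mul (filter_subset _ _) (by positivity) fun H hH => ?_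
        rw [abs_mul, abs_of_nonneg (pow_nonneg hα₀ _), ← hmean]
        exact (mul_le_of_le_one_left (abs_nonneg _) (pow_le_one₀ hα₀ hα₁)).trans
          (abs_sum_nonacyclic_le hη₀ hη₁ (mem_powerset.mp (mem_filter.mp hH).1))
    _ = 4 ^ E.card * (1 - α) ^ ((edgeGraph E).girth - 1) := by
        rw [← mul_assoc, ← mul_pow]
        norm_num

lemma Gamma_eq_edgeMean {V F : Type} [Fintype V] [Fintype F] [AddCommGroup F] {A : Finset F}
    (hA : ∀ a ∈ A, -a ∈ A) (E : Finset (Sym2 V)) :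
    Gamma V F A E = edgeMean (fun c => if c ∈ A then (1 : ℝ) else 0) E := by
  have hiff (X : V → F) : (∀ e ∈ E, ∀ u w : V, e = s(u, w) → X u - X w ∈ A) ↔
      ∀ e ∈ E, edgeDiff X e ∈ A := by
    refine ⟨fun h e he => h e he _ _ e.mk_out.symm, fun h e he u w huw => ?_⟩
    have hmk : s(e.out.1, e.out.2) = s(u, w) := e.mk_out.trans huw
    rcases Sym2.eq_iff.mp hmk with ⟨hu, hw⟩ | ⟨hw, hu⟩
    · simpa [edgeDiff, hu, hw] using h e he
    · simpa [edgeDiff, hu, hw] using hA _ (h e he)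
  rw [Gamma, edgeMean, Fintype.expect_eq_sum_div_card, Fintype.card_fun,
    Nat.card_congr (Equiv.subtypeEquivRight hiff), Nat.card_eq_fintype_card, Fintype.card_subtype]
  simp only [prod_boole]
  rw [← sum_boole]
  push_cast
  congr! 3

theorem gamma_main_term_estimate_general
    (V : Type) [Fintype V]
    (E : Finset (Sym2 V)) (hE : ∀ e ∈ E, ¬ e.IsDiag) :
    ∃ C : ℝ, 0 < C ∧
      ∀ (F : Type) [Fintype F] [AddCommGroup F] (A : Finset F),
        (∀ a ∈ A, -a ∈ A) →
        |Gamma V F A E -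
            ∑ H ∈ E.powerset.filter (IsthmusFree V),
              (-1 : ℝ) ^ H.card *
                ((A.card : ℝ) / (Fintype.card F : ℝ)) ^ (E.card - H.card) *
                  (1 - (A.card : ℝ) / (Fintype.card F : ℝ)) ^ H.card * (muPV V ∅ H : ℝ)|
          ≤ C * (1 - (A.card : ℝ) / (Fintype.card F : ℝ)) ^
              ((SimpleGraph.fromEdgeSet (E : Set (Sym2 V))).girth - 1) := by
  refine ⟨4 ^ E.card, by positivity, fun F _ _ A hA => ?_⟩
  have hmean : 𝔼 c, (if c ∈ A then (1 : ℝ) else 0) = A.card / Fintype.card F := by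
    rw [Fintype.expect_eq_sum_div_card, sum_boole]
    simp
  have h := abs_edgeMean_sub_mainTerm_le (χ := fun c => if c ∈ A then (1 : ℝ) else 0)
    (fun c => by split_ifs <;> norm_num) (fun c => by split_ifs <;> norm_num) hE
  rw [hmean, ← Gamma_eq_edgeMean hA] at h
  exact h

/-- Corollary 2: for a fixed nonempty isthmus-free `E` of girth `g`,
there is `C > 0` depending only on `(V,E)` such that for every finite abelian group `F`
and symmetric `A ⊆ F`,
`|[Γ^A]_E - Σ_{H ∈ P_V, H ⊆ E} (-1)^{|H|} α^{|E|-|H|} ᾱ^{|H|} μ(∅,H)| ≤ C ᾱ^{g-1}`. -/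
theorem gamma_main_term_estimate
    (V : Type) [Fintype V]
    (E : Finset (Sym2 V)) (hne : E.Nonempty) (hE : ∀ e ∈ E, ¬ e.IsDiag)
    (hfree : IsthmusFree V E) :
    ∃ C : ℝ, 0 < C ∧
      ∀ (F : Type) [Fintype F] [AddCommGroup F] (A : Finset F),
        (∀ a ∈ A, -a ∈ A) →
        |Gamma V F A E -
            ∑ H ∈ E.powerset.filter (IsthmusFree V),
              (-1 : ℝ) ^ H.card *
                ((A.card : ℝ) / (Fintype.card F : ℝ)) ^ (E.card - H.card) *
                  (1 - (A.card : ℝ) / (Fintype.card F : ℝ)) ^ H.card * (muPV V ∅ H : ℝ)|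
          ≤ C * (1 - (A.card : ℝ) / (Fintype.card F : ℝ)) ^
              ((SimpleGraph.fromEdgeSet (E : Set (Sym2 V))).girth - 1) :=
  gamma_main_term_estimate_general V E hE
end

section
/- (Corollary 3) Let F be a finite additive abelian group with f = |F| ≥ 2. For every isthmus-free edge set E ⊆ (V choose 2), the number of proper F-colorings, i.e. maps X : V → F with X(u) ≠ X(w) for every {u,w} ∈ E, equals Σ over pairs K ⊆ H ⊆ E with K, H ∈ P_V of (−1)^{|H|} · (f−1)^{|E|−|H|} · μ(K,H) · f^{c(K)+|K|−|E|}. -/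
open scoped Classical

set_option linter.unusedSectionVars false

open SimpleGraph

variable {V : Type} 

lemma reachable_sup_edge {G : SimpleGraph V} {a b x y : V}
    (h : (G ⊔ fromEdgeSet {s(a,b)}).Reachable x y) :
    G.Reachable x y ∨ (G.Reachable x a ∧ G.Reachable b y) ∨
      (G.Reachable x b ∧ G.Reachable a y) := by
  obtain ⟨w⟩ := h
  induction w with
  | nil => exact Or.inl (Reachable.refl _)
  | cons hadj p ih =>
    rename_i u c d
    have hadj' : G.Adj u c ∨ (s(u,c) = s(a,b)) := by
      rcases hadj with h1 | h2
      · exact Or.inl h1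
      · simp only [fromEdgeSet_adj, Set.mem_singleton_iff] at h2
        exact Or.inr h2.1
    rcases hadj' with h1 | h2
    · rcases ih with h | ⟨h3, h4⟩ | ⟨h3, h4⟩
      · exact Or.inl (h1.reachable.trans h)
      · exact Or.inr (Or.inl ⟨h1.reachable.trans h3, h4⟩)
      · exact Or.inr (Or.inr ⟨h1.reachable.trans h3, h4⟩)
    · rw [Sym2.eq_iff] at h2
      rcases h2 with ⟨rfl, rfl⟩ | ⟨rfl, rfl⟩
      · rcases ih with h | ⟨h3, h4⟩ | ⟨h3, h4⟩
        · exact Or.inr (Or.inl ⟨Reachable.refl _, h⟩)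
        · exact Or.inr (Or.inl ⟨Reachable.refl _, h4⟩)
        · exact Or.inl h4
      · rcases ih with h | ⟨h3, h4⟩ | ⟨h3, h4⟩
        · exact Or.inr (Or.inr ⟨Reachable.refl _, h⟩)
        · exact Or.inl h4
        · exact Or.inr (Or.inr ⟨Reachable.refl _, h4⟩)

variable [Fintype V]

lemma pi_inj_cases {G : SimpleGraph V} {a b x y : V}
    (h : (G ⊔ fromEdgeSet {s(a,b)}).connectedComponentMk x
        = (G ⊔ fromEdgeSet {s(a,b)}).connectedComponentMk y) :
    G.connectedComponentMk x = G.connectedComponentMk y ∨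
      (G.connectedComponentMk x = G.connectedComponentMk a ∧
       G.connectedComponentMk y = G.connectedComponentMk b) ∨
      (G.connectedComponentMk x = G.connectedComponentMk b ∧
       G.connectedComponentMk y = G.connectedComponentMk a) := by
  rw [ConnectedComponent.eq] at h
  rcases reachable_sup_edge h with h | ⟨h1, h2⟩ | ⟨h1, h2⟩
  · exact Or.inl (ConnectedComponent.eq.mpr h)
  · exact Or.inr (Or.inl ⟨ConnectedComponent.eq.mpr h1, ConnectedComponent.eq.mpr h2.symm⟩)
  · exact Or.inr (Or.inr ⟨ConnectedComponent.eq.mpr h1, ConnectedComponent.eq.mpr h2.symm⟩)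

lemma pi_mk {G : SimpleGraph V} {a b : V} (x : V) :
    (ConnectedComponent.map (Hom.ofLE (le_sup_left :
        G ≤ G ⊔ fromEdgeSet {s(a,b)})) (G.connectedComponentMk x))
      = (G ⊔ fromEdgeSet {s(a,b)}).connectedComponentMk x := rfl

lemma card_cc_sup_edge_of_reachable {G : SimpleGraph V} {a b : V} (hr : G.Reachable a b) :
    Nat.card (G ⊔ fromEdgeSet {s(a,b)}).ConnectedComponent
      = Nat.card G.ConnectedComponent := by
  symm
  apply Nat.card_eq_of_bijective
    (ConnectedComponent.map (Hom.ofLE le_sup_left))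
  constructor
  · intro c d h
    obtain ⟨x, rfl⟩ := Quot.exists_rep c
    obtain ⟨y, rfl⟩ := Quot.exists_rep d
    rcases pi_inj_cases (h : _) with h | ⟨h1, h2⟩ | ⟨h1, h2⟩
    · exact h
    · exact h1.trans ((ConnectedComponent.eq.mpr hr).trans h2.symm)
    · exact h1.trans ((ConnectedComponent.eq.mpr hr.symm).trans h2.symm)
  · intro d
    obtain ⟨v, rfl⟩ := Quot.exists_rep d
    exact ⟨G.connectedComponentMk v, rfl⟩

lemma card_cc_sup_edge_of_not_reachable {G : SimpleGraph V} {a b : V} (hab : a ≠ b)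
    (hr : ¬ G.Reachable a b) :
    Nat.card (G ⊔ fromEdgeSet {s(a,b)}).ConnectedComponent + 1
      = Nat.card G.ConnectedComponent := by
  classical
  haveI : Fintype G.ConnectedComponent := Fintype.ofFinite _
  haveI : Fintype (G ⊔ fromEdgeSet {s(a,b)}).ConnectedComponent := Fintype.ofFinite _
  have key : Nat.card (G ⊔ fromEdgeSet {s(a,b)}).ConnectedComponent
      = Nat.card {c : G.ConnectedComponent // c ≠ G.connectedComponentMk b} := by
    symm
    apply Nat.card_eq_of_bijective
      (fun c => ConnectedComponent.map (Hom.ofLE le_sup_left) c.1)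
    constructor
    · rintro ⟨c, hc⟩ ⟨d, hd⟩ h
      obtain ⟨x, rfl⟩ := Quot.exists_rep c
      obtain ⟨y, rfl⟩ := Quot.exists_rep d
      apply Subtype.ext
      rcases pi_inj_cases (h : _) with h | ⟨h1, h2⟩ | ⟨h1, h2⟩
      · exact h
      · exact absurd h2 hd
      · exact absurd h1 hc
    · intro d
      obtain ⟨v, rfl⟩ := Quot.exists_rep d
      by_cases hbv : G.Reachable b v
      · refine ⟨⟨G.connectedComponentMk a, fun hc => hr (ConnectedComponent.eq.mp hc)⟩, ?_⟩
        show (G ⊔ fromEdgeSet {s(a,b)}).connectedComponentMk a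
            = (G ⊔ fromEdgeSet {s(a,b)}).connectedComponentMk v
        rw [ConnectedComponent.eq]
        have hadj : (G ⊔ fromEdgeSet {s(a,b)}).Adj a b :=
          Or.inr (by simp [hab])
        exact hadj.reachable.trans (hbv.mono le_sup_left)
      · exact ⟨⟨G.connectedComponentMk v,
          fun hc => hbv (ConnectedComponent.eq.mp hc).symm⟩, rfl⟩
  rw [key]
  rw [Nat.card_eq_fintype_card, Nat.card_eq_fintype_card]
  have h1 : Fintype.card {c : G.ConnectedComponent // c ≠ G.connectedComponentMk b}
      = Fintype.card G.ConnectedComponent - 1 := by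
    rw [Fintype.card_subtype_compl, Fintype.card_subtype_eq]
  rw [h1]
  have h2 : 1 ≤ Fintype.card G.ConnectedComponent :=
    Fintype.card_pos_iff.mpr ⟨G.connectedComponentMk b⟩
  omega

lemma fromEdgeSet_insert_eq (K : Finset (Sym2 V)) (a b : V) :
    fromEdgeSet ((insert s(a,b) K : Finset (Sym2 V)) : Set (Sym2 V))
      = fromEdgeSet (K : Set (Sym2 V)) ⊔ fromEdgeSet {s(a,b)} := by
  rw [Finset.coe_insert, Set.insert_eq, fromEdgeSet_union, sup_comm]

lemma cComp_insert_of_reachable {K : Finset (Sym2 V)} {a b : V}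
    (h : (fromEdgeSet (K : Set (Sym2 V))).Reachable a b) :
    cComp V (insert s(a,b) K) = cComp V K := by
  unfold cComp
  rw [fromEdgeSet_insert_eq]
  exact card_cc_sup_edge_of_reachable h

lemma cComp_insert_of_not_reachable {K : Finset (Sym2 V)} {a b : V} (hab : a ≠ b)
    (h : ¬ (fromEdgeSet (K : Set (Sym2 V))).Reachable a b) :
    cComp V (insert s(a,b) K) + 1 = cComp V K := by
  unfold cComp
  rw [fromEdgeSet_insert_eq]
  exact card_cc_sup_edge_of_not_reachable hab h

lemma not_reachable_of_isthmus {H : Finset (Sym2 V)} {a b : V} (hab : a ≠ b)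
    (he : s(a,b) ∈ H) (hist : cComp V (H.erase s(a,b)) > cComp V H)
    {K : Finset (Sym2 V)} (hK : K ⊆ H.erase s(a,b)) :
    ¬ (fromEdgeSet (K : Set (Sym2 V))).Reachable a b := by
  intro hr
  have hrH : (fromEdgeSet ((H.erase s(a,b) : Finset (Sym2 V)) : Set (Sym2 V))).Reachable a b :=
    hr.mono (fromEdgeSet_mono (by exact_mod_cast hK))
  have := cComp_insert_of_reachable hrH
  rw [Finset.insert_erase he] at this
  omega

variable {F : Type} [Fintype F] [AddCommGroup F]

lemma const_on_reachable {K : Finset (Sym2 V)} (X : V → F)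
    (hX : ∀ e ∈ K, ∀ u w : V, e = s(u,w) → X u = X w) {v w : V}
    (h : (fromEdgeSet (K : Set (Sym2 V))).Reachable v w) : X v = X w := by
  obtain ⟨p⟩ := h
  induction p with
  | nil => rfl
  | cons hadj p ih =>
    rename_i u c d
    rw [fromEdgeSet_adj] at hadj
    exact (hX _ (by exact_mod_cast hadj.1) u c rfl).trans ih

lemma card_const (K : Finset (Sym2 V)) :
    Nat.card {X : V → F // ∀ e ∈ K, ∀ u w : V, e = s(u,w) → X u = X w}
      = Fintype.card F ^ cComp V K := by
  have hcong : {X : V → F // ∀ e ∈ K, ∀ u w : V, e = s(u,w) → X u = X w}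
      ≃ ((fromEdgeSet (K : Set (Sym2 V))).ConnectedComponent → F) := by
    refine ⟨fun X => SimpleGraph.ConnectedComponent.lift X.1
        (fun v w p _ => const_on_reachable X.1 X.2 p.reachable),
      fun g => ⟨fun v => g ((fromEdgeSet (K : Set (Sym2 V))).connectedComponentMk v), ?_⟩,
      ?_, ?_⟩
    · rintro e he u w rfl
      by_cases huw : u = w
      · rw [huw]
      · have : (fromEdgeSet (K : Set (Sym2 V))).Adj u w := by
          rw [fromEdgeSet_adj]; exact ⟨by exact_mod_cast he, huw⟩
        exact congrArg g (SimpleGraph.ConnectedComponent.eq.mpr this.reachable)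
    · rintro ⟨X, hX⟩
      rfl
    · intro g
      funext c
      induction c using SimpleGraph.ConnectedComponent.ind with
      | _ v => rfl
  rw [Nat.card_congr hcong, Nat.card_fun, Nat.card_eq_fintype_card, cComp]

lemma whitney (E : Finset (Sym2 V)) :
    (Nat.card {X : V → F // ∀ e ∈ E, ∀ u w : V, e = s(u,w) → X u ≠ X w} : ℝ)
      = ∑ K ∈ E.powerset, (-1:ℝ)^K.card * (Fintype.card F : ℝ)^(cComp V K) := by
  classical
  have h1 : (Nat.card {X : V → F // ∀ e ∈ E, ∀ u w : V, e = s(u,w) → X u ≠ X w} : ℝ)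
      = ∑ X : V → F,
          if (∀ e ∈ E, ∀ u w : V, e = s(u,w) → X u ≠ X w) then (1:ℝ) else 0 := by
    rw [Finset.sum_boole, Nat.card_eq_fintype_card, Fintype.card_subtype]
  rw [h1]
  have h2 : ∀ X : V → F,
      (if (∀ e ∈ E, ∀ u w : V, e = s(u,w) → X u ≠ X w) then (1:ℝ) else 0)
        = ∏ e ∈ E, ((- if (∀ u w : V, e = s(u,w) → X u = X w) then (1:ℝ) else 0) + 1) := by
    intro X
    have : ∀ e : Sym2 V,
        ((- if (∀ u w : V, e = s(u,w) → X u = X w) then (1:ℝ) else 0) + 1)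
          = if ¬ (∀ u w : V, e = s(u,w) → X u = X w) then (1:ℝ) else 0 := by
      intro e
      by_cases h : (∀ u w : V, e = s(u,w) → X u = X w)
      · rw [if_pos h, if_neg (not_not_intro h)]; ring
      · rw [if_neg h, if_pos h]; ring
    simp_rw [this]
    rw [Finset.prod_boole]
    congr 1
    apply propext
    constructor
    · intro h e he hq
      induction e using Sym2.inductionOn with
      | hf x y => exact h _ he x y rfl (hq x y rfl)
    · intro h e he u w hew
      subst hew
      intro heq
      refine h _ he ?_
      intro u' w' he'
      rw [Sym2.eq_iff] at he'
      rcases he' with ⟨h1, h2⟩ | ⟨h1, h2⟩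
      · rw [← h1, ← h2]; exact heq
      · rw [← h1, ← h2]; exact heq.symm
  simp_rw [h2]
  have h3 : ∀ X : V → F, ∏ e ∈ E,
      ((- if (∀ u w : V, e = s(u,w) → X u = X w) then (1:ℝ) else 0) + 1)
      = ∑ K ∈ E.powerset, (-1:ℝ)^K.card *
          (if (∀ e ∈ K, ∀ u w : V, e = s(u,w) → X u = X w) then (1:ℝ) else 0) := by
    intro X
    rw [Finset.prod_add]
    refine Finset.sum_congr rfl fun K hK => ?_
    rw [Finset.prod_const_one, mul_one]
    have hfac : ∀ i ∈ K, (-(if (∀ u w : V, i = s(u,w) → X u = X w) then (1:ℝ) else 0))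
        = (-1) * (if (∀ u w : V, i = s(u,w) → X u = X w) then (1:ℝ) else 0) :=
      fun i _ => (neg_one_mul _).symm
    rw [Finset.prod_congr rfl hfac, Finset.prod_mul_distrib, Finset.prod_const,
      Finset.prod_boole]
    split_ifs <;> rfl
  simp_rw [h3]
  rw [Finset.sum_comm]
  refine Finset.sum_congr rfl fun K hK => ?_
  rw [← Finset.mul_sum, Finset.sum_boole]
  congr 1
  have := card_const (V := V) (F := F) K
  rw [Nat.card_eq_fintype_card, Fintype.card_subtype] at this
  rw [this]
  push_cast
  ring

noncomputable def qR (V : Type) [Fintype V] (f : ℝ) (K : Finset (Sym2 V)) : ℝ :=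
  f ^ (cComp V K + K.card)

noncomputable def tR (V : Type) [Fintype V] (f : ℝ) (H : Finset (Sym2 V)) : ℝ :=
  ∑ K ∈ H.powerset, (-1:ℝ)^K.card * qR V f K

noncomputable def rR (V : Type) [Fintype V] (f : ℝ) (H : Finset (Sym2 V)) : ℝ :=
  ∑ K ∈ H.powerset.filter (IsthmusFree V), (muPV V K H : ℝ) * qR V f K

lemma tR_eq_zero {H : Finset (Sym2 V)} {t : Sym2 V} (f : ℝ) (ht : t ∈ H) (hd : ¬ t.IsDiag)
    (hist : cComp V (H.erase t) > cComp V H) : tR V f H = 0 := by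
  induction t using Sym2.inductionOn with
  | hf a b =>
  have hab : a ≠ b := by simpa using hd
  have hnot : s(a,b) ∉ H.erase s(a,b) := Finset.notMem_erase _ _
  have hH : H = insert s(a,b) (H.erase s(a,b)) := (Finset.insert_erase ht).symm
  rw [tR, hH, Finset.sum_powerset_insert hnot]
  have hterm : ∀ K ∈ (H.erase s(a,b)).powerset,
      (-1:ℝ)^(insert s(a,b) K).card * qR V f (insert s(a,b) K)
        = - ((-1:ℝ)^K.card * qR V f K) := by
    intro K hK
    rw [Finset.mem_powerset] at hK
    have hKnot : s(a,b) ∉ K := fun h => hnot (hK h)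
    have hcc : cComp V (insert s(a,b) K) + 1 = cComp V K :=
      cComp_insert_of_not_reachable hab (not_reachable_of_isthmus hab ht hist hK)
    rw [qR, qR, Finset.card_insert_of_notMem hKnot]
    have hexp : cComp V K + K.card = (cComp V (insert s(a,b) K) + (K.card + 1)) := by omega
    rw [hexp, pow_succ]
    ring
  rw [Finset.sum_congr rfl hterm]
  simp

lemma sum_neg_one_pow (T : Finset (Sym2 V)) :
    ∑ S ∈ T.powerset, (-1:ℝ)^S.card = if T = ∅ then 1 else 0 := by
  have h := Finset.prod_add (fun _ => (-1:ℝ)) (fun _ => (1:ℝ)) T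
  simp only [Finset.prod_const, Finset.prod_const_one, mul_one, one_pow, neg_add_cancel] at h
  rw [← h, zero_pow_eq]
  simp [Finset.card_eq_zero]

lemma sum_pow_card (T : Finset (Sym2 V)) (c : ℝ) :
    ∑ S ∈ T.powerset, (c-1)^(T.card - S.card) = c^T.card := by
  have h := Finset.prod_add (fun _ => (1:ℝ)) (fun _ => (c-1:ℝ)) T
  simp only [Finset.prod_const, Finset.prod_const_one, one_pow, one_mul] at h
  have h2 : (1 + (c - 1)) = c := by ring
  rw [h2] at h
  calc ∑ S ∈ T.powerset, (c-1)^(T.card - S.card)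
      = ∑ S ∈ T.powerset, (c-1)^((T \ S).card) := by
        refine Finset.sum_congr rfl fun S hS => ?_
        rw [Finset.mem_powerset] at hS
        rw [Finset.card_sdiff_of_subset hS]
    _ = c ^ T.card := h.symm

lemma sum_tR (f : ℝ) (H : Finset (Sym2 V)) :
    ∑ L ∈ H.powerset, (-1:ℝ)^L.card * tR V f L = qR V f H := by
  unfold tR
  simp_rw [Finset.mul_sum]
  rw [Finset.sum_comm' (t' := H.powerset)
    (s' := fun K => H.powerset.filter (fun L => K ⊆ L))
    (by
      intro L K
      simp only [Finset.mem_powerset, Finset.mem_filter]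
      constructor
      · rintro ⟨h1, h2⟩; exact ⟨⟨h1, h2⟩, h2.trans h1⟩
      · rintro ⟨⟨h1, h2⟩, h3⟩; exact ⟨h1, h2⟩)]
  have hK : ∀ K ∈ H.powerset,
      ∑ L ∈ H.powerset.filter (fun L => K ⊆ L), (-1:ℝ)^L.card * ((-1:ℝ)^K.card * qR V f K)
        = (if K = H then 1 else 0) * qR V f K := by
    intro K hK
    rw [Finset.mem_powerset] at hK
    rw [← Finset.sum_mul]
    have hbij : ∑ L ∈ H.powerset.filter (fun L => K ⊆ L), (-1:ℝ)^L.card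
        = ∑ S ∈ (H \ K).powerset, (-1:ℝ)^(K ∪ S).card := by
      apply Finset.sum_nbij' (i := fun L => L \ K) (j := fun S => K ∪ S)
      · intro L hL
        simp only [Finset.mem_filter, Finset.mem_powerset] at hL ⊢
        exact Finset.sdiff_subset_sdiff hL.1 (le_refl _)
      · intro S hS
        simp only [Finset.mem_filter, Finset.mem_powerset] at hS ⊢
        exact ⟨Finset.union_subset hK (hS.trans Finset.sdiff_subset), Finset.subset_union_left⟩
      · intro L hL
        simp only [Finset.mem_filter, Finset.mem_powerset] at hL
        rw [Finset.union_sdiff_of_subset hL.2]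
      · intro S hS
        simp only [Finset.mem_powerset] at hS
        rw [Finset.union_sdiff_cancel_left]
        exact Finset.disjoint_left.mpr fun {x} hxK hxS => (Finset.mem_sdiff.mp (hS hxS)).2 hxK
      · intro L hL
        simp only [Finset.mem_filter, Finset.mem_powerset] at hL
        rw [Finset.union_sdiff_of_subset hL.2]
    have hcard : ∀ S ∈ (H \ K).powerset, (-1:ℝ)^(K ∪ S).card
        = (-1:ℝ)^K.card * (-1:ℝ)^S.card := by
      intro S hS
      rw [Finset.mem_powerset] at hS
      have hdisj : Disjoint K S := by
        refine Finset.disjoint_left.mpr fun {x} hxK hxS => ?_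
        exact (Finset.mem_sdiff.mp (hS hxS)).2 hxK
      rw [Finset.card_union_of_disjoint hdisj, pow_add]
    have hsum : ∑ L ∈ H.powerset.filter (fun L => K ⊆ L), (-1:ℝ)^L.card
        = (-1:ℝ)^K.card * (if K = H then 1 else 0) := by
      rw [hbij, Finset.sum_congr rfl hcard, ← Finset.mul_sum, sum_neg_one_pow]
      congr 1
      by_cases hKH : K = H
      · subst hKH; simp
      · rw [if_neg hKH, if_neg ?_]
        intro hemp
        rw [Finset.sdiff_eq_empty_iff_subset] at hemp
        exact hKH (subset_antisymm hK hemp)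
    rw [hsum]
    have h1 : (-1:ℝ)^K.card * (-1:ℝ)^K.card = 1 := by
      rw [← pow_add]
      exact Even.neg_one_pow ⟨K.card, rfl⟩
    calc ((-1:ℝ)^K.card * (if K = H then 1 else 0)) * ((-1:ℝ)^K.card * qR V f K)
        = ((-1:ℝ)^K.card * (-1:ℝ)^K.card) * ((if K = H then (1:ℝ) else 0) * qR V f K) := by
          ring
      _ = (if K = H then 1 else 0) * qR V f K := by rw [h1, one_mul]
  rw [Finset.sum_congr rfl hK]
  simp_rw [ite_mul, one_mul, zero_mul]
  rw [Finset.sum_ite_eq' H.powerset H (qR V f), if_pos (Finset.mem_powerset_self H)]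

lemma mu_self (K : Finset (Sym2 V)) : muPV V K K = 1 := by rw [muPV]; simp

lemma mu_spec {K H : Finset (Sym2 V)} (hKH : K ≠ H) :
    muPV V K H = - ∑ L ∈ (H.powerset.filter (fun L => K ⊆ L ∧ L ≠ H ∧ IsthmusFree V L)),
      muPV V K L := by
  rw [muPV, if_neg hKH]
  congr 1
  exact Finset.sum_attach _ _

lemma mu_sum_eq {K H : Finset (Sym2 V)} (hKH : K ⊆ H) (hH : IsthmusFree V H) :
    ∑ L ∈ H.powerset.filter (fun L => K ⊆ L ∧ IsthmusFree V L), muPV V K L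
      = if K = H then 1 else 0 := by
  classical
  have hHs : H ∈ H.powerset.filter (fun L => K ⊆ L ∧ IsthmusFree V L) := by
    simp only [Finset.mem_filter, Finset.mem_powerset]
    exact ⟨le_refl _, hKH, hH⟩
  by_cases hc : K = H
  · subst hc
    rw [if_pos rfl]
    have hset : K.powerset.filter (fun L => K ⊆ L ∧ IsthmusFree V L) = {K} := by
      apply Finset.eq_singleton_iff_unique_mem.mpr
      refine ⟨hHs, fun L hL => ?_⟩
      simp only [Finset.mem_filter, Finset.mem_powerset] at hL
      exact subset_antisymm hL.1 hL.2.1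
    rw [hset, Finset.sum_singleton, mu_self]
  · rw [if_neg hc, ← Finset.add_sum_erase _ _ hHs]
    have herase : (H.powerset.filter (fun L => K ⊆ L ∧ IsthmusFree V L)).erase H
        = H.powerset.filter (fun L => K ⊆ L ∧ L ≠ H ∧ IsthmusFree V L) := by
      ext L
      simp only [Finset.mem_erase, Finset.mem_filter, Finset.mem_powerset]
      tauto
    rw [herase, mu_spec hc]
    ring

lemma sum_rR (f : ℝ) {H : Finset (Sym2 V)} (hH : IsthmusFree V H) :
    ∑ L ∈ H.powerset.filter (IsthmusFree V), rR V f L = qR V f H := by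
  unfold rR
  rw [Finset.sum_comm' (t' := H.powerset.filter (IsthmusFree V))
    (s' := fun K => H.powerset.filter (fun L => K ⊆ L ∧ IsthmusFree V L))
    (by
      intro L K
      simp only [Finset.mem_filter, Finset.mem_powerset]
      constructor
      · rintro ⟨⟨h1, h2⟩, h3, h4⟩
        exact ⟨⟨h1, h3, h2⟩, h3.trans h1, h4⟩
      · rintro ⟨⟨h1, h2, h3⟩, h4, h5⟩
        exact ⟨⟨h1, h3⟩, h2, h5⟩)]
  have hterm : ∀ K ∈ H.powerset.filter (IsthmusFree V),
      ∑ L ∈ H.powerset.filter (fun L => K ⊆ L ∧ IsthmusFree V L),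
        (muPV V K L : ℝ) * qR V f K
      = (if K = H then 1 else 0) * qR V f K := by
    intro K hK
    simp only [Finset.mem_filter, Finset.mem_powerset] at hK
    rw [← Finset.sum_mul]
    congr 1
    have hmu := mu_sum_eq hK.1 hH
    by_cases h : K = H
    · rw [if_pos h]; rw [if_pos h] at hmu; exact_mod_cast hmu
    · rw [if_neg h]; rw [if_neg h] at hmu; exact_mod_cast hmu
  rw [Finset.sum_congr rfl hterm]
  simp_rw [ite_mul, one_mul, zero_mul]
  rw [Finset.sum_ite_eq' _ H (qR V f)]
  rw [if_pos]
  simp only [Finset.mem_filter, Finset.mem_powerset]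
  exact ⟨le_refl _, hH⟩

lemma tR_eq_rR (f : ℝ) : ∀ (H : Finset (Sym2 V)), (∀ e ∈ H, ¬ e.IsDiag) →
    IsthmusFree V H → (-1:ℝ)^H.card * tR V f H = rR V f H := by
  intro H
  induction H using Finset.strongInduction with
  | _ H ih =>
  intro hd hH
  have ht : ∑ L ∈ H.powerset.filter (IsthmusFree V), (-1:ℝ)^L.card * tR V f L
      = qR V f H := by
    rw [← sum_tR f H]
    apply Finset.sum_filter_of_ne
    intro L hL hne
    by_contra hIF
    unfold IsthmusFree at hIF
    push_neg at hIF
    obtain ⟨t, htL, hist⟩ := hIF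
    rw [Finset.mem_powerset] at hL
    rw [tR_eq_zero f htL (hd t (hL htL)) hist, mul_zero] at hne
    exact hne rfl
  have hr := sum_rR f hH
  have hHs : H ∈ H.powerset.filter (IsthmusFree V) := by
    simp only [Finset.mem_filter, Finset.mem_powerset]
    exact ⟨le_refl _, hH⟩
  rw [← Finset.add_sum_erase _ _ hHs] at ht hr
  have hsame : ∀ L ∈ (H.powerset.filter (IsthmusFree V)).erase H,
      (-1:ℝ)^L.card * tR V f L = rR V f L := by
    intro L hL
    simp only [Finset.mem_erase, Finset.mem_filter, Finset.mem_powerset] at hL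
    exact ih L (lt_of_le_of_ne hL.2.1 hL.1) (fun e he => hd e (hL.2.1 he)) hL.2.2
  rw [Finset.sum_congr rfl hsame] at ht
  linarith [ht, hr]

lemma sum_filter_pow (E K : Finset (Sym2 V)) (hK : K ⊆ E) (c : ℝ) :
    ∑ H ∈ E.powerset.filter (fun H => K ⊆ H), (c-1)^(E.card - H.card)
      = c^(E.card - K.card) := by
  have hbij : ∑ H ∈ E.powerset.filter (fun H => K ⊆ H), (c-1)^(E.card - H.card)
      = ∑ S ∈ (E \ K).powerset, (c-1)^(E.card - (K ∪ S).card) := by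
    apply Finset.sum_nbij' (i := fun L => L \ K) (j := fun S => K ∪ S)
    · intro L hL
      simp only [Finset.mem_filter, Finset.mem_powerset] at hL ⊢
      exact Finset.sdiff_subset_sdiff hL.1 (le_refl _)
    · intro S hS
      simp only [Finset.mem_filter, Finset.mem_powerset] at hS ⊢
      exact ⟨Finset.union_subset hK (hS.trans Finset.sdiff_subset), Finset.subset_union_left⟩
    · intro L hL
      simp only [Finset.mem_filter, Finset.mem_powerset] at hL
      rw [Finset.union_sdiff_of_subset hL.2]
    · intro S hS
      simp only [Finset.mem_powerset] at hS
      rw [Finset.union_sdiff_cancel_left]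
      exact Finset.disjoint_left.mpr fun {x} hxK hxS => (Finset.mem_sdiff.mp (hS hxS)).2 hxK
    · intro L hL
      simp only [Finset.mem_filter, Finset.mem_powerset] at hL
      rw [Finset.union_sdiff_of_subset hL.2]
  rw [hbij]
  have hcongr : ∀ S ∈ (E \ K).powerset,
      (c-1)^(E.card - (K ∪ S).card) = (c-1)^((E \ K).card - S.card) := by
    intro S hS
    rw [Finset.mem_powerset] at hS
    have hdisj : Disjoint K S :=
      Finset.disjoint_left.mpr fun {x} hxK hxS => (Finset.mem_sdiff.mp (hS hxS)).2 hxK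
    rw [Finset.card_union_of_disjoint hdisj]
    congr 1
    have h1 : (E \ K).card = E.card - K.card := Finset.card_sdiff_of_subset hK
    have h2 : S.card ≤ (E \ K).card := Finset.card_le_card hS
    have h3 : K.card ≤ E.card := Finset.card_le_card hK
    omega
  rw [Finset.sum_congr rfl hcongr, sum_pow_card]
  congr 1
  rw [Finset.card_sdiff_of_subset hK]

theorem chromatic_eq_M_sum'
    (hf : 2 ≤ Fintype.card F)
    (E : Finset (Sym2 V)) (hE : ∀ e ∈ E, ¬ e.IsDiag) (hfree : IsthmusFree V E) :
    (Nat.card {X : V → F // ∀ e ∈ E, ∀ u w : V, e = s(u, w) → X u ≠ X w} : ℝ)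
      = ∑ H ∈ E.powerset.filter (IsthmusFree V),
          ∑ K ∈ H.powerset.filter (IsthmusFree V),
            (-1 : ℝ) ^ H.card * ((Fintype.card F : ℝ) - 1) ^ (E.card - H.card) *
              (muPV V K H : ℝ) *
                (Fintype.card F : ℝ) ^ (cComp V K + K.card) /
                  (Fintype.card F : ℝ) ^ E.card := by
  classical
  rw [whitney E]
  set f : ℝ := (Fintype.card F : ℝ) with hfdef
  have hf0 : f ≠ 0 := by
    have h2 : (2:ℝ) ≤ f := by rw [hfdef]; exact_mod_cast hf
    linarith
  have hfE : f ^ E.card ≠ 0 := pow_ne_zero _ hf0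
  have hmain1 : ∑ H ∈ E.powerset, (f-1)^(E.card - H.card) * tR V f H
      = (∑ K ∈ E.powerset, (-1:ℝ)^K.card * f^(cComp V K)) * f^E.card := by
    unfold tR
    simp_rw [Finset.mul_sum]
    rw [Finset.sum_comm' (t' := E.powerset)
      (s' := fun K => E.powerset.filter (fun H => K ⊆ H))
      (by
        intro H K
        simp only [Finset.mem_powerset, Finset.mem_filter]
        constructor
        · rintro ⟨h1, h2⟩; exact ⟨⟨h1, h2⟩, h2.trans h1⟩
        · rintro ⟨⟨h1, h2⟩, h3⟩; exact ⟨h1, h2⟩)]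
    rw [Finset.sum_mul]
    refine Finset.sum_congr rfl fun K hK => ?_
    rw [Finset.mem_powerset] at hK
    rw [← Finset.sum_mul, sum_filter_pow E K hK f, qR]
    have hexp : (cComp V K + K.card) + (E.card - K.card) = cComp V K + E.card := by
      have := Finset.card_le_card hK; omega
    calc f^(E.card-K.card) * ((-1:ℝ)^K.card * f^(cComp V K + K.card))
        = (-1:ℝ)^K.card * f^((cComp V K + K.card) + (E.card - K.card)) := by
          rw [pow_add]; ring
      _ = (-1:ℝ)^K.card * f^(cComp V K) * f^(E.card) := by
          rw [hexp, pow_add]; ring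
  have hmain2 : ∑ H ∈ E.powerset.filter (IsthmusFree V), (f-1)^(E.card - H.card) * tR V f H
      = ∑ H ∈ E.powerset, (f-1)^(E.card - H.card) * tR V f H := by
    apply Finset.sum_filter_of_ne
    intro H hH hne
    by_contra hIF
    unfold IsthmusFree at hIF
    push_neg at hIF
    obtain ⟨t, htH, hist⟩ := hIF
    rw [Finset.mem_powerset] at hH
    rw [tR_eq_zero f htH (hE t (hH htH)) hist, mul_zero] at hne
    exact hne rfl
  have htr : ∀ H ∈ E.powerset.filter (IsthmusFree V),
      (-1:ℝ)^H.card * rR V f H = tR V f H := by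
    intro H hH
    simp only [Finset.mem_filter, Finset.mem_powerset] at hH
    have h1 := tR_eq_rR f H (fun e he => hE e (hH.1 he)) hH.2
    have hsq : (-1:ℝ)^H.card * ((-1:ℝ)^H.card) = 1 := by
      rw [← pow_add]; exact Even.neg_one_pow ⟨H.card, rfl⟩
    calc (-1:ℝ)^H.card * rR V f H = (-1:ℝ)^H.card * ((-1:ℝ)^H.card * tR V f H) := by
          rw [h1]
      _ = ((-1:ℝ)^H.card * (-1:ℝ)^H.card) * tR V f H := by ring
      _ = tR V f H := by rw [hsq, one_mul]
  have hR : ∀ H ∈ E.powerset.filter (IsthmusFree V),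
      (∑ K ∈ H.powerset.filter (IsthmusFree V),
        (-1:ℝ)^H.card * (f - 1)^(E.card - H.card) * (muPV V K H : ℝ)
          * f^(cComp V K + K.card) / f^E.card)
      = (f-1)^(E.card - H.card) * tR V f H / f^E.card := by
    intro H hH
    rw [← Finset.sum_div]
    rw [← htr H hH]
    congr 1
    rw [rR, Finset.mul_sum, Finset.mul_sum]
    refine Finset.sum_congr rfl fun K hK => ?_
    rw [qR]
    ring
  rw [Finset.sum_congr rfl hR, ← Finset.sum_div, hmain2, hmain1]
  rw [mul_div_assoc, div_self hfE, mul_one]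

/-- Corollary 3: for `f = |F| ≥ 2` and an isthmus-free `E`, the number of
proper `F`-colorings of `(V,E)` equals
`Σ_{K ⊆ H ⊆ E, K,H ∈ P_V} (-1)^{|H|} (f-1)^{|E|-|H|} μ(K,H) f^{c(K)+|K|-|E|}`. -/
theorem chromatic_eq_M_sum
    (V : Type) [Fintype V] (F : Type) [Fintype F] [AddCommGroup F]
    (hf : 2 ≤ Fintype.card F)
    (E : Finset (Sym2 V)) (hE : ∀ e ∈ E, ¬ e.IsDiag) (hfree : IsthmusFree V E) :
    (Nat.card {X : V → F // ∀ e ∈ E, ∀ u w : V, e = s(u, w) → X u ≠ X w} : ℝ)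
      = ∑ H ∈ E.powerset.filter (IsthmusFree V),
          ∑ K ∈ H.powerset.filter (IsthmusFree V),
            (-1 : ℝ) ^ H.card * ((Fintype.card F : ℝ) - 1) ^ (E.card - H.card) *
              (muPV V K H : ℝ) *
                (Fintype.card F : ℝ) ^ (cComp V K + K.card) /
                  (Fintype.card F : ℝ) ^ E.card := by
  exact chromatic_eq_M_sum' hf E hE hfree
end

section
/- (Triangle reciprocity) For any finite additive abelian group F with f = |F| and any symmetric subset A ⊆ F with Ā = F \ A and ᾱ = |Ā|/f: f^{−3}·|{(x,y,z) ∈ F³ : x−y ∈ A, y−z ∈ A, x−z ∈ A}| + f^{−3}·|{(x,y,z) ∈ F³ : x−y ∈ Ā, y−z ∈ Ā, x−z ∈ Ā}| = 1 − 3ᾱ + 3ᾱ². -/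
/-!
Write `χ` for the indicator of `Ā`, so that `1 - χ` is the indicator of `A`. The substitution
`u = x - y`, `v = y - z` turns each triangle count into `f * ∑_{u,v} ψ u * ψ v * ψ (u + v)` for the
relevant indicator `ψ`. In the sum of the expansions for `ψ = χ` and `ψ = 1 - χ` the cubic terms
cancel, and every remaining double sum factors, after a translation, into copies of `f` and
`∑ χ = |Ā|`, giving `f³ - 3 f² |Ā| + 3 f |Ā|²`.
-/

open Finset

variable {G R : Type*} [AddCommGroup G] [Fintype G] [CommRing R]

def schurSum (χ : G → R) : R :=
  ∑ u, ∑ v, χ u * χ v * χ (u + v)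

lemma sum_add_left (χ : G → R) (c : G) : ∑ v, χ (c + v) = ∑ v, χ v :=
  Fintype.sum_equiv (Equiv.addLeft c) _ _ fun _ => rfl

lemma schurSum_add_schurSum_one_sub (χ : G → R) :
    schurSum χ + schurSum (1 - χ) =
      Fintype.card G ^ 2 - 3 * Fintype.card G * ∑ v, χ v + 3 * (∑ v, χ v) ^ 2 := by
  have htranslate (u : G) : ∑ v, χ (u + v) = ∑ v, χ v := sum_add_left χ u
  have hshifted_pair : ∑ u, ∑ v, χ v * χ (u + v) = (∑ v, χ v) ^ 2 := by
    rw [sum_comm]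
    simp_rw [add_comm _ (_ : G), ← mul_sum, htranslate, ← sum_mul, sq]
  calc schurSum χ + schurSum (1 - χ)
      = ∑ u, ∑ v, (1 - χ u - χ v - χ (u + v) + χ u * χ v + χ u * χ (u + v)
          + χ v * χ (u + v)) := by
        simp only [schurSum, ← sum_add_distrib, Pi.sub_apply, Pi.one_apply]
        exact sum_congr rfl fun u _ => sum_congr rfl fun v _ => by ring
    _ = Fintype.card G ^ 2 - 3 * Fintype.card G * ∑ v, χ v + 3 * (∑ v, χ v) ^ 2 := by
        simp only [sum_add_distrib, sum_sub_distrib, hshifted_pair, ← mul_sum, ← sum_mul, htranslate, sum_const,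
          card_univ, nsmul_eq_mul]
        ring

lemma sum_triple_sub_sub (φ : G → G → R) :
    ∑ p : G × G × G, φ (p.1 - p.2.1) (p.2.1 - p.2.2) = Fintype.card G * ∑ u, ∑ v, φ u v := by
  have h (y : G) : ∑ x, ∑ z, φ (x - y) (y - z) = ∑ u, ∑ v, φ u v :=
    Fintype.sum_equiv (Equiv.subRight y) _ _ fun _ =>
      Fintype.sum_equiv (Equiv.subLeft y) _ _ fun _ => rfl
  simp only [Fintype.sum_prod_type]
  rw [sum_comm]
  simp [h]

lemma sum_triangle_eq_card_mul_schurSum (χ : G → R) :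
    ∑ p : G × G × G, χ (p.1 - p.2.1) * χ (p.2.1 - p.2.2) * χ (p.1 - p.2.2) =
      Fintype.card G * schurSum χ := by
  have h (p : G × G × G) : p.1 - p.2.2 = (p.1 - p.2.1) + (p.2.1 - p.2.2) :=
    (sub_add_sub_cancel _ _ _).symm
  simp_rw [h]
  exact sum_triple_sub_sub fun u v => χ u * χ v * χ (u + v)

lemma natCard_triangles_eq_card_mul_schurSum [DecidableEq G] (B : Finset G) :
    (Nat.card {p : G × G × G // p.1 - p.2.1 ∈ B ∧ p.2.1 - p.2.2 ∈ B ∧ p.1 - p.2.2 ∈ B} : R) =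
      Fintype.card G * schurSum fun x => if x ∈ B then 1 else 0 := by
  rw [← sum_triangle_eq_card_mul_schurSum, Nat.card_eq_fintype_card, Fintype.card_subtype,
    ← sum_boole]
  simp only [ite_zero_mul_ite_zero, mul_one, and_assoc]

lemma one_sub_ite_mem_compl {α : Type*} [Fintype α] [DecidableEq α] (B : Finset α) :
    (1 - fun x => if x ∈ Bᶜ then (1 : R) else 0) = fun x => if x ∈ B then 1 else 0 := by
  ext x
  by_cases hx : x ∈ B <;> simp [hx]

theorem triangle_reciprocity_general
    (F : Type) [AddCommGroup F] [Fintype F] [DecidableEq F]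
    (A : Finset F) :
    (Nat.card {p : F × F × F //
          p.1 - p.2.1 ∈ A ∧ p.2.1 - p.2.2 ∈ A ∧ p.1 - p.2.2 ∈ A} : ℝ) /
        (Fintype.card F : ℝ) ^ 3 +
      (Nat.card {p : F × F × F //
          p.1 - p.2.1 ∈ Aᶜ ∧ p.2.1 - p.2.2 ∈ Aᶜ ∧ p.1 - p.2.2 ∈ Aᶜ} : ℝ) /
        (Fintype.card F : ℝ) ^ 3
      = 1 - 3 * ((Aᶜ.card : ℝ) / (Fintype.card F : ℝ))
          + 3 * ((Aᶜ.card : ℝ) / (Fintype.card F : ℝ)) ^ 2 := by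
  have hf : (Fintype.card F : ℝ) ≠ 0 := by positivity
  rw [← add_div, natCard_triangles_eq_card_mul_schurSum,
    natCard_triangles_eq_card_mul_schurSum, ← one_sub_ite_mem_compl, ← mul_add, add_comm,
    schurSum_add_schurSum_one_sub]
  simp only [sum_boole, filter_univ_mem]
  field_simp

/-- Triangle reciprocity: for a finite abelian group `F`, symmetric
`A ⊆ F`, `Ā = F \ A` and `ᾱ = |Ā|/f`:
`f⁻³|{(x,y,z) : pairwise differences in A}| + f⁻³|{(x,y,z) : pairwise differences in Ā}|
  = 1 - 3ᾱ + 3ᾱ²`. -/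
theorem triangle_reciprocity
    (F : Type) [AddCommGroup F] [Fintype F] [DecidableEq F]
    (A : Finset F) (hA : ∀ a ∈ A, -a ∈ A) :
    (Nat.card {p : F × F × F //
          p.1 - p.2.1 ∈ A ∧ p.2.1 - p.2.2 ∈ A ∧ p.1 - p.2.2 ∈ A} : ℝ) /
        (Fintype.card F : ℝ) ^ 3 +
      (Nat.card {p : F × F × F //
          p.1 - p.2.1 ∈ Aᶜ ∧ p.2.1 - p.2.2 ∈ Aᶜ ∧ p.1 - p.2.2 ∈ Aᶜ} : ℝ) /
        (Fintype.card F : ℝ) ^ 3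
      = 1 - 3 * ((Aᶜ.card : ℝ) / (Fintype.card F : ℝ))
          + 3 * ((Aᶜ.card : ℝ) / (Fintype.card F : ℝ)) ^ 2 :=
  triangle_reciprocity_general F A
end

section
/- (Four-cycle reciprocity) For any finite additive abelian group F with f = |F| and any symmetric subset A ⊆ F with Ā = F \ A and ᾱ = |Ā|/f: f^{−4}·|{(x₁,x₂,x₃,x₄) ∈ F⁴ : x₁−x₂, x₂−x₃, x₃−x₄, x₄−x₁ all in A}| − f^{−4}·|{(x₁,x₂,x₃,x₄) ∈ F⁴ : x₁−x₂, x₂−x₃, x₃−x₄, x₄−x₁ all in Ā}| = 1 − 4ᾱ + 6ᾱ² − 4ᾱ³. -/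
/-!
The four differences `yᵢ` along a closed walk `x` on the 4-cycle sum to zero, and `x` is determined
by its starting vertex and `y`, so counting walks is `f` times a weighted count of zero-sum 4-tuples.
Expand `1_A = 1 - 1_Ā` in each of the four factors. A term with at least one constant factor `1`
constrains the differences only along a path, so its weight factorises as `f⁻¹ ∏ᵢ ∑ₓ gᵢ(x)`.
Expanding `∏ᵢ ∑ₓ (1 - 1_Ā)(x)` the same way, the two expansions differ only in the all-`1_Ā` term,
which gives `N_A - N_Ā = (f - |Ā|)⁴ - |Ā|⁴`.
-/

open Finset

theorem Fintype.prod_add_eq_sum_prod_ite {ι R : Type*} [Fintype ι] [DecidableEq ι] [CommSemiring R]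
    (a b : ι → R) : ∏ i, (a i + b i) = ∑ t : Finset ι, ∏ i, if i ∈ t then a i else b i := by
  simp only [Fintype.prod_add, prod_ite, filter_mem_eq_inter, univ_inter, filter_notMem_eq_sdiff,
    compl_eq_univ_sdiff]

section ZeroSum

variable {F R : Type*} [AddCommGroup F] [Fintype F] [DecidableEq F] [CommRing R]

def zeroSumWeight (n : ℕ) (g : Fin n → F → R) : R :=
  ∑ y : Fin n → F with ∑ i, y i = 0, ∏ i, g i (y i)

theorem zeroSumWeight_neg (n : ℕ) (g : Fin n → F → R) :
    zeroSumWeight n (fun i x => -g i x) = (-1) ^ n * zeroSumWeight n g := by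
  simp only [zeroSumWeight, prod_neg, card_univ, Fintype.card_fin, mul_sum]

theorem zeroSumWeight_boole (n : ℕ) (S : Fin n → Finset F) :
    zeroSumWeight n (fun i x => if x ∈ S i then (1 : R) else 0) =
      #{y : Fin n → F | ∑ i, y i = 0 ∧ ∀ i, y i ∈ S i} := by
  rw [zeroSumWeight, ← filter_filter, ← sum_boole]
  simp only [Fintype.prod_boole]
  congr!

theorem card_mul_zeroSumWeight_of_eq_one {n : ℕ} (g : Fin (n + 1) → F → R) (j : Fin (n + 1))
    (hj : ∀ x, g j x = 1) :
    Fintype.card F * zeroSumWeight (n + 1) g = ∏ i, ∑ x, g i x := by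
  rw [Fin.prod_univ_succAbove _ j, Fintype.prod_sum]
  simp only [hj, sum_const, card_univ, nsmul_eq_mul, mul_one]
  congr 1
  refine sum_nbij' j.removeNth (fun z => j.insertNth (-∑ k, z k) z) (by simp) ?_ ?_ ?_ ?_
  · simp [Fin.sum_insertNth]
  · intro y hy
    have hyj : y j = -∑ k, j.removeNth y k :=
      eq_neg_of_add_eq_zero_left ((Fin.add_sum_removeNth j y).trans (mem_filter.1 hy).2)
    simp [← hyj]
  · intro z _
    simp
  · intro y _
    rw [Fin.prod_univ_succAbove _ j, hj, one_mul]
    rfl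

theorem card_mul_zeroSumWeight_add_one_sub {n : ℕ} (u : Fin (n + 1) → F → R) :
    Fintype.card F * (zeroSumWeight (n + 1) (fun i x => u i x + 1) - zeroSumWeight (n + 1) u) =
      ∏ i, ∑ x, (u i x + 1) - ∏ i, ∑ x, u i x := by
  -- both sides are multilinear in the `u i + 1`; expand and compare term by term
  set g : Finset (Fin (n + 1)) → Fin (n + 1) → F → R := fun t i x => if i ∈ t then u i x else 1
  have hW : zeroSumWeight (n + 1) (fun i x => u i x + 1) = ∑ t, zeroSumWeight (n + 1) (g t) := by
    simp only [zeroSumWeight, g, Fintype.prod_add_eq_sum_prod_ite]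
    exact sum_comm
  have hP : ∏ i, ∑ x, (u i x + 1) = ∑ t, ∏ i, ∑ x, g t i x := by
    simp only [g, sum_ite_irrel, sum_add_distrib, Fintype.prod_add_eq_sum_prod_ite]
  have hforest : ∀ t ≠ univ, Fintype.card F * zeroSumWeight (n + 1) (g t) = ∏ i, ∑ x, g t i x := by
    intro t ht
    obtain ⟨j, -, hj⟩ := exists_of_ssubset (ssubset_univ_iff.2 ht)
    exact card_mul_zeroSumWeight_of_eq_one _ j fun x => if_neg hj
  have hu : g univ = u := by simp [g]
  rw [hW, hP, Fintype.sum_eq_add_sum_compl univ, Fintype.sum_eq_add_sum_compl univ, hu, mul_sub,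
    mul_add, mul_sum, sum_congr rfl fun t ht => hforest t (by simpa using ht)]
  ring

theorem card_mul_zeroSumWeight_one_sub (n : ℕ) (b : F → R) :
    Fintype.card F * (zeroSumWeight (n + 1) (fun _ x => 1 - b x) -
        (-1) ^ (n + 1) * zeroSumWeight (n + 1) (fun _ => b)) =
      (Fintype.card F - ∑ x, b x) ^ (n + 1) - (-∑ x, b x) ^ (n + 1) := by
  have h := card_mul_zeroSumWeight_add_one_sub fun (_ : Fin (n + 1)) x => -b x
  simp only [zeroSumWeight_neg, neg_add_eq_sub, sum_sub_distrib, sum_neg_distrib, sum_const,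
    card_univ, nsmul_one, prod_const, Fintype.card_fin] at h
  exact h

theorem card_cyclicDifferences_mem (S : Finset F) :
    Nat.card {p : F × F × F × F //
        p.1 - p.2.1 ∈ S ∧ p.2.1 - p.2.2.1 ∈ S ∧ p.2.2.1 - p.2.2.2 ∈ S ∧ p.2.2.2 - p.1 ∈ S} =
      Fintype.card F * #{y : Fin 4 → F | ∑ i, y i = 0 ∧ ∀ i, y i ∈ S} := by
  have last_diff (x : F) (y : Fin 4 → F) (hy : ∑ i, y i = 0) : x - y 0 - y 1 - y 2 - x = y 3 := by
    rw [Fin.sum_univ_four] at hy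
    rw [eq_neg_of_add_eq_zero_right hy]
    abel
  rw [Nat.card_eq_fintype_card, Fintype.card_subtype, ← card_univ, ← card_product]
  refine card_nbij'
    (fun p => (p.1, ![p.1 - p.2.1, p.2.1 - p.2.2.1, p.2.2.1 - p.2.2.2, p.2.2.2 - p.1]))
    (fun q => (q.1, q.1 - q.2 0, q.1 - q.2 0 - q.2 1, q.1 - q.2 0 - q.2 1 - q.2 2)) ?_ ?_ ?_ ?_
  · rintro ⟨a, b, c, d⟩ h
    simpa [Fin.sum_univ_four, Fin.forall_fin_succ] using h
  · rintro ⟨x, y⟩ h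
    simp only [mem_coe, mem_product, mem_univ, mem_filter, true_and] at h
    simp [last_diff x y h.1, h.2]
  · rintro ⟨a, b, c, d⟩ -
    simp
  · rintro ⟨x, y⟩ h
    simp only [mem_coe, mem_product, mem_univ, mem_filter, true_and] at h
    simp only [Prod.mk.injEq, true_and]
    ext i
    fin_cases i <;> simp [last_diff x y h.1]

end ZeroSum

theorem four_cycle_reciprocity_general
    (F : Type) [AddCommGroup F] [Fintype F] [DecidableEq F]
    (A : Finset F) :
    (Nat.card {p : F × F × F × F //
          p.1 - p.2.1 ∈ A ∧ p.2.1 - p.2.2.1 ∈ A ∧ p.2.2.1 - p.2.2.2 ∈ A ∧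
            p.2.2.2 - p.1 ∈ A} : ℝ) / (Fintype.card F : ℝ) ^ 4 -
      (Nat.card {p : F × F × F × F //
          p.1 - p.2.1 ∈ Aᶜ ∧ p.2.1 - p.2.2.1 ∈ Aᶜ ∧ p.2.2.1 - p.2.2.2 ∈ Aᶜ ∧
            p.2.2.2 - p.1 ∈ Aᶜ} : ℝ) / (Fintype.card F : ℝ) ^ 4
      = 1 - 4 * ((Aᶜ.card : ℝ) / (Fintype.card F : ℝ))
          + 6 * ((Aᶜ.card : ℝ) / (Fintype.card F : ℝ)) ^ 2
          - 4 * ((Aᶜ.card : ℝ) / (Fintype.card F : ℝ)) ^ 3 := by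
  have hf : (Fintype.card F : ℝ) ≠ 0 := Nat.cast_ne_zero.2 Fintype.card_ne_zero
  have hind : (fun _ x => if x ∈ A then 1 else 0 : Fin 4 → F → ℝ) =
      fun _ x => 1 - if x ∈ Aᶜ then 1 else 0 := by
    funext _ x
    by_cases hx : x ∈ A <;> simp [hx]
  have key : (Fintype.card F : ℝ) * (zeroSumWeight 4 (fun _ x => 1 - if x ∈ Aᶜ then 1 else 0) -
      zeroSumWeight 4 fun _ x => if x ∈ Aᶜ then 1 else 0) =
        (Fintype.card F - #Aᶜ) ^ 4 - (#Aᶜ : ℝ) ^ 4 := by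
    have h := card_mul_zeroSumWeight_one_sub 3 fun x => if x ∈ Aᶜ then (1 : ℝ) else 0
    rw [sum_boole, filter_mem_eq_inter, univ_inter] at h
    linear_combination h
  rw [card_cyclicDifferences_mem, card_cyclicDifferences_mem]
  push_cast
  rw [← zeroSumWeight_boole 4 fun _ => A, ← zeroSumWeight_boole 4 fun _ => Aᶜ, hind,
    div_sub_div_same, ← mul_sub, key]
  field_simp
  ring

/-- Four-cycle reciprocity: for a finite abelian group `F`, symmetric
`A ⊆ F`, `Ā = F \ A` and `ᾱ = |Ā|/f`:
`f⁻⁴|{(x₁,x₂,x₃,x₄) : cyclic differences in A}| - f⁻⁴|{… in Ā}| = 1 - 4ᾱ + 6ᾱ² - 4ᾱ³`. -/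
theorem four_cycle_reciprocity
    (F : Type) [AddCommGroup F] [Fintype F] [DecidableEq F]
    (A : Finset F) (hA : ∀ a ∈ A, -a ∈ A) :
    (Nat.card {p : F × F × F × F //
          p.1 - p.2.1 ∈ A ∧ p.2.1 - p.2.2.1 ∈ A ∧ p.2.2.1 - p.2.2.2 ∈ A ∧
            p.2.2.2 - p.1 ∈ A} : ℝ) / (Fintype.card F : ℝ) ^ 4 -
      (Nat.card {p : F × F × F × F //
          p.1 - p.2.1 ∈ Aᶜ ∧ p.2.1 - p.2.2.1 ∈ Aᶜ ∧ p.2.2.1 - p.2.2.2 ∈ Aᶜ ∧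
            p.2.2.2 - p.1 ∈ Aᶜ} : ℝ) / (Fintype.card F : ℝ) ^ 4
      = 1 - 4 * ((Aᶜ.card : ℝ) / (Fintype.card F : ℝ))
          + 6 * ((Aᶜ.card : ℝ) / (Fintype.card F : ℝ)) ^ 2
          - 4 * ((Aᶜ.card : ℝ) / (Fintype.card F : ℝ)) ^ 3 :=
  four_cycle_reciprocity_general F A
end

section
/- (Example 2, vanishing) Let f ≥ 1 and let k be a nonnegative integer with 2k+1 ≤ f and 3(2k+1) > 2f. Let Ā_k = {x ∈ ℤ/fℤ : x = j mod f for some integer j with |j| ≤ k} and A_k = (ℤ/fℤ) \ Ā_k. Then there is no triple (x,y,z) ∈ (ℤ/fℤ)³ with x−y ∈ A_k, y−z ∈ A_k and x−z ∈ A_k. -/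
/-- `Ā_k ⊆ ℤ/fℤ`: the elements at circular distance at most `k` from `0`. -/
def closeSet (f k : ℕ) : Set (ZMod f) :=
  {x : ZMod f | ∃ j : ℤ, j.natAbs ≤ k ∧ (j : ZMod f) = x}

lemma val_bounds_of_not_close (f k : ℕ) (hf : 1 ≤ f) (x : ZMod f)
    (hx : x ∉ closeSet f k) : k < x.val ∧ x.val + k < f := by
  haveI : NeZero f := ⟨by omega⟩
  constructor
  · by_contra h
    push_neg at h
    refine hx ⟨(x.val : ℤ), by rw [Int.natAbs_natCast]; exact h, by simp⟩
  · by_contra h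
    push_neg at h
    refine hx ⟨(x.val : ℤ) - f, ?_, by push_cast; simp⟩
    have hv : x.val < f := ZMod.val_lt x
    omega

/-- Example 2, vanishing: if `2k+1 ≤ f` and `3(2k+1) > 2f`, then no triple
in `ℤ/fℤ` has all three pairwise differences outside `Ā_k`. -/
theorem no_distant_triple_of_large_k
    (f k : ℕ) (hf : 1 ≤ f) (h1 : 2 * k + 1 ≤ f) (h2 : 2 * f < 3 * (2 * k + 1)) :
    ¬ ∃ x y z : ZMod f,
        x - y ∉ closeSet f k ∧ y - z ∉ closeSet f k ∧ x - z ∉ closeSet f k := by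
  haveI : NeZero f := ⟨by omega⟩
  rintro ⟨x, y, z, ha, hb, hc⟩
  obtain ⟨ha1, ha2⟩ := val_bounds_of_not_close f k hf _ ha
  obtain ⟨hb1, hb2⟩ := val_bounds_of_not_close f k hf _ hb
  obtain ⟨hc1, hc2⟩ := val_bounds_of_not_close f k hf _ hc
  have hsum : x - z = (x - y) + (y - z) := by ring
  have hval : (x - z).val = ((x - y).val + (y - z).val) % f := by
    rw [hsum, ZMod.val_add]
  have hlt : (x - y).val + (y - z).val < 2 * f :=
    by have := ZMod.val_lt (x - y); have := ZMod.val_lt (y - z); omega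
  rcases Nat.lt_or_ge ((x - y).val + (y - z).val) f with h | h
  · rw [Nat.mod_eq_of_lt h] at hval
    omega
  · rw [Nat.mod_eq_sub_mod h, Nat.mod_eq_of_lt (by omega)] at hval
    omega
end

section
/- (Example 2, close triples, large ᾱ) Let f ≥ 1 and let k be a nonnegative integer with 2k+1 ≤ f and 3(2k+1) > 2f. Let Ā_k = {x ∈ ℤ/fℤ : x = j mod f for some integer j with |j| ≤ k}. Then |{(x,y,z) ∈ (ℤ/fℤ)³ : x−y ∈ Ā_k, y−z ∈ Ā_k, x−z ∈ Ā_k}| = f³ − 3(2k+1)f² + 3(2k+1)²f. -/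
open Finset

-- Gauss sum over integer interval
lemma sum_Icc_int (a b : ℤ) (hb : a - 1 ≤ b) :
    2 * ∑ s ∈ Finset.Icc a b, s = (b + 1 - a) * (a + b) := by
  obtain ⟨n, rfl⟩ : ∃ n : ℕ, b = a - 1 + n := ⟨(b - (a - 1)).toNat, by omega⟩
  induction n with
  | zero => simp
  | succ n ih =>
    have hins : Finset.Icc a (a - 1 + ((n : ℤ) + 1)) =
        insert (a - 1 + ((n : ℤ) + 1)) (Finset.Icc a (a - 1 + (n : ℤ))) := by
      ext x; simp [Finset.mem_Icc]; omega
    push_cast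
    push_cast at ih
    replace ih := ih (by omega)
    rw [hins, Finset.sum_insert (by simp [Finset.mem_Icc])]
    ring_nf
    ring_nf at ih
    linarith

lemma mem_closeSet_iff (f k : ℕ) [NeZero f] (hk : 2 * k + 1 ≤ f) (x : ZMod f) :
    x ∈ closeSet f k ↔ x.valMinAbs.natAbs ≤ k := by
  constructor
  · rintro ⟨j, hj, hx⟩
    have h1 : x.valMinAbs.natAbs ≤ j.natAbs := by
      refine ZMod.natAbs_min_of_le_div_two f _ _ ?_ (ZMod.natAbs_valMinAbs_le x)
      rw [ZMod.coe_valMinAbs, hx]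
    omega
  · intro h
    exact ⟨x.valMinAbs, h, ZMod.coe_valMinAbs x⟩

lemma valMinAbs_intCast (f k : ℕ) [NeZero f] (hk : 2 * k + 1 ≤ f) (i : ℤ)
    (hi : i.natAbs ≤ k) : ((i : ZMod f)).valMinAbs = i := by
  set v : ℤ := ((i : ZMod f)).valMinAbs with hv
  have h1 : ((v : ℤ) : ZMod f) = (i : ZMod f) := ZMod.coe_valMinAbs _
  have h2 : v.natAbs ≤ f / 2 := ZMod.natAbs_valMinAbs_le _
  rw [ZMod.intCast_eq_intCast_iff] at h1
  have h3 : (f : ℤ) ∣ i - v := Int.ModEq.dvd h1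
  have h4 : i - v = 0 := Int.eq_zero_of_abs_lt_dvd h3 (by rw [abs_lt]; omega)
  omega

lemma good_iff (f k : ℕ) [NeZero f] (hk : 2 * k + 1 ≤ f) (i j : ℤ)
    (hi : i.natAbs ≤ k) (hj : j.natAbs ≤ k) :
    (((i + j : ℤ) : ZMod f) ∈ closeSet f k) ↔
      ((i + j).natAbs ≤ k ∨ ((f : ℤ) - k ≤ i + j ∧ i + j ≤ 2 * k) ∨
        (-(2 * (k:ℤ)) ≤ i + j ∧ i + j ≤ (k : ℤ) - f)) := by
  constructor
  · rintro ⟨l, hl, hcast⟩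
    rw [ZMod.intCast_eq_intCast_iff] at hcast
    obtain ⟨c, hc⟩ := Int.ModEq.dvd hcast
    have hb : ((f : ℤ) * c).natAbs ≤ 3 * k := by rw [← hc]; omega
    rw [Int.natAbs_mul, Int.natAbs_natCast] at hb
    have hc1 : c.natAbs ≤ 1 := by
      by_contra hcon
      push_neg at hcon
      have : 2 * f ≤ f * c.natAbs := by
        calc 2 * f = f * 2 := by ring
        _ ≤ f * c.natAbs := Nat.mul_le_mul_left f hcon
      omega
    have : c = -1 ∨ c = 0 ∨ c = 1 := by omega
    rcases this with rfl | rfl | rfl <;> omega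
  · rintro (h | h | h)
    · exact ⟨i + j, h, rfl⟩
    · refine ⟨i + j - f, by omega, ?_⟩
      push_cast
      simp
    · refine ⟨i + j + f, by omega, ?_⟩
      push_cast
      simp

lemma sum_c_sub (a b c : ℤ) (h : a ≤ b + 1) :
    2 * ∑ s ∈ Finset.Icc a b, (c - s) = (b + 1 - a) * (2 * c - a - b) := by
  rw [Finset.sum_sub_distrib, Finset.sum_const, Int.card_Icc, nsmul_eq_mul,
    Int.toNat_of_nonneg (by omega : (0:ℤ) ≤ b + 1 - a)]
  linear_combination (-1 : ℤ) * sum_Icc_int a b (by omega)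

lemma sum_c_add (a b c : ℤ) (h : a ≤ b + 1) :
    2 * ∑ s ∈ Finset.Icc a b, (c + s) = (b + 1 - a) * (2 * c + a + b) := by
  rw [Finset.sum_add_distrib, Finset.sum_const, Int.card_Icc, nsmul_eq_mul,
    Int.toNat_of_nonneg (by omega : (0:ℤ) ≤ b + 1 - a)]
  linear_combination sum_Icc_int a b (by omega)

/-- Example 2, close triples, large `ᾱ`: if `2k+1 ≤ f` and `3(2k+1) > 2f`
then the number of triples in `ℤ/fℤ` with all pairwise differences in `Ā_k` is
`f³ - 3(2k+1)f² + 3(2k+1)²f`. -/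
theorem card_close_triples_large
    (f k : ℕ) (hf : 1 ≤ f) (h1 : 2 * k + 1 ≤ f) (h2 : 2 * f < 3 * (2 * k + 1)) :
    (Nat.card {p : ZMod f × ZMod f × ZMod f //
        p.1 - p.2.1 ∈ closeSet f k ∧ p.2.1 - p.2.2 ∈ closeSet f k ∧
          p.1 - p.2.2 ∈ closeSet f k} : ℤ)
      = (f : ℤ) ^ 3 - 3 * (2 * (k : ℤ) + 1) * (f : ℤ) ^ 2
          + 3 * (2 * (k : ℤ) + 1) ^ 2 * (f : ℤ) := by
  classical
  haveI : NeZero f := ⟨by omega⟩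
  set S : Finset (ℤ × ℤ) :=
    ((Finset.Icc (-(k : ℤ)) k) ×ˢ (Finset.Icc (-(k : ℤ)) k)).filter
      (fun ij => ((ij.1 + ij.2 : ℤ) : ZMod f) ∈ closeSet f k) with hS
  have e : {p : ZMod f × ZMod f × ZMod f //
        p.1 - p.2.1 ∈ closeSet f k ∧ p.2.1 - p.2.2 ∈ closeSet f k ∧
          p.1 - p.2.2 ∈ closeSet f k} ≃ {ij : ℤ × ℤ // ij ∈ S} × ZMod f :=
    { toFun := fun p =>
        (⟨((p.1.1 - p.1.2.1).valMinAbs, (p.1.2.1 - p.1.2.2).valMinAbs), by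
          obtain ⟨hm1, hm2, hm3⟩ := p.2
          have hv1 := (mem_closeSet_iff f k h1 _).1 hm1
          have hv2 := (mem_closeSet_iff f k h1 _).1 hm2
          rw [hS, Finset.mem_filter, Finset.mem_product, Finset.mem_Icc, Finset.mem_Icc]
          refine ⟨⟨by omega, by omega⟩, ?_⟩
          push_cast
          rw [show p.1.1 - p.1.2.1 + (p.1.2.1 - p.1.2.2) = p.1.1 - p.1.2.2 by ring]
          exact hm3⟩,
        p.1.2.2),
      invFun := fun q =>
        ⟨((q.1.1.1 : ZMod f) + (q.1.1.2 : ZMod f) + q.2, (q.1.1.2 : ZMod f) + q.2, q.2), by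
          have hq : (q.1 : ℤ × ℤ) ∈ ((Finset.Icc (-(k : ℤ)) k) ×ˢ (Finset.Icc (-(k : ℤ)) k)).filter
              (fun ij => ((ij.1 + ij.2 : ℤ) : ZMod f) ∈ closeSet f k) := q.1.2
          rw [Finset.mem_filter, Finset.mem_product, Finset.mem_Icc, Finset.mem_Icc] at hq
          dsimp only
          refine ⟨?_, ?_, ?_⟩
          · rw [show (q.1.1.1 : ZMod f) + (q.1.1.2 : ZMod f) + q.2 - ((q.1.1.2 : ZMod f) + q.2)
              = (q.1.1.1 : ZMod f) by ring]
            exact ⟨q.1.1.1, by omega, rfl⟩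
          · rw [show (q.1.1.2 : ZMod f) + q.2 - q.2 = (q.1.1.2 : ZMod f) by ring]
            exact ⟨q.1.1.2, by omega, rfl⟩
          · rw [show (q.1.1.1 : ZMod f) + (q.1.1.2 : ZMod f) + q.2 - q.2
              = ((q.1.1.1 + q.1.1.2 : ℤ) : ZMod f) by push_cast; ring]
            exact hq.2⟩,
      left_inv := fun p => by
        obtain ⟨⟨x, y, z⟩, h⟩ := p
        apply Subtype.ext
        simp only [ZMod.coe_valMinAbs]
        refine Prod.ext ?_ (Prod.ext ?_ rfl) <;> dsimp <;> ring,
      right_inv := fun q => by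
        obtain ⟨⟨⟨i, j⟩, hij⟩, z⟩ := q
        have hij' : (i, j) ∈ ((Finset.Icc (-(k : ℤ)) k) ×ˢ (Finset.Icc (-(k : ℤ)) k)).filter
            (fun ij => ((ij.1 + ij.2 : ℤ) : ZMod f) ∈ closeSet f k) := hij
        rw [Finset.mem_filter, Finset.mem_product, Finset.mem_Icc, Finset.mem_Icc] at hij'
        refine Prod.ext (Subtype.ext (Prod.ext ?_ ?_)) rfl <;> dsimp
        · rw [show (i : ZMod f) + (j : ZMod f) + z - ((j : ZMod f) + z) = (i : ZMod f) by ring]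
          exact valMinAbs_intCast f k h1 i (by omega)
        · rw [show (j : ZMod f) + z - z = (j : ZMod f) by ring]
          exact valMinAbs_intCast f k h1 j (by omega) }
  rw [Nat.card_congr e, Nat.card_prod, Nat.card_eq_finsetCard, Nat.card_zmod]
  have hcount : 2 * (S.card : ℤ) =
      6 * k ^ 2 + 6 * k + 2 + 2 * (3 * (k : ℤ) + 1 - f) * (3 * (k : ℤ) + 2 - f) := by
    set I : Finset ℤ := Finset.Icc (-(k : ℤ)) k with hI
    set J : Finset ℤ := Finset.Icc (-(2 * (k : ℤ))) (2 * k) with hJ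
    set cond3 : ℤ → Prop := fun s => s.natAbs ≤ k ∨ ((f : ℤ) - k ≤ s ∧ s ≤ 2 * k) ∨
        (-(2 * (k : ℤ)) ≤ s ∧ s ≤ (k : ℤ) - f) with hcond3
    set h : ℤ → ℤ := fun s => if cond3 s then (1 : ℤ) else 0 with hh
    have stepA : (S.card : ℤ) = ∑ i ∈ I, ∑ j ∈ I, h (i + j) := by
      rw [hS, Finset.card_filter]
      push_cast
      rw [Finset.sum_product]
      refine Finset.sum_congr rfl fun i hi => Finset.sum_congr rfl fun j hj => ?_
      rw [hI, Finset.mem_Icc] at hi hj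
      rw [hh]
      dsimp only
      have hg := good_iff f k h1 i j (by omega) (by omega)
      rw [Int.cast_add] at hg
      exact if_congr (by rw [hcond3]; exact hg) rfl rfl
    have stepC : ∀ i ∈ I, ∑ j ∈ I, h (i + j)
        = ∑ s ∈ J, if i + -(k : ℤ) ≤ s ∧ s ≤ i + k then h s else 0 := by
      intro i hi
      rw [hI, Finset.mem_Icc] at hi
      have h1' : ∑ j ∈ I, h (i + j) = ∑ s ∈ Finset.Icc (i + -(k : ℤ)) (i + k), h s := by
        rw [← Finset.map_add_left_Icc, Finset.sum_map]
        rfl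
      have h2' : J.filter (fun s => i + -(k : ℤ) ≤ s ∧ s ≤ i + k)
          = Finset.Icc (i + -(k : ℤ)) (i + k) := by
        ext s
        simp only [Finset.mem_filter, hJ, Finset.mem_Icc]
        omega
      rw [h1', ← h2', Finset.sum_filter]
    have stepF : ∀ s ∈ J, ∑ i ∈ I, (if i + -(k : ℤ) ≤ s ∧ s ≤ i + k then h s else 0)
        = (min (k : ℤ) (s + k) + 1 - max (-(k : ℤ)) (s - k)) * h s := by
      intro s hs
      rw [hJ, Finset.mem_Icc] at hs
      rw [← Finset.sum_filter]
      have h3' : I.filter (fun i => i + -(k : ℤ) ≤ s ∧ s ≤ i + k)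
          = Finset.Icc (max (-(k : ℤ)) (s - k)) (min (k : ℤ) (s + k)) := by
        ext i
        simp only [Finset.mem_filter, hI, Finset.mem_Icc]
        omega
      rw [h3', Finset.sum_const, Int.card_Icc, nsmul_eq_mul,
        Int.toNat_of_nonneg (by omega : (0:ℤ) ≤ min (k : ℤ) (s + k) + 1 - max (-(k : ℤ)) (s - k))]
    have stepE : (S.card : ℤ)
        = ∑ s ∈ J, (min (k : ℤ) (s + k) + 1 - max (-(k : ℤ)) (s - k)) * h s := by
      rw [stepA, Finset.sum_congr rfl stepC, Finset.sum_comm]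
      exact Finset.sum_congr rfl stepF
    have stepG : (S.card : ℤ) = ∑ s ∈ J.filter cond3,
        (min (k : ℤ) (s + k) + 1 - max (-(k : ℤ)) (s - k)) := by
      rw [stepE, Finset.sum_filter]
      refine Finset.sum_congr rfl fun s hs => ?_
      rw [hh]
      dsimp only
      split_ifs with hc
      · rw [mul_one]
      · rw [mul_zero]
    have hsplit : J.filter cond3 =
        ((Finset.Icc (-(k : ℤ)) (-1) ∪ Finset.Icc 0 (k : ℤ)) ∪ Finset.Icc ((f : ℤ) - k) (2 * k))
          ∪ Finset.Icc (-(2 * (k : ℤ))) ((k : ℤ) - f) := by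
      ext s
      simp only [Finset.mem_filter, Finset.mem_union, hJ, hcond3, Finset.mem_Icc]
      omega
    have d1 : Disjoint (Finset.Icc (-(k : ℤ)) (-1)) (Finset.Icc 0 (k : ℤ)) := by
      rw [Finset.disjoint_left]; intro a ha hb
      rw [Finset.mem_Icc] at ha hb; omega
    have d2 : Disjoint (Finset.Icc (-(k : ℤ)) (-1) ∪ Finset.Icc 0 (k : ℤ))
        (Finset.Icc ((f : ℤ) - k) (2 * k)) := by
      rw [Finset.disjoint_left]; intro a ha hb
      rw [Finset.mem_union, Finset.mem_Icc, Finset.mem_Icc] at ha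
      rw [Finset.mem_Icc] at hb; omega
    have d3 : Disjoint ((Finset.Icc (-(k : ℤ)) (-1) ∪ Finset.Icc 0 (k : ℤ))
          ∪ Finset.Icc ((f : ℤ) - k) (2 * k)) (Finset.Icc (-(2 * (k : ℤ))) ((k : ℤ) - f)) := by
      rw [Finset.disjoint_left]; intro a ha hb
      rw [Finset.mem_union, Finset.mem_union, Finset.mem_Icc, Finset.mem_Icc,
        Finset.mem_Icc] at ha
      rw [Finset.mem_Icc] at hb; omega
    have w1 : ∀ s ∈ Finset.Icc (-(k : ℤ)) (-1),
        min (k : ℤ) (s + k) + 1 - max (-(k : ℤ)) (s - k) = (2 * (k : ℤ) + 1) + s := by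
      intro s hs; rw [Finset.mem_Icc] at hs; omega
    have w2 : ∀ s ∈ Finset.Icc (0 : ℤ) (k : ℤ),
        min (k : ℤ) (s + k) + 1 - max (-(k : ℤ)) (s - k) = (2 * (k : ℤ) + 1) - s := by
      intro s hs; rw [Finset.mem_Icc] at hs; omega
    have w3 : ∀ s ∈ Finset.Icc ((f : ℤ) - k) (2 * (k : ℤ)),
        min (k : ℤ) (s + k) + 1 - max (-(k : ℤ)) (s - k) = (2 * (k : ℤ) + 1) - s := by
      intro s hs; rw [Finset.mem_Icc] at hs; omega
    have w4 : ∀ s ∈ Finset.Icc (-(2 * (k : ℤ))) ((k : ℤ) - f),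
        min (k : ℤ) (s + k) + 1 - max (-(k : ℤ)) (s - k) = (2 * (k : ℤ) + 1) + s := by
      intro s hs; rw [Finset.mem_Icc] at hs; omega
    have g1 := sum_c_add (-(k : ℤ)) (-1) (2 * (k : ℤ) + 1) (by omega)
    have g2 := sum_c_sub 0 (k : ℤ) (2 * (k : ℤ) + 1) (by omega)
    have g3 := sum_c_sub ((f : ℤ) - k) (2 * (k : ℤ)) (2 * (k : ℤ) + 1) (by omega)
    have g4 := sum_c_add (-(2 * (k : ℤ))) ((k : ℤ) - f) (2 * (k : ℤ) + 1) (by omega)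
    rw [stepG, hsplit, Finset.sum_union d3, Finset.sum_union d2, Finset.sum_union d1,
      Finset.sum_congr rfl w1, Finset.sum_congr rfl w2, Finset.sum_congr rfl w3,
      Finset.sum_congr rfl w4]
    linear_combination g1 + g2 + g3 + g4
  push_cast
  nlinarith [hcount, sq_nonneg ((f : ℤ))]
end
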